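/- arXiv:2109.07875 — 6 statements merged into one kernel-verified Lean document; each statement's English description precedes it below -/
import Mathlib

section
/- For every integer n ≥ 1, the number of Hamiltonian cycles in the prism graph P_2 × C_n (the Cartesian product of a path on 2 vertices with a cycle on n vertices, n ≥ 3) equals n + 1 + (-1)^n. -/
/-!
Every vertex of a Hamiltonian cycle of the prism meets exactly two of its three edges: its rung
and the two row edges on either side. Comparing the two ends of a rung shows that the top and
bottom row edges either agree in every column or disagree in every column.

If they agree, connectivity leaves exactly one column `a` without row edges: with none the cycle
has no rungs and stays in one row, with two the prism is cut into two arcs. The degree condition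
then puts rungs exactly at `a` and `a + 1`, which gives `n` cycles.

If they disagree, every rung is used and the row edges alternate along each row, which closes up
only for even `n` and gives the two zigzag cycles.
-/

open SimpleGraph

/-- The grid cylinder graph `P_m × C_n` on vertex set `Fin m × Fin n`
(rows indexed by `Fin m`, columns cyclically by `Fin n`). -/
def cylGraph (m n : ℕ) : SimpleGraph (Fin m × Fin n) :=
  (SimpleGraph.pathGraph m).boxProd (SimpleGraph.cycleGraph n)

/-- `H` is a Hamiltonian cycle of `G`, encoded as a connected spanning
subgraph in which every vertex has exactly two neighbours. -/
def IsHamCycleSub {V : Type*} (G H : SimpleGraph V) : Prop :=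
  H ≤ G ∧ H.Connected ∧ ∀ v, (H.neighborSet v).ncard = 2

/-- The number of edges of `H` crossing the cut between column `n-1` and column `0`. -/
noncomputable def crossNum (m n : ℕ) [NeZero n] (H : SimpleGraph (Fin m × Fin n)) : ℕ :=
  Set.ncard {i : Fin m | H.Adj (i, -1) (i, 0)}

/-- A cycle drawn on the cylinder is contractible iff it crosses a fixed
meridian cut an even number of times. -/
def IsContractible (m n : ℕ) [NeZero n] (H : SimpleGraph (Fin m × Fin n)) : Prop :=
  Even (crossNum m n H)

/-- Window `(i, j)` (a square face of `P_{m+1} × C_n`, with corners in rows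
`i, i+1` and columns `j, j+1`) lies in the interior of the contractible cycle `H`:
the upward ray from the window crosses an odd number of edges of `H`. -/
def interiorWin (m n : ℕ) [NeZero n] (H : SimpleGraph (Fin (m + 1) × Fin n))
    (w : Fin m × Fin n) : Prop :=
  Odd (Set.ncard {r : Fin (m + 1) | (r : ℕ) ≤ (w.1 : ℕ) ∧ H.Adj (r, w.2) (r, w.2 + 1)})

/-- The split tree of the contractible Hamiltonian cycle `H` has the window
`w_{1,1}` as its up root: the window `(0,0)` is exterior and is connected,
within the graph induced on exterior windows, to an exterior window in the last row. -/
def UpRootAtOrigin (m n : ℕ) [NeZero m] [NeZero n]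
    (H : SimpleGraph (Fin (m + 1) × Fin n)) : Prop :=
  ∃ (h0 : ((0, 0) : Fin m × Fin n) ∈ {w : Fin m × Fin n | ¬ interiorWin m n H w})
    (w : Fin m × Fin n) (hw : w ∈ {w : Fin m × Fin n | ¬ interiorWin m n H w}),
    (w.1 : ℕ) = m - 1 ∧
    ((cylGraph m n).induce {w : Fin m × Fin n | ¬ interiorWin m n H w}).Reachable
      ⟨(0, 0), h0⟩ ⟨w, hw⟩

open Fin.CommRing

theorem Fin.cyclic_induction {n : ℕ} [NeZero n] {p : Fin n → Prop} (a : Fin n) (ha : p a)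
    (hs : ∀ j, j + 1 ≠ a → p j → p (j + 1)) (j : Fin n) : p j := by
  suffices h : ∀ k < n, p (a + k) by simpa using h (j - a).val (j - a).isLt
  intro k
  induction k with
  | zero => intro; simpa using ha
  | succ k ih =>
    intro hk
    have hne : a + k + 1 ≠ a := by
      intro h
      have : ((k + 1 : ℕ) : Fin n) = 0 := by
        rw [← add_right_inj a, add_zero, Nat.cast_succ, ← add_assoc, h]
      rw [Fin.natCast_eq_zero] at this
      exact absurd (Nat.le_of_dvd k.succ_pos this) (by omega)
    simpa [add_assoc] using hs _ hne (ih (by omega))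

theorem Fin.val_add_one_of_add_one_ne_zero {n : ℕ} {c : Fin (n + 1)} (h : c + 1 ≠ 0) :
    (c + 1).val = c.val + 1 := by
  rw [Fin.val_add_one, if_neg]
  rintro rfl
  exact h (Fin.last_add_one n)

theorem Fin.exists_arc {n : ℕ} {a a' : Fin (n + 1)} (h : a ≠ a') :
    ∃ f : Fin (n + 1) → Prop, f (a + 1) ∧ ¬ f (a' + 1) ∧
      ∀ j, j ≠ a → j ≠ a' → (f (j + 1) ↔ f j) := by
  -- `f` is the arc `a + 1, …, a'` of the cycle
  refine ⟨fun j => (j - (a + 1)).val < (a' - a).val, ?_, ?_, fun j hja hja' => ?_⟩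
  · simpa [Fin.pos_iff_ne_zero, sub_eq_zero] using h.symm
  · simp [add_sub_add_right_eq_sub]
  · have hc : j + 1 - (a + 1) = j - (a + 1) + 1 := add_sub_right_comm j 1 (a + 1)
    have h0 : j - (a + 1) + 1 ≠ 0 := by
      rw [← hc, sub_ne_zero]; simpa using hja
    have h1 : j - (a + 1) + 1 ≠ a' - a := by
      rw [← hc, add_sub_add_right_eq_sub]; simpa [sub_left_inj] using hja'
    have h2 := Fin.val_add_one_of_add_one_ne_zero h0
    have h3 : (j - (a + 1) + 1).val ≠ (a' - a).val := fun h => h1 (Fin.ext h)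
    simp only [hc, h2] at h3 ⊢
    omega

theorem SimpleGraph.not_connected_of_mem_iff_of_adj {V : Type*} {H : SimpleGraph V} {S : Set V}
    (hS : ∀ x y, H.Adj x y → (x ∈ S ↔ y ∈ S)) {u v : V} (hu : u ∈ S) (hv : v ∉ S) :
    ¬ H.Connected := fun hH => by
  obtain ⟨d, -, hd, hd'⟩ := (hH.preconnected u v).some.exists_boundary_dart S hu hv
  exact hd' ((hS _ _ d.adj).mp hd)

def ExactlyTwo (p q r : Prop) : Prop :=
  (p ∧ q ∧ ¬ r) ∨ (p ∧ ¬ q ∧ r) ∨ (¬ p ∧ q ∧ r)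

theorem Set.ncard_eq_two_iff_of_subset_triple {α : Type*} {s : Set α} {x y z : α}
    (hxy : x ≠ y) (hxz : x ≠ z) (hyz : y ≠ z) (hs : s ⊆ {x, y, z}) :
    s.ncard = 2 ↔ ExactlyTwo (x ∈ s) (y ∈ s) (z ∈ s) := by
  classical
  have hfilter : s = ↑(({x, y, z} : Finset α).filter (· ∈ s)) := by
    ext u
    simp only [Finset.coe_filter, Finset.mem_insert, Finset.mem_singleton, Set.mem_ofPred_eq]
    exact ⟨fun hu => ⟨by simpa using hs hu, hu⟩, And.right⟩
  rw [hfilter, Set.ncard_coe_finset, ExactlyTwo]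
  by_cases hx : x ∈ s <;> by_cases hy : y ∈ s <;> by_cases hz : z ∈ s <;>
    simp [Finset.filter_insert, Finset.filter_singleton, hx, hy, hz, hxy, hxz, hyz, hxy.symm,
      hxz.symm, hyz.symm]

section Prism

variable {n : ℕ}

theorem Fin.add_one_add_one_ne_self (j : Fin (n + 3)) : j + 1 + 1 ≠ j := by
  rw [add_assoc, one_add_one_eq_two, ne_eq, add_eq_left, Fin.ext_iff, Fin.val_two]
  simp

theorem cylGraph_two_adj {i i' : Fin 2} {j j' : Fin (n + 3)} :
    (cylGraph 2 (n + 3)).Adj (i, j) (i', j') ↔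
      (i ≠ i' ∧ j = j') ∨ (i = i' ∧ (j' = j + 1 ∨ j = j' + 1)) := by
  rw [cylGraph, boxProd_adj, pathGraph_two_eq_top, top_adj, cycleGraph_adj,
    sub_eq_iff_eq_add, sub_eq_iff_eq_add, add_comm 1, add_comm 1]
  tauto

theorem forall_adj_of_le_cylGraph {H : SimpleGraph (Fin 2 × Fin (n + 3))}
    (hH : H ≤ cylGraph 2 (n + 3)) {P : Fin 2 × Fin (n + 3) → Fin 2 × Fin (n + 3) → Prop}
    (hP : ∀ x y, P x y → P y x) (hrow : ∀ i j, H.Adj (i, j) (i, j + 1) → P (i, j) (i, j + 1))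
    (hrung : ∀ j, H.Adj (0, j) (1, j) → P (0, j) (1, j)) {x y : Fin 2 × Fin (n + 3)}
    (hxy : H.Adj x y) : P x y := by
  obtain ⟨x₁, x₂⟩ := x
  obtain ⟨y₁, y₂⟩ := y
  rcases cylGraph_two_adj.mp (hH hxy) with ⟨h₁, rfl⟩ | ⟨rfl, rfl | rfl⟩
  · fin_cases x₁ <;> fin_cases y₁
    all_goals first | exact absurd rfl h₁ | exact hrung _ hxy | exact hP _ _ (hrung _ hxy.symm)
  · exact hrow _ _ hxy
  · exact hP _ _ (hrow _ _ hxy.symm)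

def prismSub (row : Fin 2 → Fin (n + 3) → Prop) (rung : Fin (n + 3) → Prop) :
    SimpleGraph (Fin 2 × Fin (n + 3)) :=
  fromRel fun x y => (x.1 = y.1 ∧ y.2 = x.2 + 1 ∧ row x.1 x.2) ∨ (x.1 ≠ y.1 ∧ x.2 = y.2 ∧ rung x.2)

variable {row : Fin 2 → Fin (n + 3) → Prop} {rung : Fin (n + 3) → Prop}

theorem prismSub_le_cylGraph : prismSub row rung ≤ cylGraph 2 (n + 3) := by
  rintro ⟨i, j⟩ ⟨i', j'⟩ hxy
  rw [prismSub, fromRel_adj] at hxy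
  rw [cylGraph_two_adj]
  grind

theorem prismSub_adj_row (i : Fin 2) (j : Fin (n + 3)) :
    (prismSub row rung).Adj (i, j) (i, j + 1) ↔ row i j := by
  simp [prismSub, (Fin.add_one_add_one_ne_self j).symm]

theorem prismSub_adj_rung (j : Fin (n + 3)) : (prismSub row rung).Adj (0, j) (1, j) ↔ rung j := by
  simp [prismSub]

theorem eq_prismSub_of_le_cylGraph {H : SimpleGraph (Fin 2 × Fin (n + 3))}
    (hH : H ≤ cylGraph 2 (n + 3)) (hrow : ∀ i j, H.Adj (i, j) (i, j + 1) ↔ row i j)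
    (hrung : ∀ j, H.Adj (0, j) (1, j) ↔ rung j) : H = prismSub row rung := by
  refine le_antisymm (fun x y => forall_adj_of_le_cylGraph hH (fun _ _ h => h.symm)
    (fun i j h => (prismSub_adj_row i j).mpr ((hrow i j).mp h))
    (fun j h => (prismSub_adj_rung j).mpr ((hrung j).mp h))) (fun x y => ?_)
  exact forall_adj_of_le_cylGraph prismSub_le_cylGraph (fun _ _ h => h.symm)
    (fun i j h => (hrow i j).mpr ((prismSub_adj_row i j).mp h))
    (fun j h => (hrung j).mpr ((prismSub_adj_rung j).mp h))

end Prism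

section Degree

variable {n : ℕ} {H : SimpleGraph (Fin 2 × Fin (n + 3))}

theorem ncard_neighborSet_eq_two_iff (hH : H ≤ cylGraph 2 (n + 3)) (i : Fin 2) (j : Fin (n + 3)) :
    (H.neighborSet (i, j + 1)).ncard = 2 ↔
      ExactlyTwo (H.Adj (0, j + 1) (1, j + 1)) (H.Adj (i, j + 1) (i, j + 1 + 1))
        (H.Adj (i, j) (i, j + 1)) := by
  have hi : 1 - i ≠ i := by fin_cases i <;> decide
  have hsub : H.neighborSet (i, j + 1) ⊆ {(1 - i, j + 1), (i, j + 1 + 1), (i, j)} := by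
    rintro ⟨i', j'⟩ hu
    rcases cylGraph_two_adj.mp (hH hu) with ⟨hii', rfl⟩ | ⟨rfl, rfl | h⟩
    · left; congr; omega
    · simp
    · simp [add_left_injective 1 h]
  have hrung : H.Adj (i, j + 1) (1 - i, j + 1) ↔ H.Adj (0, j + 1) (1, j + 1) := by
    fin_cases i
    · rfl
    · exact adj_comm _ _ _
  rw [Set.ncard_eq_two_iff_of_subset_triple (by simp [hi]) (by simp [hi]) (by simp [Fin.add_one_add_one_ne_self]) hsub]
  simp only [mem_neighborSet, hrung, adj_comm _ (i, j + 1) (i, j)]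

variable (H) in
def IsLocallyHamiltonian : Prop :=
  ∀ i j, ExactlyTwo (H.Adj (0, j + 1) (1, j + 1)) (H.Adj (i, j + 1) (i, j + 1 + 1))
    (H.Adj (i, j) (i, j + 1))

theorem isHamCycleSub_iff_of_le (hH : H ≤ cylGraph 2 (n + 3)) :
    IsHamCycleSub (cylGraph 2 (n + 3)) H ↔ H.Connected ∧ IsLocallyHamiltonian H := by
  simp only [IsHamCycleSub, IsLocallyHamiltonian, hH, true_and, ← ncard_neighborSet_eq_two_iff hH]
  refine and_congr_right fun _ => ⟨fun h i j => h _, fun h ⟨i, j⟩ => ?_⟩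
  simpa using h i (j - 1)

end Degree

theorem Fin.even_val_add_one_iff {n : ℕ} (hn : Even (n + 1)) (j : Fin (n + 1)) :
    Even (j + 1).val ↔ ¬ Even j.val := by
  rw [Fin.val_add_one]
  split_ifs with hj
  · subst hj
    simpa [Fin.val_last, Nat.even_add_one] using hn
  · exact Nat.even_add_one

section Cycles

variable {n : ℕ}

def twoRungCycle (a : Fin (n + 3)) : SimpleGraph (Fin 2 × Fin (n + 3)) :=
  prismSub (fun _ j => j ≠ a) (fun j => j = a ∨ j = a + 1)

def zigzagCycle (b : Bool) : SimpleGraph (Fin 2 × Fin (n + 3)) :=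
  prismSub (fun i j => Even (i.val + j.val) ↔ b) (fun _ => True)

theorem twoRungCycle_isHamCycleSub (a : Fin (n + 3)) :
    IsHamCycleSub (cylGraph 2 (n + 3)) (twoRungCycle a) := by
  refine (isHamCycleSub_iff_of_le prismSub_le_cylGraph).mpr ⟨?_, fun i j => ?_⟩
  · refine (connected_iff_exists_forall_reachable _).mpr ⟨(0, a + 1), fun ⟨i, j⟩ => ?_⟩
    refine Fin.cyclic_induction (p := fun j => ∀ i, (twoRungCycle a).Reachable (0, a + 1) (i, j))
      (a + 1) (fun i => ?_) (fun j hj ih i => ?_) j i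
    · fin_cases i
      · rfl
      · exact ((prismSub_adj_rung _).mpr (Or.inr rfl)).reachable
    · exact (ih i).trans ((prismSub_adj_row i j).mpr fun h => hj (congrArg (· + 1) h)).reachable
  · simp only [prismSub_adj_row, prismSub_adj_rung, add_left_inj, ExactlyTwo]
    have ha : a + 1 ≠ a := by simp
    by_cases hj : j = a
    · subst hj; tauto
    · by_cases hj' : j + 1 = a
      · subst hj'; tauto
      · tauto

theorem zigzagCycle_isHamCycleSub (hn : Even (n + 3)) (b : Bool) :
    IsHamCycleSub (cylGraph 2 (n + 3)) (zigzagCycle b) := by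
  refine (isHamCycleSub_iff_of_le prismSub_le_cylGraph).mpr ⟨?_, fun i j => ?_⟩
  · have hcol : ∀ i i' j, (zigzagCycle (n := n) b).Reachable (i, j) (i', j) := by
      intro i i' j
      have hrung : (zigzagCycle (n := n) b).Adj (0, j) (1, j) := (prismSub_adj_rung j).mpr trivial
      fin_cases i <;> fin_cases i'
      exacts [Reachable.rfl, hrung.reachable, hrung.symm.reachable, Reachable.rfl]
    refine (connected_iff_exists_forall_reachable _).mpr ⟨(0, 0), fun ⟨i, j⟩ => ?_⟩
    refine .trans ?_ (hcol 0 i j)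
    refine Fin.cyclic_induction (p := fun j => (zigzagCycle b).Reachable (0, 0) (0, j)) 0
      Reachable.rfl (fun j _ ih => ?_) j
    obtain ⟨i, hi⟩ : ∃ i : Fin 2, Even (i.val + j.val) ↔ b := by
      by_cases h : Even j.val ↔ b
      · exact ⟨0, by simpa using h⟩
      · exact ⟨1, by rw [add_comm, Fin.val_one, Nat.even_add_one]; tauto⟩
    exact (ih.trans (hcol 0 i j)).trans
      (((prismSub_adj_row i j).mpr hi).reachable.trans (hcol i 0 (j + 1)))
  · have := Fin.even_val_add_one_iff hn j
    simp only [prismSub_adj_row, prismSub_adj_rung, ExactlyTwo, Nat.even_add, this]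
    tauto

end Cycles

section Classification

variable {n : ℕ} {H : SimpleGraph (Fin 2 × Fin (n + 3))}

theorem not_connected_of_forall_not_adj_rung (hH : H ≤ cylGraph 2 (n + 3))
    (h : ∀ j, ¬ H.Adj (0, j) (1, j)) : ¬ H.Connected :=
  not_connected_of_mem_iff_of_adj (S := {x | x.1 = 0}) (u := (0, 0)) (v := (1, 0))
    (fun _ _ hxy => forall_adj_of_le_cylGraph hH (P := fun x y => x.1 = 0 ↔ y.1 = 0)
      (fun _ _ => Iff.symm) (fun _ _ _ => Iff.rfl) (fun j hj => absurd hj (h j)) hxy) rfl (by simp)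

theorem not_connected_of_two_gaps (hH : H ≤ cylGraph 2 (n + 3)) {a a' : Fin (n + 3)}
    (haa' : a ≠ a') (ha : ∀ i, ¬ H.Adj (i, a) (i, a + 1)) (ha' : ∀ i, ¬ H.Adj (i, a') (i, a' + 1)) :
    ¬ H.Connected := by
  obtain ⟨f, hfa, hfa', hf⟩ := Fin.exists_arc haa'
  refine not_connected_of_mem_iff_of_adj (S := {x | f x.2}) (u := (0, a + 1)) (v := (0, a' + 1))
    (fun _ _ hxy => forall_adj_of_le_cylGraph hH (P := fun x y => f x.2 ↔ f y.2)
      (fun _ _ => Iff.symm) (fun i j hij => ?_) (fun _ _ => Iff.rfl) hxy) hfa hfa'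
  exact (hf j (by rintro rfl; exact ha i hij) (by rintro rfl; exact ha' i hij)).symm

theorem exists_eq_twoRungCycle (hH : H ≤ cylGraph 2 (n + 3)) (hconn : H.Connected)
    (hloc : IsLocallyHamiltonian H)
    (hrows : ∀ j, H.Adj (0, j) (0, j + 1) ↔ H.Adj (1, j) (1, j + 1)) :
    ∃ a, H = twoRungCycle a := by
  have hrow : ∀ i j, H.Adj (i, j) (i, j + 1) ↔ H.Adj (0, j) (0, j + 1) := by
    intro i j
    fin_cases i
    exacts [Iff.rfl, (hrows j).symm]
  obtain ⟨a, ha⟩ : ∃ a, ¬ H.Adj (0, a) (0, a + 1) := by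
    by_contra! hall
    refine not_connected_of_forall_not_adj_rung hH (fun j => ?_) hconn
    have := hloc 0 (j - 1)
    have hprev := hall (j - 1)
    simp only [sub_add_cancel, ExactlyTwo] at this hprev
    tauto
  have hgap : ∀ j, H.Adj (0, j) (0, j + 1) ↔ j ≠ a := fun j =>
    ⟨fun h hja => ha (hja ▸ h), fun hja => by_contra fun h =>
      not_connected_of_two_gaps hH hja (fun i => by rwa [hrow]) (fun i => by rwa [hrow]) hconn⟩
  refine ⟨a, eq_prismSub_of_le_cylGraph hH (fun i j => (hrow i j).trans (hgap j)) fun j => ?_⟩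
  obtain ⟨k, rfl⟩ : ∃ k, j = k + 1 := ⟨j - 1, by simp⟩
  have := hloc 0 k
  simp only [hgap, ExactlyTwo] at this
  simp only [add_left_inj]
  tauto

theorem even_and_exists_eq_zigzagCycle (hH : H ≤ cylGraph 2 (n + 3))
    (hloc : IsLocallyHamiltonian H)
    (hrows : ∀ j, H.Adj (1, j) (1, j + 1) ↔ ¬ H.Adj (0, j) (0, j + 1)) :
    Even (n + 3) ∧ ∃ b, H = zigzagCycle b := by
  classical
  set T : Fin (n + 3) → Prop := fun j => H.Adj (0, j) (0, j + 1)
  have hstep : ∀ j, H.Adj (0, j + 1) (1, j + 1) ∧ (T (j + 1) ↔ ¬ T j) := by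
    intro j
    have h₀ := hloc 0 j
    have h₁ := hloc 1 j
    simp only [hrows, ExactlyTwo] at h₀ h₁ ⊢
    tauto
  have hparity : ∀ k : ℕ, T k ↔ (Even k ↔ T 0) := by
    intro k
    induction k with
    | zero => simp
    | succ k ih => rw [Nat.cast_succ, (hstep _).2, ih, Nat.even_add_one]; tauto
  have heven : Even (n + 3) := by
    have := hparity (n + 3)
    rw [Fin.natCast_self] at this
    tauto
  refine ⟨heven, decide (T 0), eq_prismSub_of_le_cylGraph hH (fun i j => ?_) fun j => ?_⟩
  · have := hparity j.val
    rw [Fin.cast_val_eq_self] at this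
    fin_cases i
    · simpa using this
    · simp only [Fin.mk_one, hrows, decide_eq_true_eq, add_comm 1, Nat.even_add_one]
      exact (not_congr this).trans not_iff
  · obtain ⟨k, rfl⟩ : ∃ k, j = k + 1 := ⟨j - 1, by simp⟩
    exact iff_true_intro (hstep k).1

theorem isHamCycleSub_cylGraph_iff :
    IsHamCycleSub (cylGraph 2 (n + 3)) H ↔
      (∃ a, H = twoRungCycle a) ∨ (Even (n + 3) ∧ ∃ b, H = zigzagCycle b) := by
  constructor
  · intro hHam
    have hH := hHam.1
    obtain ⟨hconn, hloc⟩ := (isHamCycleSub_iff_of_le hH).mp hHam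
    have hinv : ∀ j, (H.Adj (0, j + 1) (0, j + 1 + 1) ↔ H.Adj (1, j + 1) (1, j + 1 + 1)) ↔
        (H.Adj (0, j) (0, j + 1) ↔ H.Adj (1, j) (1, j + 1)) := by
      intro j
      have h₀ := hloc 0 j
      have h₁ := hloc 1 j
      simp only [ExactlyTwo] at h₀ h₁
      tauto
    by_cases h₀ : H.Adj (0, 0) (0, 0 + 1) ↔ H.Adj (1, 0) (1, 0 + 1)
    · exact .inl <| exists_eq_twoRungCycle hH hconn hloc <|
        Fin.cyclic_induction 0 h₀ fun j _ h => (hinv j).mpr h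
    · refine .inr <| even_and_exists_eq_zigzagCycle hH hloc fun j => ?_
      have := Fin.cyclic_induction
        (p := fun j => ¬ (H.Adj (0, j) (0, j + 1) ↔ H.Adj (1, j) (1, j + 1))) 0 h₀
        (fun j _ h => mt (hinv j).mp h) j
      tauto
  · rintro (⟨a, rfl⟩ | ⟨hn, b, rfl⟩)
    exacts [twoRungCycle_isHamCycleSub a, zigzagCycle_isHamCycleSub hn b]

end Classification

section Count

variable {n : ℕ}

theorem twoRungCycle_injective : Function.Injective (twoRungCycle (n := n)) := by
  intro a a' h
  have ha := prismSub_adj_row (row := fun _ j => j ≠ a) (rung := fun j => j = a ∨ j = a + 1) 0 a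
  rw [← twoRungCycle, h, twoRungCycle, prismSub_adj_row] at ha
  simpa [eq_comm] using ha

theorem zigzagCycle_injective : Function.Injective (zigzagCycle (n := n)) := by
  intro b b' h
  have hb := prismSub_adj_row (n := n) (row := fun i j => Even (i.val + j.val) ↔ b)
    (rung := fun _ => True) 0 0
  rw [← zigzagCycle, h, zigzagCycle, prismSub_adj_row] at hb
  simpa using hb.symm

theorem twoRungCycle_ne_zigzagCycle (a : Fin (n + 3)) (b : Bool) :
    twoRungCycle a ≠ zigzagCycle b := by
  intro h
  have hzig : (zigzagCycle b).Adj (0, a + 2) (1, a + 2) := (prismSub_adj_rung _).mpr trivial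
  rw [← h, twoRungCycle, prismSub_adj_rung, add_eq_left, add_right_inj, Fin.ext_iff,
    Fin.ext_iff, Fin.val_two] at hzig
  simp at hzig

theorem ncard_setOf_isHamCycleSub :
    {H | IsHamCycleSub (cylGraph 2 (n + 3)) H}.ncard = n + 3 + if Even (n + 3) then 2 else 0 := by
  have hcard : (Set.range (twoRungCycle (n := n))).ncard = n + 3 := by
    rw [Set.ncard_range_of_injective twoRungCycle_injective, Nat.card_eq_fintype_card,
      Fintype.card_fin]
  split_ifs with hn
  · have hset : {H | IsHamCycleSub (cylGraph 2 (n + 3)) H} =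
        Set.range twoRungCycle ∪ Set.range zigzagCycle := by
      ext H
      simp only [Set.mem_ofPred_eq, isHamCycleSub_cylGraph_iff, hn, true_and, Set.mem_union,
        Set.mem_range, eq_comm]
    have hdisj : Disjoint (Set.range (twoRungCycle (n := n))) (Set.range zigzagCycle) := by
      rw [Set.disjoint_range_iff]
      exact twoRungCycle_ne_zigzagCycle
    rw [hset, Set.ncard_union_eq hdisj, hcard, Set.ncard_range_of_injective zigzagCycle_injective,
      Nat.card_eq_fintype_card, Fintype.card_bool]
  · have hset : {H | IsHamCycleSub (cylGraph 2 (n + 3)) H} = Set.range twoRungCycle := by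
      ext H
      simp [isHamCycleSub_cylGraph_iff, hn, eq_comm]
    rw [hset, hcard, add_zero]

end Count

theorem ham_cycles_prism_general (n : ℕ) (hn : 3 ≤ n) :
    (Nat.card {H : SimpleGraph (Fin 2 × Fin n) // IsHamCycleSub (cylGraph 2 n) H} : ℤ)
      = (n : ℤ) + 1 + (-1) ^ n := by
  obtain ⟨k, rfl⟩ := Nat.exists_eq_add_of_le' hn
  have h := ncard_setOf_isHamCycleSub (n := k)
  rw [← Nat.card_coe_set_eq, Set.coe_ofPred] at h
  rw [h]
  rcases Nat.even_or_odd (k + 3) with he | ho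
  · simp [he, he.neg_one_pow]; ring
  · simp [Nat.not_even_iff_odd.mpr ho, ho.neg_one_pow]

/-- The number of Hamiltonian cycles of the prism graph `P_2 × C_n` (n ≥ 3)
equals `n + 1 + (-1)^n`. -/
theorem ham_cycles_prism (n : ℕ) [NeZero n] (hn : 3 ≤ n) :
    (Nat.card {H : SimpleGraph (Fin 2 × Fin n) // IsHamCycleSub (cylGraph 2 n) H} : ℤ)
      = (n : ℤ) + 1 + (-1) ^ n :=
  ham_cycles_prism_general n hn
end

section
/- For every integer n ≥ 3, the number of contractible Hamiltonian cycles in P_2 × C_n equals n; that is, h_1^c(n) = n. -/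
open SimpleGraph

open Fin.CommRing Fin.NatCast Fin.IntCast

section Part1
open SimpleGraph
namespace PrismAux

variable {m : ℕ}

lemma fin_one_ne_zero' : (1 : Fin (m+3)) ≠ 0 := by
  simp [Fin.ext_iff]

lemma fin_two_ne_zero' : (2 : Fin (m+3)) ≠ 0 := by
  intro h
  have := congrArg Fin.val h
  simp [Nat.mod_eq_of_lt (show 2 < m + 3 by omega)] at this

lemma sub_one_ne_add_one (t : Fin (m+3)) : t - 1 ≠ t + 1 := by
  intro h
  have h2 : (2 : Fin (m+3)) = 0 := by linear_combination -h
  exact fin_two_ne_zero' h2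

lemma succ_ne_self (t : Fin (m+3)) : t + 1 ≠ t := by
  intro h
  have h1 : (1 : Fin (m+3)) = 0 := by linear_combination h
  exact fin_one_ne_zero' h1

lemma cyc_adj {u v : Fin (m+3)} :
    (cycleGraph (m+3)).Adj u v ↔ u = v + 1 ∨ v = u + 1 := by
  rw [cycleGraph_adj (n := m+1)]
  constructor
  · rintro (h | h)
    · left; linear_combination h
    · right; linear_combination h
  · rintro (h | h)
    · left; linear_combination h
    · right; linear_combination h

lemma cyl2_adj {v w : Fin 2 × Fin (m+3)} :
    (cylGraph 2 (m+3)).Adj v w ↔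
      (v.1 ≠ w.1 ∧ v.2 = w.2) ∨ (v.1 = w.1 ∧ (v.2 = w.2 + 1 ∨ w.2 = v.2 + 1)) := by
  show (pathGraph 2).Adj v.1 w.1 ∧ v.2 = w.2 ∨ (cycleGraph (m+3)).Adj v.2 w.2 ∧ v.1 = w.1 ↔ _
  rw [pathGraph_two_eq_top, cyc_adj]
  simp only [top_adj]
  tauto

/-- The Hamiltonian cycle with rungs at columns `j` and `j+1`. -/
def Hc (m : ℕ) (j : Fin (m+3)) : SimpleGraph (Fin 2 × Fin (m+3)) where
  Adj v w := (v.1 ≠ w.1 ∧ v.2 = w.2 ∧ (v.2 = j ∨ v.2 = j + 1)) ∨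
    (v.1 = w.1 ∧ ((w.2 = v.2 + 1 ∧ v.2 ≠ j) ∨ (v.2 = w.2 + 1 ∧ w.2 ≠ j)))
  symm := by
    constructor
    rintro v w (⟨h1, h2, h3⟩ | ⟨h1, h2 | h2⟩)
    · exact Or.inl ⟨h1.symm, h2.symm, h2 ▸ h3⟩
    · exact Or.inr ⟨h1.symm, Or.inr h2⟩
    · exact Or.inr ⟨h1.symm, Or.inl h2⟩
  loopless := by
    constructor
    rintro v (⟨h1, _⟩ | ⟨_, ⟨h2, _⟩ | ⟨h2, _⟩⟩)
    · exact h1 rfl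
    · exact succ_ne_self v.2 h2.symm
    · exact succ_ne_self v.2 h2.symm

lemma Hc_hor {j t : Fin (m+3)} {i : Fin 2} :
    (Hc m j).Adj (i, t) (i, t + 1) ↔ t ≠ j := by
  show (i ≠ i ∧ _ ∧ _) ∨ (i = i ∧ ((t + 1 = t + 1 ∧ t ≠ j) ∨ (t = (t + 1) + 1 ∧ _))) ↔ _
  constructor
  · rintro (⟨h1, _⟩ | ⟨_, ⟨_, h⟩ | ⟨h2, _⟩⟩)
    · exact absurd rfl h1
    · exact h
    · exfalso
      have : (2 : Fin (m+3)) = 0 := by linear_combination -h2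
      exact fin_two_ne_zero' this
  · intro h
    exact Or.inr ⟨rfl, Or.inl ⟨rfl, h⟩⟩

lemma Hc_rung {j t : Fin (m+3)} {i i' : Fin 2} (hne : i ≠ i') :
    (Hc m j).Adj (i, t) (i', t) ↔ (t = j ∨ t = j + 1) := by
  show (i ≠ i' ∧ t = t ∧ _) ∨ (i = i' ∧ _) ↔ _
  constructor
  · rintro (⟨_, _, h3⟩ | ⟨h1, _⟩)
    · exact h3
    · exact absurd h1 hne
  · intro h
    exact Or.inl ⟨hne, rfl, h⟩

lemma Hc_le (j : Fin (m+3)) : Hc m j ≤ cylGraph 2 (m+3) := by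
  rintro v w (⟨h1, h2, _⟩ | ⟨h1, h2 | h2⟩) <;> rw [cyl2_adj]
  · exact Or.inl ⟨h1, h2⟩
  · exact Or.inr ⟨h1, Or.inr h2.1⟩
  · exact Or.inr ⟨h1, Or.inl h2.1⟩

end PrismAux
end Part1
section Part2
open SimpleGraph PrismAux
namespace PrismAux
variable {m : ℕ}

lemma Hc_adj {j : Fin (m+3)} {v w : Fin 2 × Fin (m+3)} :
    (Hc m j).Adj v w ↔ (v.1 ≠ w.1 ∧ v.2 = w.2 ∧ (v.2 = j ∨ v.2 = j + 1)) ∨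
    (v.1 = w.1 ∧ ((w.2 = v.2 + 1 ∧ v.2 ≠ j) ∨ (v.2 = w.2 + 1 ∧ w.2 ≠ j))) := Iff.rfl

lemma fin2_resolve : ∀ i i' : Fin 2, i ≠ i' → i' = 1 - i := by decide

lemma fin2_ne_sub : ∀ i : Fin 2, i ≠ 1 - i := by decide

lemma sub_one_eq_iff {t j : Fin (m+3)} : t - 1 = j ↔ t = j + 1 := by
  constructor <;> intro h <;> linear_combination h

lemma add_one_ne_self' (j : Fin (m+3)) : j + 1 ≠ j := succ_ne_self j

lemma Hc_nbhd_ncard (j : Fin (m+3)) (v : Fin 2 × Fin (m+3)) :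
    ((Hc m j).neighborSet v).ncard = 2 := by
  obtain ⟨i, t⟩ := v
  by_cases hj : t = j
  · have hset : (Hc m j).neighborSet (i, t) = {(1 - i, t), (i, t - 1)} := by
      ext ⟨i', s⟩
      simp only [mem_neighborSet, Set.mem_insert_iff, Set.mem_singleton_iff, Prod.mk.injEq,
        Hc_adj]
      constructor
      · rintro (⟨h1, h2, h3⟩ | ⟨h1, ⟨h2, h3⟩ | ⟨h2, h3⟩⟩)
        · exact Or.inl ⟨fin2_resolve _ _ h1, h2.symm⟩
        · exact absurd hj h3
        · exact Or.inr ⟨h1.symm, by linear_combination -h2⟩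
      · rintro (⟨rfl, rfl⟩ | ⟨rfl, rfl⟩)
        · exact Or.inl ⟨fin2_ne_sub i, rfl, Or.inl hj⟩
        · refine Or.inr ⟨rfl, Or.inr ⟨by ring, ?_⟩⟩
          intro h
          exact fin_one_ne_zero' (by linear_combination hj - h)
    rw [hset]
    refine Set.ncard_pair ?_
    intro h
    exact fin2_ne_sub i (congrArg Prod.fst h).symm
  · by_cases hj1 : t = j + 1
    · have hset : (Hc m j).neighborSet (i, t) = {(1 - i, t), (i, t + 1)} := by
        ext ⟨i', s⟩
        simp only [mem_neighborSet, Set.mem_insert_iff, Set.mem_singleton_iff, Prod.mk.injEq,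
          Hc_adj]
        constructor
        · rintro (⟨h1, h2, h3⟩ | ⟨h1, ⟨h2, h3⟩ | ⟨h2, h3⟩⟩)
          · exact Or.inl ⟨fin2_resolve _ _ h1, h2.symm⟩
          · exact Or.inr ⟨h1.symm, h2⟩
          · exact absurd (by linear_combination hj1 - h2) h3
        · rintro (⟨rfl, rfl⟩ | ⟨rfl, rfl⟩)
          · exact Or.inl ⟨fin2_ne_sub i, rfl, Or.inr hj1⟩
          · exact Or.inr ⟨rfl, Or.inl ⟨rfl, hj⟩⟩
      rw [hset]
      refine Set.ncard_pair ?_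
      intro h
      exact fin2_ne_sub i (congrArg Prod.fst h).symm
    · have hset : (Hc m j).neighborSet (i, t) = {(i, t - 1), (i, t + 1)} := by
        ext ⟨i', s⟩
        simp only [mem_neighborSet, Set.mem_insert_iff, Set.mem_singleton_iff, Prod.mk.injEq,
          Hc_adj]
        constructor
        · rintro (⟨h1, h2, h3⟩ | ⟨h1, ⟨h2, h3⟩ | ⟨h2, h3⟩⟩)
          · rcases h3 with h3 | h3
            · exact absurd h3 hj
            · exact absurd h3 hj1
          · exact Or.inr ⟨h1.symm, h2⟩
          · exact Or.inl ⟨h1.symm, by linear_combination -h2⟩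
        · rintro (⟨rfl, rfl⟩ | ⟨rfl, rfl⟩)
          · refine Or.inr ⟨rfl, Or.inr ⟨by ring, ?_⟩⟩
            intro h
            exact hj1 (sub_one_eq_iff.mp h)
          · exact Or.inr ⟨rfl, Or.inl ⟨rfl, hj⟩⟩
      rw [hset]
      refine Set.ncard_pair ?_
      intro h
      exact sub_one_ne_add_one t (congrArg Prod.snd h)

lemma Hc_connected (j : Fin (m+3)) : (Hc m j).Connected := by
  rw [connected_iff]
  refine ⟨?_, ⟨(0, j)⟩⟩
  have hrow : ∀ (i : Fin 2) (k : ℕ), k ≤ m + 2 →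
      (Hc m j).Reachable (i, j + 1) (i, j + 1 + (k : Fin (m+3))) := by
    intro i k
    induction k with
    | zero => intro _; rw [Nat.cast_zero, add_zero]
    | succ k ih =>
      intro hk
      refine (ih (by omega)).trans ?_
      have hstep : (Hc m j).Adj (i, j + 1 + (k : Fin (m+3))) (i, j + 1 + (k : Fin (m+3)) + 1) := by
        rw [Hc_hor]
        intro h
        have h0 : ((1 + k : ℕ) : Fin (m+3)) = 0 := by push_cast; linear_combination h
        rw [Fin.natCast_eq_zero] at h0
        have := Nat.le_of_dvd (by omega) h0
        omega
      have hcast : ((k + 1 : ℕ) : Fin (m+3)) = (k : Fin (m+3)) + 1 := by push_cast; ring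
      rw [hcast, ← add_assoc]
      exact hstep.reachable
  have hcol : ∀ (i : Fin 2) (t : Fin (m+3)), (Hc m j).Reachable (i, t) (i, j + 1) := by
    intro i t
    have hk : (t - (j + 1)).val ≤ m + 2 := Fin.is_le _
    have h := hrow i (t - (j + 1)).val hk
    rw [Fin.cast_val_eq_self, show j + 1 + (t - (j + 1)) = t by ring] at h
    exact h.symm
  intro u v
  obtain ⟨i, t⟩ := u
  obtain ⟨i', s⟩ := v
  have key : ∀ i₀ : Fin 2, (Hc m j).Reachable (i₀, j + 1) (0, j + 1) := by
    intro i₀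
    fin_cases i₀
    · exact Reachable.refl _
    · exact ((Hc_rung (by decide)).mpr (Or.inr rfl)).reachable
  exact ((hcol i t).trans (key i)).trans (((hcol i' s).trans (key i')).symm)

end PrismAux
end Part2
section Part3
open SimpleGraph PrismAux
namespace PrismAux
variable {m : ℕ}

lemma Hc_cross_adj (j : Fin (m+3)) (i : Fin 2) :
    (Hc m j).Adj (i, -1) (i, 0) ↔ (-1 : Fin (m+3)) ≠ j := by
  rw [show ((0 : Fin (m+3))) = -1 + 1 by ring]
  exact Hc_hor

lemma Hc_cross (j : Fin (m+3)) : Even (crossNum 2 (m+3) (Hc m j)) := by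
  show Even (Set.ncard {i : Fin 2 | (Hc m j).Adj (i, -1) (i, 0)})
  rcases eq_or_ne (-1 : Fin (m+3)) j with hj | hj
  · have hset : {i : Fin 2 | (Hc m j).Adj (i, -1) (i, 0)} = ∅ :=
      Set.eq_empty_iff_forall_notMem.mpr (fun i hi => (Hc_cross_adj j i).mp hi hj)
    rw [hset, Set.ncard_empty]
    exact Even.zero
  · have hset : {i : Fin 2 | (Hc m j).Adj (i, -1) (i, 0)} = Set.univ :=
      Set.eq_univ_iff_forall.mpr (fun i => (Hc_cross_adj j i).mpr hj)
    rw [hset, Set.ncard_univ, Nat.card_eq_fintype_card, Fintype.card_fin]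
    exact even_two

lemma Hc_isHam (j : Fin (m+3)) : IsHamCycleSub (cylGraph 2 (m+3)) (Hc m j) :=
  ⟨Hc_le j, Hc_connected j, Hc_nbhd_ncard j⟩

lemma Hc_inj {j k : Fin (m+3)} (h : Hc m j = Hc m k) : j = k := by
  by_contra hne
  have h1 : (Hc m k).Adj (0, j) (0, j + 1) := Hc_hor.mpr hne
  rw [← h] at h1
  exact (Hc_hor.mp h1) rfl

lemma two_of_three {α : Type*} {x y z : α} {N : Set α} (hxy : x ≠ y) (hxz : x ≠ z)
    (hyz : y ≠ z) (hsub : N ⊆ {x, y, z}) (hc : N.ncard = 2) :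
    (x ∈ N ∧ y ∈ N ∧ z ∉ N) ∨ (x ∈ N ∧ z ∈ N ∧ y ∉ N) ∨ (y ∈ N ∧ z ∈ N ∧ x ∉ N) := by
  have hfin : ({x, y, z} : Set α).Finite := (Set.finite_singleton z).insert y |>.insert x
  have hNfin : N.Finite := hfin.subset hsub
  by_cases hx : x ∈ N <;> by_cases hy : y ∈ N <;> by_cases hz : z ∈ N
  · exfalso
    have hN : N = {x, y, z} := by
      refine Set.Subset.antisymm hsub ?_
      rintro w (rfl | rfl | rfl) <;> assumption
    rw [hN] at hc
    have : ({x, y, z} : Set α).ncard = 3 := by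
      rw [Set.ncard_insert_of_notMem (by simp [hxy, hxz]) ((Set.finite_singleton z).insert y),
        Set.ncard_insert_of_notMem (by simp [hyz]) (Set.finite_singleton z),
        Set.ncard_singleton]
    omega
  · exact Or.inl ⟨hx, hy, hz⟩
  · exact Or.inr (Or.inl ⟨hx, hz, hy⟩)
  · -- x ∈ N only
    exfalso
    have hsub1 : N ⊆ {x} := by
      intro w hw
      rcases hsub hw with rfl | rfl | rfl
      · rfl
      · exact absurd hw hy
      · exact absurd hw hz
    have := Set.ncard_le_ncard hsub1 (Set.finite_singleton x)
    rw [Set.ncard_singleton] at this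
    omega
  · exact Or.inr (Or.inr ⟨hy, hz, hx⟩)
  · exfalso
    have hsub1 : N ⊆ {y} := by
      intro w hw
      rcases hsub hw with rfl | rfl | rfl
      · exact absurd hw hx
      · rfl
      · exact absurd hw hz
    have := Set.ncard_le_ncard hsub1 (Set.finite_singleton y)
    rw [Set.ncard_singleton] at this
    omega
  · exfalso
    have hsub1 : N ⊆ {z} := by
      intro w hw
      rcases hsub hw with rfl | rfl | rfl
      · exact absurd hw hx
      · exact absurd hw hy
      · rfl
    have := Set.ncard_le_ncard hsub1 (Set.finite_singleton z)
    rw [Set.ncard_singleton] at this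
    omega
  · exfalso
    have hsub1 : N ⊆ (∅ : Set α) := by
      intro w hw
      rcases hsub hw with rfl | rfl | rfl
      · exact absurd hw hx
      · exact absurd hw hy
      · exact absurd hw hz
    have := Set.ncard_le_ncard hsub1 Set.finite_empty
    rw [Set.ncard_empty] at this
    omega

end PrismAux
end Part3
section Part4
open SimpleGraph
namespace PrismAux
variable {m : ℕ}

/-- Horizontal edge of `H` in row `i` between columns `t` and `t+1`. -/
def Ha (H : SimpleGraph (Fin 2 × Fin (m+3))) (i : Fin 2) (t : Fin (m+3)) : Prop :=
  H.Adj (i, t) (i, t + 1)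

/-- Rung of `H` at column `t`. -/
def Hr (H : SimpleGraph (Fin 2 × Fin (m+3))) (t : Fin (m+3)) : Prop :=
  H.Adj (0, t) (1, t)

lemma adj_sub_one_iff (H : SimpleGraph (Fin 2 × Fin (m+3))) (i : Fin 2) (t : Fin (m+3)) :
    H.Adj (i, t) (i, t - 1) ↔ Ha H i (t - 1) := by
  unfold Ha
  rw [sub_add_cancel]
  exact H.adj_comm _ _

lemma adj_rung_iff (H : SimpleGraph (Fin 2 × Fin (m+3))) (i : Fin 2) (t : Fin (m+3)) :
    H.Adj (i, t) (1 - i, t) ↔ Hr H t := by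
  unfold Hr
  fin_cases i
  · exact Iff.rfl
  · exact H.adj_comm _ _

lemma deg3 (H : SimpleGraph (Fin 2 × Fin (m+3))) (hle : H ≤ cylGraph 2 (m+3))
    (hdeg : ∀ v, (H.neighborSet v).ncard = 2) (i : Fin 2) (t : Fin (m+3)) :
    (Ha H i (t-1) ∧ Ha H i t ∧ ¬ Hr H t) ∨
    (Ha H i (t-1) ∧ Hr H t ∧ ¬ Ha H i t) ∨
    (Ha H i t ∧ Hr H t ∧ ¬ Ha H i (t-1)) := by
  have hxy : ((i, t-1) : Fin 2 × Fin (m+3)) ≠ (i, t+1) :=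
    fun h => sub_one_ne_add_one t (congrArg Prod.snd h)
  have hxz : ((i, t-1) : Fin 2 × Fin (m+3)) ≠ (1 - i, t) :=
    fun h => fin2_ne_sub i (congrArg Prod.fst h)
  have hyz : ((i, t+1) : Fin 2 × Fin (m+3)) ≠ (1 - i, t) :=
    fun h => fin2_ne_sub i (congrArg Prod.fst h)
  have hsub : H.neighborSet (i, t) ⊆ {(i, t-1), (i, t+1), (1 - i, t)} := by
    rintro ⟨i', s⟩ hw
    have hadj : H.Adj (i, t) (i', s) := hw
    rcases cyl2_adj.mp (hle hadj) with ⟨h1, h2⟩ | ⟨h1, h2 | h2⟩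
    · exact Set.mem_insert_iff.mpr (Or.inr (Set.mem_insert_iff.mpr (Or.inr
        (Set.mem_singleton_iff.mpr (Prod.ext (fin2_resolve _ _ h1) h2.symm)))))
    · exact Set.mem_insert_iff.mpr (Or.inl (Prod.ext h1.symm (by linear_combination -h2)))
    · exact Set.mem_insert_iff.mpr (Or.inr (Set.mem_insert_iff.mpr (Or.inl
        (Prod.ext h1.symm h2))))
  have key := two_of_three hxy hxz hyz hsub (hdeg (i, t))
  have cx : ((i, t-1) ∈ H.neighborSet (i, t)) ↔ Ha H i (t-1) := adj_sub_one_iff H i t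
  have cy : ((i, t+1) ∈ H.neighborSet (i, t)) ↔ Ha H i t := Iff.rfl
  have cz : ((1 - i, t) ∈ H.neighborSet (i, t)) ↔ Hr H t := adj_rung_iff H i t
  rcases key with ⟨h1, h2, h3⟩ | ⟨h1, h2, h3⟩ | ⟨h1, h2, h3⟩
  · exact Or.inl ⟨cx.mp h1, cy.mp h2, fun hr => h3 (cz.mpr hr)⟩
  · exact Or.inr (Or.inl ⟨cx.mp h1, cz.mp h2, fun ha => h3 (cy.mpr ha)⟩)
  · exact Or.inr (Or.inr ⟨cy.mp h1, cz.mp h2, fun ha => h3 (cx.mpr ha)⟩)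

lemma classify (H : SimpleGraph (Fin 2 × Fin (m+3)))
    (hle : H ≤ cylGraph 2 (m+3)) (hconn : H.Connected)
    (hdeg : ∀ v, (H.neighborSet v).ncard = 2)
    (hcross : Even (crossNum 2 (m+3) H)) :
    ∃ j, H = Hc m j := by
  classical
  have hadj_iff : ∀ i : Fin 2, H.Adj (i, -1) (i, 0) ↔ Ha H i (-1) := by
    intro i
    unfold Ha
    rw [show (-1 : Fin (m+3)) + 1 = 0 by ring]
  -- Step 1: parity at the cut
  have base : Ha H 0 (-1) ↔ Ha H 1 (-1) := by
    by_cases h0 : Ha H 0 (-1) <;> by_cases h1 : Ha H 1 (-1)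
    · exact iff_of_true h0 h1
    · exfalso
      have hs : {i : Fin 2 | H.Adj (i, -1) (i, 0)} = {0} := by
        ext i
        simp only [Set.mem_setOf_eq, Set.mem_singleton_iff, hadj_iff]
        constructor
        · intro hi
          by_contra hne
          have hi1 : i = 1 := by
            apply Fin.ext
            have h2 := i.is_lt
            have h3 : i.val ≠ 0 := fun h => hne (Fin.ext h)
            omega
          exact h1 (hi1 ▸ hi)
        · rintro rfl; exact h0
      have hcr : crossNum 2 (m+3) H = 1 := by
        show Set.ncard _ = 1
        rw [hs, Set.ncard_singleton]
      rw [hcr] at hcross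
      exact Nat.not_even_one hcross
    · exfalso
      have hs : {i : Fin 2 | H.Adj (i, -1) (i, 0)} = {1} := by
        ext i
        simp only [Set.mem_setOf_eq, Set.mem_singleton_iff, hadj_iff]
        constructor
        · intro hi
          by_contra hne
          have hi0 : i = 0 := by
            apply Fin.ext
            have h2 := i.is_lt
            have h3 : i.val ≠ 1 := fun h => hne (Fin.ext h)
            omega
          exact h0 (hi0 ▸ hi)
        · rintro rfl; exact h1
      have hcr : crossNum 2 (m+3) H = 1 := by
        show Set.ncard _ = 1
        rw [hs, Set.ncard_singleton]
      rw [hcr] at hcross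
      exact Nat.not_even_one hcross
    · exact iff_of_false h0 h1
  -- Step 2: propagate parity around the cycle
  have hab : ∀ t : Fin (m+3), Ha H 0 t ↔ Ha H 1 t := by
    have step : ∀ t : Fin (m+3), (Ha H 0 (t-1) ↔ Ha H 1 (t-1)) → (Ha H 0 t ↔ Ha H 1 t) := by
      intro t hprev
      have d0 := deg3 H hle hdeg 0 t
      have d1 := deg3 H hle hdeg 1 t
      tauto
    have hind : ∀ k : ℕ, Ha H 0 (-1 + (k : Fin (m+3))) ↔ Ha H 1 (-1 + (k : Fin (m+3))) := by
      intro k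
      induction k with
      | zero => simpa using base
      | succ k ih =>
        refine step (-1 + ((k+1 : ℕ) : Fin (m+3))) ?_
        have e : (-1 + ((k+1 : ℕ) : Fin (m+3))) - 1 = -1 + (k : Fin (m+3)) := by
          push_cast
          ring
        rw [e]
        exact ih
    intro t
    have e2 : -1 + ((t.val + 1 : ℕ) : Fin (m+3)) = t := by
      push_cast [Fin.cast_val_eq_self]
      ring
    have h := hind (t.val + 1)
    rwa [e2] at h
  -- Step 3: there is a missing horizontal edge in row 0
  have hex : ∃ j, ¬ Ha H 0 j := by
    by_contra hall
    push_neg at hall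
    have hnr : ∀ t, ¬ Hr H t := by
      intro t hr
      rcases deg3 H hle hdeg 0 t with ⟨_, _, h3⟩ | ⟨_, _, h3⟩ | ⟨_, _, h3⟩
      · exact h3 hr
      · exact h3 (hall t)
      · exact h3 (hall (t-1))
    have hrowadj : ∀ v w : Fin 2 × Fin (m+3), H.Adj v w → v.1 = w.1 := by
      rintro ⟨i, t⟩ ⟨i', s⟩ hadj
      rcases cyl2_adj.mp (hle hadj) with ⟨h1, h2⟩ | ⟨h1, _⟩
      · exfalso
        cases h2
        fin_cases i <;> fin_cases i'
        · exact h1 rfl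
        · exact hnr t hadj
        · exact hnr t hadj.symm
        · exact h1 rfl
      · exact h1
    have hwalk : ∀ {v w : Fin 2 × Fin (m+3)}, H.Walk v w → v.1 = w.1 := by
      intro v w p
      induction p with
      | nil => rfl
      | cons h p ih => exact (hrowadj _ _ h).trans ih
    obtain ⟨p⟩ := hconn.preconnected (0, 0) (1, 0)
    have h01 : (0 : Fin 2) = 1 := hwalk p
    exact absurd h01 (by decide)
  -- Step 4: the missing edge is unique
  obtain ⟨j, hj⟩ := hex
  have huniq : ∀ k : Fin (m+3), ¬ Ha H 0 k → k = j := by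
    intro k hk
    by_contra hne
    set K := (k - (j+1)).val with hK
    have hKlt : K < m + 2 := by
      have hle' : K ≤ m + 2 := Fin.is_le _
      rcases eq_or_lt_of_le hle' with heq | hlt
      · exfalso
        have hlast : k - (j+1) = Fin.last (m+2) := Fin.ext (by rw [Fin.val_last, ← hK, heq])
        have hneg : k - (j+1) = -1 := by
          rw [hlast]
          exact eq_neg_of_add_eq_zero_left (Fin.last_add_one _)
        exact hne (by linear_combination hneg)
      · exact hlt
    have hedge : ∀ (i : Fin 2) (t : Fin (m+3)), H.Adj (i, t) (i, t+1) → t ≠ j ∧ t ≠ k := by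
      intro i t hadj
      have ha0 : Ha H 0 t := by
        fin_cases i
        · exact hadj
        · exact (hab t).mpr hadj
      exact ⟨fun h => hj (h ▸ ha0), fun h => hk (h ▸ ha0)⟩
    have harith : ∀ t : Fin (m+3), t ≠ j → t ≠ k →
        ((t - (j+1)).val ≤ K ↔ ((t+1) - (j+1)).val ≤ K) := by
      intro t htj htk
      have e : (t+1) - (j+1) = (t - (j+1)) + 1 := by ring
      have hune : t - (j+1) ≠ Fin.last (m+2) := by
        intro h
        apply htj
        have hneg : t - (j+1) = -1 := by
          rw [h]
          exact eq_neg_of_add_eq_zero_left (Fin.last_add_one _)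
        linear_combination hneg
      have hval : ((t - (j+1)) + 1).val = (t - (j+1)).val + 1 := by
        rw [Fin.val_add_one, if_neg hune]
      have huK : (t - (j+1)).val ≠ K := by
        intro h
        apply htk
        have he : t - (j+1) = k - (j+1) := Fin.ext (by rw [h, hK])
        linear_combination he
      rw [e, hval]
      omega
    have hCstep : ∀ v w : Fin 2 × Fin (m+3), H.Adj v w →
        ((v.2 - (j+1)).val ≤ K ↔ (w.2 - (j+1)).val ≤ K) := by
      rintro ⟨i, t⟩ ⟨i', s⟩ hadj
      rcases cyl2_adj.mp (hle hadj) with ⟨_, h2⟩ | ⟨h1, h2 | h2⟩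
      · replace h2 : t = s := h2
        rw [h2]
      · cases h1
        replace h2 : t = s + 1 := h2
        rw [h2] at hadj
        have hadj' : H.Adj (i, s) (i, s + 1) := hadj.symm
        obtain ⟨hsj, hsk⟩ := hedge i s hadj'
        show (t - (j+1)).val ≤ K ↔ (s - (j+1)).val ≤ K
        rw [h2]
        exact (harith s hsj hsk).symm
      · cases h1
        replace h2 : s = t + 1 := h2
        rw [h2] at hadj
        obtain ⟨htj, htk⟩ := hedge i t hadj
        show (t - (j+1)).val ≤ K ↔ (s - (j+1)).val ≤ K
        rw [h2]
        exact harith t htj htk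
    have hCwalk : ∀ {v w : Fin 2 × Fin (m+3)}, H.Walk v w →
        ((v.2 - (j+1)).val ≤ K ↔ (w.2 - (j+1)).val ≤ K) := by
      intro v w p
      induction p with
      | nil => exact Iff.rfl
      | cons h p ih => exact (hCstep _ _ h).trans ih
    obtain ⟨p⟩ := hconn.preconnected (0, k) (0, j)
    have hkmem : (k - (j+1)).val ≤ K := hK.ge
    replace hjmem : (j - (j+1)).val ≤ K := (hCwalk p).mp hkmem
    have hj1 : j - (j+1) = -1 := by ring
    have hlast : (-1 : Fin (m+3)) = Fin.last (m+2) :=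
      (eq_neg_of_add_eq_zero_left (Fin.last_add_one _)).symm
    rw [hj1, hlast, Fin.val_last] at hjmem
    omega
  -- Step 5: characterize all edges
  have ha' : ∀ t : Fin (m+3), t ≠ j → Ha H 0 t := by
    intro t ht
    by_contra h
    exact ht (huniq t h)
  have hb' : ∀ t : Fin (m+3), t ≠ j → Ha H 1 t := fun t ht => (hab t).mp (ha' t ht)
  have hbneg : ¬ Ha H 1 j := fun h => hj ((hab j).mpr h)
  have hr' : ∀ t : Fin (m+3), Hr H t ↔ (t = j ∨ t = j + 1) := by
    intro t
    constructor
    · intro hrt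
      by_contra hcon
      push_neg at hcon
      obtain ⟨h1, h2⟩ := hcon
      have hat : Ha H 0 t := ha' t h1
      have hat1 : Ha H 0 (t-1) := ha' (t-1) (fun h => h2 (sub_one_eq_iff.mp h))
      rcases deg3 H hle hdeg 0 t with ⟨_, _, h3⟩ | ⟨_, _, h3⟩ | ⟨_, _, h3⟩
      · exact h3 hrt
      · exact h3 hat
      · exact h3 hat1
    · rintro (rfl | rfl)
      · rcases deg3 H hle hdeg 0 t with ⟨_, h2, _⟩ | ⟨_, h2, _⟩ | ⟨h2, _, _⟩
        · exact absurd h2 hj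
        · exact h2
        · exact absurd h2 hj
      · have hsub1 : (j + 1) - 1 = j := by ring
        rcases deg3 H hle hdeg 0 (j + 1) with ⟨h2, _, _⟩ | ⟨h2, _, _⟩ | ⟨_, h2, _⟩
        · exact absurd (hsub1 ▸ h2) hj
        · exact absurd (hsub1 ▸ h2) hj
        · exact h2
  -- Step 6: conclude H = Hc m j
  refine ⟨j, ?_⟩
  ext ⟨i, t⟩ ⟨i', s⟩
  constructor
  · intro hadj
    rcases cyl2_adj.mp (hle hadj) with ⟨h1, h2⟩ | ⟨h1, h2 | h2⟩
    · cases h2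
      refine Or.inl ⟨h1, rfl, (hr' t).mp ?_⟩
      fin_cases i <;> fin_cases i'
      · exact absurd rfl h1
      · exact hadj
      · exact hadj.symm
      · exact absurd rfl h1
    · cases h1
      replace h2 : t = s + 1 := h2
      rw [h2] at hadj
      have hadj' : H.Adj (i, s) (i, s + 1) := hadj.symm
      refine Or.inr ⟨rfl, Or.inr ⟨h2, ?_⟩⟩
      intro hsj
      fin_cases i
      · exact hj (hsj ▸ hadj')
      · exact hbneg (hsj ▸ hadj')
    · cases h1
      replace h2 : s = t + 1 := h2
      rw [h2] at hadj
      refine Or.inr ⟨rfl, Or.inl ⟨h2, ?_⟩⟩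
      intro htj
      fin_cases i
      · exact hj (htj ▸ hadj)
      · exact hbneg (htj ▸ hadj)
  · intro hadj
    rcases Hc_adj.mp hadj with ⟨h1, h2, h3⟩ | ⟨h1, h2 | h2⟩
    · cases h2
      have hrt : Hr H t := (hr' t).mpr h3
      fin_cases i <;> fin_cases i'
      · exact absurd rfl h1
      · exact hrt
      · exact hrt.symm
      · exact absurd rfl h1
    · cases h1
      obtain ⟨h2a, h2b⟩ := h2
      replace h2a : s = t + 1 := h2a
      replace h2b : t ≠ j := h2b
      rw [h2a]
      fin_cases i
      · exact ha' t h2b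
      · exact hb' t h2b
    · cases h1
      obtain ⟨h2a, h2b⟩ := h2
      replace h2a : t = s + 1 := h2a
      replace h2b : s ≠ j := h2b
      have hadj' : H.Adj (i, s) (i, s + 1) := by
        fin_cases i
        · exact ha' s h2b
        · exact hb' s h2b
      rw [h2a]
      exact hadj'.symm
end PrismAux
end Part4
open PrismAux in
/-- The number of contractible Hamiltonian cycles of `P_2 × C_n` equals `n` for `n ≥ 3`. -/
theorem contractible_ham_cycles_prism (n : ℕ) [NeZero n] (hn : 3 ≤ n) :
    Nat.card {H : SimpleGraph (Fin 2 × Fin n) //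
        IsHamCycleSub (cylGraph 2 n) H ∧ IsContractible 2 n H} = n := by
  obtain ⟨m, rfl⟩ : ∃ m, n = m + 3 := ⟨n - 3, by omega⟩
  let f : Fin (m+3) → {H : SimpleGraph (Fin 2 × Fin (m+3)) //
      IsHamCycleSub (cylGraph 2 (m+3)) H ∧ IsContractible 2 (m+3) H} :=
    fun j => ⟨Hc m j, Hc_isHam j, Hc_cross j⟩
  have hbij : Function.Bijective f := by
    constructor
    · intro j k h
      exact Hc_inj (congrArg Subtype.val h)
    · rintro ⟨H, hHam, hcr⟩
      obtain ⟨j, rfl⟩ := classify H hHam.1 hHam.2.1 hHam.2.2 hcr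
      exact ⟨j, rfl⟩
  rw [← Nat.card_eq_of_bijective f hbij, Nat.card_eq_fintype_card, Fintype.card_fin]
end

section
/- For every integer n ≥ 3, the number of non-contractible Hamiltonian cycles in P_2 × C_n equals 2 if n is even and 0 if n is odd. -/
open SimpleGraph

open Fin.NatCast Fin.CommRing

/-! ### Auxiliary lemmas -/

section Aux

lemma fin2_ne_iff : ∀ i i' : Fin 2, i ≠ i' ↔ i' = i + 1 := by decide

lemma fin2_sub_one (z : Fin 2) : z - 1 = z + 1 := by revert z; decide

lemma fin2_ite_sum (i z : Fin 2) :
    (if i = z then (1:ℕ) else 0) + (if i = z + 1 then 1 else 0) = 1 := by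
  revert i z; decide

lemma natCast_fin_ne_zero (n m : ℕ) [NeZero n] (h1 : 0 < m) (h2 : m < n) :
    ((m:ℕ) : Fin n) ≠ 0 := by
  intro h
  have := congrArg Fin.val h
  rw [Fin.val_natCast, Nat.mod_eq_of_lt h2] at this
  simp at this; omega

variable {n : ℕ} [NeZero n]

lemma add_one_ne (hn : 3 ≤ n) (j : Fin n) : j + 1 ≠ j := by
  intro hh
  have h2 : (1 : Fin n) = 0 := by linear_combination hh
  have h3 : ((1:ℕ) : Fin n) = 0 := by push_cast; linear_combination h2
  exact natCast_fin_ne_zero n 1 (by omega) (by omega) h3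

lemma add_one_ne_sub_one (hn : 3 ≤ n) (j : Fin n) : j + 1 ≠ j - 1 := by
  intro hh
  have h2 : (1 + 1 : Fin n) = 0 := by
    calc (1+1 : Fin n) = (j+1) - (j-1) := by ring
    _ = 0 := by rw [hh, sub_self]
  have h3 : ((2:ℕ) : Fin n) = 0 := by push_cast; linear_combination h2
  exact natCast_fin_ne_zero n 2 (by omega) (by omega) h3

lemma fin2_add_one_ne : ∀ i : Fin 2, i + 1 ≠ i := by decide

lemma fin2_cases : ∀ b : Fin 2, b = 0 ∨ b = 1 := by decide

lemma fin2_cases' : ∀ i z : Fin 2, (i = z ∧ i ≠ z + 1) ∨ (i ≠ z ∧ i = z + 1) := by decide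

lemma add_two_ne (hn : 3 ≤ n) (j : Fin n) : j + 1 + 1 ≠ j := by
  intro hh
  have h2 : (1 + 1 : Fin n) = 0 := by linear_combination hh
  have h3 : ((2:ℕ) : Fin n) = 0 := by push_cast; linear_combination h2
  exact natCast_fin_ne_zero n 2 (by omega) (by omega) h3

lemma sub_one_ne (hn : 3 ≤ n) (j : Fin n) : j - 1 ≠ j := by
  intro hh
  have h2 : (1 : Fin n) = 0 := by linear_combination -hh
  have h3 : ((1:ℕ) : Fin n) = 0 := by push_cast; linear_combination h2
  exact natCast_fin_ne_zero n 1 (by omega) (by omega) h3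

lemma cast_step (hn : 3 ≤ n) (hn2 : 2 ∣ n) (j : Fin n) :
    (((j + 1 : Fin n) : ℕ) : Fin 2) = (((j : Fin n) : ℕ) : Fin 2) + 1 := by
  have h1 : ((j + 1 : Fin n) : ℕ) = ((j : ℕ) + 1) % n := by
    rw [Fin.val_add, Fin.val_one', Nat.mod_eq_of_lt (show 1 < n by omega)]
  apply Fin.ext
  rw [h1, Fin.val_natCast, Fin.val_add, Fin.val_natCast, Fin.val_one,
    Nat.mod_mod_of_dvd _ hn2]
  omega

open scoped Classical in
lemma ncard_setOf_fin2 (p : Fin 2 → Prop) :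
    {i : Fin 2 | p i}.ncard = (if p 0 then 1 else 0) + (if p 1 then 1 else 0) := by
  classical
  have h : {i : Fin 2 | p i} = ↑(Finset.univ.filter p) := by ext i; simp
  rw [h, Set.ncard_coe_finset, Finset.card_filter, Fin.sum_univ_two]

open scoped Classical in
lemma ncard_filter_triple {α : Type*} (a b c : α) (hab : a ≠ b) (hac : a ≠ c)
    (hbc : b ≠ c) (p : α → Prop) :
    {x | x ∈ ({a,b,c} : Set α) ∧ p x}.ncard
      = (if p a then 1 else 0) + (if p b then 1 else 0) + (if p c then 1 else 0) := by
  classical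
  have h : {x | x ∈ ({a,b,c} : Set α) ∧ p x} = ↑(({a,b,c} : Finset α).filter p) := by
    ext x; simp [and_comm]
  rw [h, Set.ncard_coe_finset, Finset.card_filter,
    Finset.sum_insert (by simp [hab, hac]), Finset.sum_insert (by simp [hbc]),
    Finset.sum_singleton, add_assoc]

lemma cyl_adj (hn : 3 ≤ n) (x y : Fin 2 × Fin n) :
    (cylGraph 2 n).Adj x y ↔
      (x.2 = y.2 ∧ x.1 ≠ y.1) ∨ (x.1 = y.1 ∧ (y.2 = x.2 + 1 ∨ x.2 = y.2 + 1)) := by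
  rw [cylGraph, boxProd_adj]
  have hp : ∀ i i' : Fin 2, (pathGraph 2).Adj i i' ↔ i ≠ i' := by
    intro i i'
    rw [pathGraph_adj]
    revert i i'; decide
  have hc : ∀ u v : Fin n, (cycleGraph n).Adj u v ↔ (v = u + 1 ∨ u = v + 1) := by
    intro u v
    rw [cycleGraph_adj']
    have h1 : ∀ w z : Fin n, (w - z).val = 1 ↔ w = z + 1 := by
      intro w z
      constructor
      · intro h
        have h2 : w - z = 1 := by
          apply Fin.ext; rw [h, Fin.val_one', Nat.mod_eq_of_lt (by omega)]
        linear_combination h2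
      · intro h
        rw [h, add_sub_cancel_left, Fin.val_one', Nat.mod_eq_of_lt (by omega)]
    rw [h1, h1]
    tauto
  rw [hp, hc]
  tauto

lemma nbhd_eq (hn : 3 ≤ n) {H : SimpleGraph (Fin 2 × Fin n)} (hle : H ≤ cylGraph 2 n)
    (i : Fin 2) (j : Fin n) :
    H.neighborSet (i, j)
      = {y | y ∈ ({(i + 1, j), (i, j - 1), (i, j + 1)} : Set (Fin 2 × Fin n)) ∧
          H.Adj (i, j) y} := by
  ext ⟨i', j'⟩
  simp only [mem_neighborSet, Set.mem_setOf_eq, Set.mem_insert_iff, Set.mem_singleton_iff]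
  constructor
  · intro h
    refine ⟨?_, h⟩
    rcases (cyl_adj hn _ _).mp (hle h) with ⟨h1, h2⟩ | ⟨h1, h2⟩
    · left
      exact Prod.ext ((fin2_ne_iff i i').mp h2) h1.symm
    · rcases h2 with h2 | h2
      · right; right
        exact Prod.ext h1.symm h2
      · right; left
        refine Prod.ext h1.symm ?_
        rw [eq_sub_iff_add_eq]
        exact h2.symm
  · exact And.right

open scoped Classical in
lemma star_eq (hn : 3 ≤ n) {H : SimpleGraph (Fin 2 × Fin n)} (hle : H ≤ cylGraph 2 n)
    (hdeg : ∀ v, (H.neighborSet v).ncard = 2) (i : Fin 2) (j : Fin n) :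
    (if H.Adj (i,j) (i+1,j) then 1 else 0) + (if H.Adj (i,j) (i,j-1) then 1 else 0)
      + (if H.Adj (i,j) (i,j+1) then 1 else 0) = 2 := by
  have h2 := hdeg (i, j)
  rw [nbhd_eq hn hle i j, ncard_filter_triple _ _ _
    (fun h => fin2_add_one_ne i (congrArg Prod.fst h))
    (fun h => fin2_add_one_ne i (congrArg Prod.fst h))
    (fun h => add_one_ne_sub_one hn j (congrArg Prod.snd h).symm)] at h2
  exact h2

end Aux

/-! ### The zigzag cycles -/

def zig (n : ℕ) [NeZero n] (a : Fin 2) : SimpleGraph (Fin 2 × Fin n) :=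
  SimpleGraph.fromRel (fun x y =>
    x.2 = y.2 ∨ (y.2 = x.2 + 1 ∧ x.1 = a + (((x.2 : Fin n) : ℕ) : Fin 2) ∧ y.1 = x.1))

section Zig

variable {n : ℕ} [NeZero n]

lemma zig_adj (hn : 3 ≤ n) (a : Fin 2) (x y : Fin 2 × Fin n) :
    (zig n a).Adj x y ↔
      (x.2 = y.2 ∧ x.1 ≠ y.1) ∨
      (x.1 = y.1 ∧ ((y.2 = x.2 + 1 ∧ x.1 = a + (((x.2 : Fin n) : ℕ) : Fin 2)) ∨
        (x.2 = y.2 + 1 ∧ x.1 = a + (((y.2 : Fin n) : ℕ) : Fin 2)))) := by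
  obtain ⟨i, j⟩ := x
  obtain ⟨i', j'⟩ := y
  rw [zig, fromRel_adj]
  simp only [Prod.mk.injEq, ne_eq]
  constructor
  · rintro ⟨hne, (h | ⟨h1, h2, h3⟩) | (h | ⟨h1, h2, h3⟩)⟩
    · exact Or.inl ⟨h, fun hi => hne ⟨hi, h⟩⟩
    · exact Or.inr ⟨h3.symm, Or.inl ⟨h1, h2⟩⟩
    · exact Or.inl ⟨h.symm, fun hi => hne ⟨hi, h.symm⟩⟩
    · exact Or.inr ⟨h3, Or.inr ⟨h1, h3.trans h2⟩⟩
  · rintro (⟨h1, h2⟩ | ⟨h1, (⟨h2, h3⟩ | ⟨h2, h3⟩)⟩)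
    · exact ⟨fun hc => h2 hc.1, Or.inl (Or.inl h1)⟩
    · refine ⟨fun hc => ?_, Or.inl (Or.inr ⟨h2, h3, h1.symm⟩)⟩
      exact add_one_ne hn j (h2 ▸ hc.2.symm)
    · refine ⟨fun hc => ?_, Or.inr (Or.inr ⟨h2, h1.symm.trans h3, h1⟩)⟩
      exact add_one_ne hn j' (h2 ▸ hc.2)

lemma zig_adj_right (hn : 3 ≤ n) (a i : Fin 2) (j : Fin n) :
    (zig n a).Adj (i, j) (i, j + 1) ↔ i = a + ((j : ℕ) : Fin 2) := by
  rw [zig_adj hn]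
  simp only [ne_eq, not_true_eq_false, and_false, false_or, true_and]
  constructor
  · rintro (h2 | ⟨h1, h2⟩)
    · exact h2
    · exact absurd h1.symm (add_two_ne hn j)
  · intro h
    exact Or.inl h

lemma zig_adj_left (hn : 3 ≤ n) (hn2 : 2 ∣ n) (a i : Fin 2) (j : Fin n) :
    (zig n a).Adj (i, j) (i, j - 1) ↔ i = a + ((j : ℕ) : Fin 2) + 1 := by
  have hc : (((j - 1 : Fin n) : ℕ) : Fin 2) = ((j : ℕ) : Fin 2) + 1 := by
    have h1 := cast_step hn hn2 (j - 1)
    rw [sub_add_cancel] at h1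
    rw [← fin2_sub_one, eq_sub_iff_add_eq, ← h1]
  rw [zig_adj hn]
  simp only [ne_eq, not_true_eq_false, and_false, false_or, true_and]
  constructor
  · rintro (⟨h1, h2⟩ | ⟨h1, h2⟩)
    · exact absurd h1.symm (add_one_ne_sub_one hn j)
    · rw [h2, hc, add_assoc]
  · intro h
    refine Or.inr ⟨(sub_add_cancel j 1).symm, ?_⟩
    rw [h, hc, add_assoc]

lemma zig_mem (hn : 3 ≤ n) (hn2 : 2 ∣ n) (a : Fin 2) :
    IsHamCycleSub (cylGraph 2 n) (zig n a) ∧ ¬ IsContractible 2 n (zig n a) := by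
  classical
  have hle : zig n a ≤ cylGraph 2 n := by
    intro x y h
    rw [cyl_adj hn]
    rcases (zig_adj hn a x y).mp h with ⟨h1, h2⟩ | ⟨h1, (⟨h2, h3⟩ | ⟨h2, h3⟩)⟩
    · exact Or.inl ⟨h1, h2⟩
    · exact Or.inr ⟨h1, Or.inl h2⟩
    · exact Or.inr ⟨h1, Or.inr h2⟩
  have hreach0 : ∀ (j : Fin n) (i i' : Fin 2), (zig n a).Reachable (i, j) (i', j) := by
    intro j i i'
    by_cases h : i = i'
    · rw [h]
    · exact ((zig_adj hn a (i, j) (i', j)).mpr (Or.inl ⟨rfl, h⟩)).reachable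
  have key : ∀ k : ℕ, (zig n a).Reachable (0, 0) (0, ((k : ℕ) : Fin n)) := by
    intro k
    induction k with
    | zero => rw [Nat.cast_zero]
    | succ k ih =>
      have hk : (((k + 1 : ℕ)) : Fin n) = ((k : ℕ) : Fin n) + 1 := by push_cast; ring
      have hmid : (zig n a).Adj (a + ((((k : ℕ) : Fin n) : ℕ) : Fin 2), ((k : ℕ) : Fin n))
          (a + ((((k : ℕ) : Fin n) : ℕ) : Fin 2), ((k : ℕ) : Fin n) + 1) :=
        (zig_adj_right hn a _ _).mpr rfl
      refine ih.trans ((hreach0 _ _ (a + ((((k : ℕ) : Fin n) : ℕ) : Fin 2))).trans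
        (hmid.reachable.trans ?_))
      rw [hk]
      exact hreach0 _ _ _
  have hall : ∀ x : Fin 2 × Fin n, (zig n a).Reachable (0, 0) x := by
    rintro ⟨i, j⟩
    have h := key j.val
    rw [Fin.cast_val_eq_self] at h
    exact h.trans (hreach0 j 0 i)
  have hconn : (zig n a).Connected := by
    rw [connected_iff]
    exact ⟨fun x y => (hall x).symm.trans (hall y), ⟨(0, 0)⟩⟩
  have hdeg : ∀ v, ((zig n a).neighborSet v).ncard = 2 := by
    rintro ⟨i, j⟩
    rw [nbhd_eq hn hle i j, ncard_filter_triple _ _ _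
      (fun h => fin2_add_one_ne i (congrArg Prod.fst h))
      (fun h => fin2_add_one_ne i (congrArg Prod.fst h))
      (fun h => add_one_ne_sub_one hn j (congrArg Prod.snd h).symm)]
    rw [if_pos ((zig_adj hn a (i, j) (i + 1, j)).mpr (Or.inl ⟨rfl, (fin2_add_one_ne i).symm⟩))]
    rcases fin2_cases' i (a + ((j : ℕ) : Fin 2)) with ⟨hz, hz'⟩ | ⟨hz, hz'⟩
    · rw [if_neg (by rw [zig_adj_left hn hn2]; exact hz'),
        if_pos ((zig_adj_right hn a i j).mpr hz)]
    · rw [if_pos (by rw [zig_adj_left hn hn2]; exact hz'),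
        if_neg (by rw [zig_adj_right hn a i j]; exact hz)]
  refine ⟨⟨hle, hconn, hdeg⟩, ?_⟩
  rw [IsContractible, crossNum]
  have hset : {i : Fin 2 | (zig n a).Adj (i, -1) (i, 0)}
      = {a + ((((-1 : Fin n)) : ℕ) : Fin 2)} := by
    ext i
    simp only [Set.mem_setOf_eq, Set.mem_singleton_iff]
    have h := zig_adj_right hn a i (-1)
    rw [neg_add_cancel] at h
    exact h
  rw [hset, Set.ncard_singleton]
  decide

end Zig

section Unique

variable {n : ℕ} [NeZero n]

lemma unique_zig (hn : 3 ≤ n) (H : SimpleGraph (Fin 2 × Fin n))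
    (hH : IsHamCycleSub (cylGraph 2 n) H ∧ ¬ IsContractible 2 n H) :
    2 ∣ n ∧ ∃ a : Fin 2, H = zig n a := by
  classical
  obtain ⟨⟨hle, hconn, hdeg⟩, hnc⟩ := hH
  set A : Fin 2 → Fin n → Prop := fun i j => H.Adj (i, j) (i, j + 1) with hA
  set c : Fin n → ℕ := fun j => {i : Fin 2 | A i j}.ncard with hc
  have hcval : ∀ j, c j = (if A 0 j then 1 else 0) + (if A 1 j then 1 else 0) :=
    fun j => ncard_setOf_fin2 _
  have hstar' : ∀ (i : Fin 2) (j : Fin n),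
      (if H.Adj (0, j) (1, j) then 1 else 0) + (if A i (j - 1) then 1 else 0)
        + (if A i j then 1 else 0) = 2 := by
    intro i j
    have h1 := star_eq hn hle hdeg i j
    have e1 : H.Adj (i, j) (i + 1, j) ↔ H.Adj (0, j) (1, j) := by
      rcases fin2_cases i with rfl | rfl
      · rw [show ((0 : Fin 2) + 1) = 1 from rfl]
      · rw [show ((1 : Fin 2) + 1) = 0 from rfl]
        exact H.adj_comm _ _
    have e2 : H.Adj (i, j) (i, j - 1) ↔ A i (j - 1) := by
      rw [hA]
      simp only
      rw [sub_add_cancel]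
      exact H.adj_comm _ _
    rw [e1, e2] at h1
    exact h1
  have hsum : ∀ j : Fin n,
      2 * (if H.Adj (0, j) (1, j) then 1 else 0) + (c (j - 1) + c j) = 4 := by
    intro j
    have h0 := hstar' 0 j
    have h1 := hstar' 1 j
    rw [hcval, hcval]
    omega
  have hcross : crossNum 2 n H = c (-1) := by
    rw [crossNum, hc]
    congr 1
    ext i
    simp only [Set.mem_setOf_eq, hA]
    rw [neg_add_cancel]
  have hoddc : c (-1) % 2 = 1 := by
    have h := hnc
    rw [IsContractible, Nat.even_iff] at h
    rw [← hcross]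
    omega
  have hstep2 : ∀ j : Fin n, c (j + 1) % 2 = c j % 2 := by
    intro j
    have h := hsum (j + 1)
    rw [add_sub_cancel_right] at h
    omega
  have hallodd : ∀ j : Fin n, c j % 2 = 1 := by
    have aux : ∀ k : ℕ, c (-1 + (k : Fin n)) % 2 = 1 := by
      intro k
      induction k with
      | zero => simpa using hoddc
      | succ k ih =>
        have hk : ((k + 1 : ℕ) : Fin n) = ((k : ℕ) : Fin n) + 1 := by push_cast; ring
        rw [hk, ← add_assoc, hstep2]
        exact ih
    intro j
    have h := aux (j.val + 1)
    have he : (-1 : Fin n) + ((j.val + 1 : ℕ) : Fin n) = j := by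
      push_cast
      ring
    rwa [he] at h
  have hc1 : ∀ j, c j = 1 := by
    intro j
    have h1 := hcval j
    have h2 := hallodd j
    have b0 : (if A 0 j then 1 else 0) ≤ 1 := by split_ifs <;> omega
    have b1 : (if A 1 j then 1 else 0) ≤ 1 := by split_ifs <;> omega
    omega
  have hrung : ∀ j, H.Adj (0, j) (1, j) := by
    intro j
    have h := hsum j
    rw [hc1, hc1] at h
    by_contra hcon
    rw [if_neg hcon] at h
    omega
  have hex : ∀ j : Fin n, ∃ a, {i : Fin 2 | A i j} = {a} :=
    fun j => Set.ncard_eq_one.mp (hc1 j)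
  choose s hs using hex
  have hsA : ∀ i j, A i j ↔ i = s j := by
    intro i j
    constructor
    · intro h
      have hm : i ∈ {i : Fin 2 | A i j} := h
      rw [hs j] at hm
      exact hm
    · intro h
      have hm : i ∈ ({s j} : Set (Fin 2)) := h
      rw [← hs j] at hm
      exact hm
  have hrung' : ∀ (i : Fin 2) (j : Fin n), H.Adj (i, j) (i + 1, j) := by
    intro i j
    rcases fin2_cases i with rfl | rfl
    · rw [show ((0 : Fin 2) + 1) = 1 from rfl]
      exact hrung j
    · rw [show ((1 : Fin 2) + 1) = 0 from rfl]
      exact (hrung j).symm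
  have hstep : ∀ j : Fin n, s (j + 1) = s j + 1 := by
    intro j
    have h := hstar' (s j) (j + 1)
    rw [add_sub_cancel_right] at h
    rw [if_pos (hrung (j + 1)), if_pos ((hsA _ _).mpr rfl)] at h
    have hnotA : ¬ A (s j) (j + 1) := by
      intro hA2
      rw [if_pos hA2] at h
      omega
    have hne2 : s j ≠ s (j + 1) := fun he => hnotA ((hsA _ _).mpr he)
    exact (fin2_ne_iff _ _).mp hne2
  have hlin : ∀ k : ℕ, s ((k : ℕ) : Fin n) = s 0 + ((k : ℕ) : Fin 2) := by
    intro k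
    induction k with
    | zero => simp
    | succ k ih =>
      have hk : ((k + 1 : ℕ) : Fin n) = ((k : ℕ) : Fin n) + 1 := by push_cast; ring
      rw [hk, hstep, ih]
      push_cast
      ring
  have hdvd : 2 ∣ n := by
    have h := hlin n
    rw [Fin.natCast_self] at h
    have h2 : ((n : ℕ) : Fin 2) = 0 := (add_eq_left).mp h.symm
    exact Fin.natCast_eq_zero.mp h2
  have hsj : ∀ j : Fin n, s j = s 0 + ((j : ℕ) : Fin 2) := by
    intro j
    have h := hlin j.val
    rwa [Fin.cast_val_eq_self] at h
  refine ⟨hdvd, s 0, ?_⟩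
  ext ⟨i, j⟩ ⟨i', j'⟩
  rw [zig_adj hn]
  constructor
  · intro h
    rcases (cyl_adj hn _ _).mp (hle h) with ⟨h1, h2⟩ | ⟨h1, h2⟩
    · exact Or.inl ⟨h1, h2⟩
    · refine Or.inr ⟨h1, ?_⟩
      simp only at h1
      subst h1
      rcases h2 with h2 | h2
      · left
        simp only at h2
        subst h2
        refine ⟨rfl, ?_⟩
        rw [← hsj]
        exact (hsA i j).mp h
      · right
        simp only at h2
        subst h2
        refine ⟨rfl, ?_⟩
        rw [← hsj]
        exact (hsA i j').mp h.symm
  · rintro (⟨h1, h2⟩ | ⟨h1, (⟨h2, h3⟩ | ⟨h2, h3⟩)⟩)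
    · simp only at h1 h2
      subst h1
      rw [(fin2_ne_iff i i').mp h2]
      exact hrung' i j
    · simp only at h1 h2 h3
      subst h1
      subst h2
      exact (hsA i j).mpr (by rw [hsj]; exact h3)
    · simp only at h1 h2 h3
      subst h1
      subst h2
      exact ((hsA i j').mpr (by rw [hsj]; exact h3)).symm

end Unique

/-- The number of non-contractible Hamiltonian cycles of `P_2 × C_n` (n ≥ 3)
equals 2 if `n` is even and 0 if `n` is odd. -/
theorem noncontractible_ham_cycles_prism (n : ℕ) [NeZero n] (hn : 3 ≤ n) :
    Nat.card {H : SimpleGraph (Fin 2 × Fin n) //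
        IsHamCycleSub (cylGraph 2 n) H ∧ ¬ IsContractible 2 n H}
      = if Even n then 2 else 0 := by
  by_cases hn2 : Even n
  · rw [if_pos hn2]
    have hdvd : 2 ∣ n := hn2.two_dvd
    have hne : zig n (0 : Fin 2) ≠ zig n (1 : Fin 2) := by
      intro h
      have h0 : (zig n (0:Fin 2)).Adj (0, (0:Fin n)) (0, (0:Fin n) + 1) := by
        rw [zig_adj_right hn]; simp
      rw [h, zig_adj_right hn] at h0
      simp at h0
    have hset : {H : SimpleGraph (Fin 2 × Fin n) |
        IsHamCycleSub (cylGraph 2 n) H ∧ ¬ IsContractible 2 n H}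
        = {zig n 0, zig n 1} := by
      ext H
      constructor
      · intro hH
        obtain ⟨-, a, rfl⟩ := unique_zig hn H hH
        have h01 : ∀ b : Fin 2, b = 0 ∨ b = 1 := by decide
        rcases h01 a with rfl | rfl
        · exact Set.mem_insert _ _
        · exact Set.mem_insert_of_mem _ rfl
      · rintro (rfl | rfl) <;> exact zig_mem hn hdvd _
    calc Nat.card {H : SimpleGraph (Fin 2 × Fin n) //
        IsHamCycleSub (cylGraph 2 n) H ∧ ¬ IsContractible 2 n H}
        = ({H : SimpleGraph (Fin 2 × Fin n) |
            IsHamCycleSub (cylGraph 2 n) H ∧ ¬ IsContractible 2 n H} : Set _).ncard := by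
          rw [← Nat.card_coe_set_eq]; rfl
      _ = 2 := by rw [hset, Set.ncard_pair hne]
  · rw [if_neg hn2]
    rw [Nat.card_eq_zero]
    left
    constructor
    rintro ⟨H, hH⟩
    obtain ⟨hdvd, -⟩ := unique_zig hn H hH
    exact hn2 (even_iff_two_dvd.mpr hdvd)
end

section
/- For every integer m ≥ 2 that is even and every odd integer n ≥ 3, the number of contractible Hamiltonian cycles in P_{m+1} × C_n is zero. -/
open SimpleGraph

/-! ### Auxiliary lemmas for the parity argument -/

open Finset

/-- A fixed-point-free symmetric set of ordered pairs has even cardinality. -/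
lemma even_card_symm_pairs {V : Type*} [Fintype V] (B : Finset (V × V))
    (hsymm : ∀ p ∈ B, (p.2, p.1) ∈ B) (hirr : ∀ p ∈ B, p.1 ≠ p.2) : Even B.card := by
  classical
  set e := Fintype.equivFin V with he
  have hsplit : B.filter (fun p => e p.1 < e p.2) ∪ B.filter (fun p => e p.2 < e p.1) = B := by
    ext p
    simp only [mem_union, mem_filter]
    constructor
    · rintro (h | h) <;> exact h.1
    · intro hp
      rcases lt_or_gt_of_ne (fun h : e p.1 = e p.2 => hirr p hp (e.injective h)) with h | h
      · exact Or.inl ⟨hp, h⟩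
      · exact Or.inr ⟨hp, h⟩
  have hdisj : Disjoint (B.filter (fun p => e p.1 < e p.2))
      (B.filter (fun p => e p.2 < e p.1)) := by
    rw [Finset.disjoint_left]
    intro p h1 h2
    simp only [mem_filter] at h1 h2
    exact absurd h2.2 (not_lt.mpr h1.2.le)
  have hcard : (B.filter (fun p => e p.1 < e p.2)).card =
      (B.filter (fun p => e p.2 < e p.1)).card := by
    apply Finset.card_bij (fun p _ => (p.2, p.1))
    · intro p hp
      simp only [mem_filter] at hp ⊢
      exact ⟨hsymm p hp.1, hp.2⟩
    · intro p₁ _ p₂ _ h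
      exact Prod.ext (congrArg Prod.snd h) (congrArg Prod.fst h)
    · intro p hp
      simp only [mem_filter] at hp
      exact ⟨(p.2, p.1), by simpa using ⟨hsymm p hp.1, hp.2⟩, rfl⟩
  rw [← hsplit, Finset.card_union_of_disjoint hdisj, ← hcard]
  exact ⟨_, rfl⟩

lemma card_adj_filter {V : Type*} [Fintype V] [DecidableEq V] (H : SimpleGraph V)
    [DecidableRel H.Adj] (s : V → Prop) [DecidablePred s] :
    #(univ.filter fun p : V × V => H.Adj p.1 p.2 ∧ s p.1) = ∑ v ∈ univ.filter s, H.degree v := by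
  rw [Finset.card_eq_sum_card_fiberwise (f := Prod.fst) (t := univ.filter s)
    (fun p hp => by simp only [mem_coe, mem_filter] at hp ⊢; exact ⟨mem_univ _, hp.2.2⟩)]
  refine Finset.sum_congr rfl fun v hv => ?_
  simp only [mem_filter] at hv
  rw [← card_neighborFinset_eq_degree]
  apply Finset.card_bij (fun p _ => p.2)
  · intro p hp
    simp only [mem_filter, mem_neighborFinset] at hp ⊢
    exact hp.2 ▸ hp.1.2.1
  · intro p₁ h₁ p₂ h₂ h
    simp only [mem_filter] at h₁ h₂
    exact Prod.ext (h₁.2.trans h₂.2.symm) h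
  · intro w hw
    simp only [mem_neighborFinset] at hw
    exact ⟨(v, w), by simp [hw, hv.2], rfl⟩

/-- In a graph where every vertex has degree two, every edge cut is even. -/
lemma even_cut {V : Type*} [Fintype V] [DecidableEq V] (H : SimpleGraph V)
    [DecidableRel H.Adj] (hdeg : ∀ v, H.degree v = 2) (s : V → Prop) [DecidablePred s] :
    Even #(univ.filter fun p : V × V => H.Adj p.1 p.2 ∧ s p.1 ∧ ¬ s p.2) := by
  classical
  set A1 : Finset (V × V) := univ.filter (fun p => H.Adj p.1 p.2 ∧ s p.1) with hA1
  have htot : Even A1.card := by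
    rw [hA1, card_adj_filter H s]
    simp only [hdeg]
    rw [Finset.sum_const, smul_eq_mul]
    exact ⟨_, by ring⟩
  have hsplit := Finset.card_filter_add_card_filter_not (s := A1)
    (fun p : V × V => s p.2)
  have hin : Even (A1.filter (fun p => s p.2)).card := by
    apply even_card_symm_pairs
    · intro p hp
      simp only [hA1, mem_filter, mem_univ, true_and] at hp ⊢
      exact ⟨⟨hp.1.1.symm, hp.2⟩, hp.1.2⟩
    · intro p hp
      simp only [hA1, mem_filter] at hp
      exact hp.1.2.1.ne
  have heq : A1.filter (fun p => ¬ s p.2) =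
      univ.filter fun p : V × V => H.Adj p.1 p.2 ∧ s p.1 ∧ ¬ s p.2 := by
    rw [hA1, Finset.filter_filter]
    exact Finset.filter_congr fun p _ => by tauto
  rw [← heq]
  rcases Nat.even_add.mp (hsplit ▸ htot) with h
  exact h.mp hin

/-- vertical upward oriented pair -/
def UpP {m n : ℕ} (p : (Fin m × Fin n) × (Fin m × Fin n)) : Prop :=
  ((p.2).1 : ℕ) = ((p.1).1 : ℕ) + 1 ∧ (p.2).2 = (p.1).2

/-- horizontal rightward oriented pair -/
def RtP {m n : ℕ} [NeZero n] (p : (Fin m × Fin n) × (Fin m × Fin n)) : Prop :=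
  (p.2).1 = (p.1).1 ∧ (p.2).2 = (p.1).2 + 1

lemma fin_succ_val {N : ℕ} (a : Fin (N + 1)) :
    ((a + 1 : Fin (N + 1)) : ℕ) = (a : ℕ) + 1 ∨
      ((a : ℕ) = N ∧ ((a + 1 : Fin (N + 1)) : ℕ) = 0) := by
  rw [Fin.val_add_one]
  split
  · rename_i h; right; exact ⟨by rw [h, Fin.val_last], rfl⟩
  · left; rfl

lemma fin_step {N : ℕ} {a b : Fin (N + 1)} (h : b = a + 1) :
    (b : ℕ) = (a : ℕ) + 1 ∨ ((a : ℕ) = N ∧ (b : ℕ) = 0) := by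
  subst h; exact fin_succ_val a

lemma shape {m k : ℕ} {H : SimpleGraph (Fin (m + 1) × Fin (k + 3))}
    (hle : H ≤ cylGraph (m + 1) (k + 3))
    {p : (Fin (m + 1) × Fin (k + 3)) × (Fin (m + 1) × Fin (k + 3))}
    (h : H.Adj p.1 p.2) : UpP p ∨ UpP p.swap ∨ RtP p ∨ RtP p.swap := by
  have hc : (cylGraph (m + 1) (k + 3)).Adj p.1 p.2 := hle h
  rcases boxProd_adj.mp hc with ⟨hv, hcol⟩ | ⟨hh, hrow⟩
  · rcases pathGraph_adj.mp hv with h1 | h1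
    · exact Or.inl ⟨h1.symm, hcol.symm⟩
    · exact Or.inr <| Or.inl ⟨h1.symm, hcol⟩
  · rcases (cycleGraph_adj (n := k + 1)).mp hh with h1 | h1
    · refine Or.inr <| Or.inr <| Or.inr ⟨hrow, ?_⟩
      rw [sub_eq_iff_eq_add] at h1
      show p.1.2 = p.2.2 + 1
      rw [h1]; exact add_comm 1 _
    · refine Or.inr <| Or.inr <| Or.inl ⟨hrow.symm, ?_⟩
      rw [sub_eq_iff_eq_add] at h1
      rw [h1]; exact add_comm 1 _

/-- An adjacent pair cannot be oriented in two ways at once. -/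
lemma excl {m k : ℕ} (p : (Fin (m + 1) × Fin (k + 3)) × (Fin (m + 1) × Fin (k + 3))) :
    ¬((UpP p ∨ RtP p) ∧ (UpP p.swap ∨ RtP p.swap)) := by
  rintro ⟨h1 | h1, h2 | h2⟩
  · have e1 := h1.1; have e2 := h2.1; simp only [Prod.fst_swap, Prod.snd_swap] at e2; omega
  · have e1 := h1.1
    have e2 : ((p.1).1 : ℕ) = ((p.2).1 : ℕ) := congrArg Fin.val h2.1
    omega
  · have e1 : ((p.2).1 : ℕ) = ((p.1).1 : ℕ) := congrArg Fin.val h1.1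
    have e2 := h2.1; simp only [Prod.fst_swap, Prod.snd_swap] at e2; omega
  · have e1 := h1.2
    have e2 := h2.2
    simp only [Prod.fst_swap, Prod.snd_swap] at e2
    -- p.2.2 = p.1.2 + 1 and p.1.2 = p.2.2 + 1
    have s1 := fin_step (N := k + 2) e1
    have s2 := fin_step (N := k + 2) e2
    omega

/-- For even `m ≥ 2` and odd `n ≥ 3`, there are no contractible Hamiltonian cycles
in `P_{m+1} × C_n`. -/
theorem no_contractible_ham_cycles_even_odd (m n : ℕ) [NeZero n]
    (hm2 : 2 ≤ m) (hme : Even m) (hn3 : 3 ≤ n) (hno : Odd n) :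
    Nat.card {H : SimpleGraph (Fin (m + 1) × Fin n) //
        IsHamCycleSub (cylGraph (m + 1) n) H ∧ IsContractible (m + 1) n H} = 0 := by
  rw [Nat.card_eq_zero]
  left
  refine ⟨?_⟩
  rintro ⟨H, hH, hC⟩
  obtain ⟨k, rfl⟩ : ∃ k, n = k + 3 := ⟨n - 3, by omega⟩
  unfold IsHamCycleSub at hH
  unfold IsContractible at hC
  obtain ⟨hle, -, hdeg2⟩ := hH
  classical
  have hdeg : ∀ v, H.degree v = 2 := fun v => by
    have h2 := hdeg2 v
    rwa [Set.ncard_eq_toFinset_card', ← SimpleGraph.neighborFinset_def] at h2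
  set A := univ.filter (fun p : (Fin (m+1) × Fin (k+3)) × (Fin (m+1) × Fin (k+3)) =>
      H.Adj p.1 p.2) with hA
  set PU := univ.filter (fun p : (Fin (m+1) × Fin (k+3)) × (Fin (m+1) × Fin (k+3)) =>
      H.Adj p.1 p.2 ∧ UpP p) with hPU
  set PR := univ.filter (fun p : (Fin (m+1) × Fin (k+3)) × (Fin (m+1) × Fin (k+3)) =>
      H.Adj p.1 p.2 ∧ RtP p) with hPR
  set W := univ.filter (fun p : (Fin (m+1) × Fin (k+3)) × (Fin (m+1) × Fin (k+3)) =>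
      H.Adj p.1 p.2 ∧ ((p.1).2 : ℕ) = 0 ∧ ((p.2).2 : ℕ) = k + 2) with hW
  -- step 1: total count of adjacent ordered pairs
  have hA_card : #A = 2 * ((m + 1) * (k + 3)) := by
    have h := card_adj_filter H (fun _ => True)
    simp only [and_true, Finset.filter_true, hdeg, Finset.sum_const, smul_eq_mul,
      Finset.card_univ, Fintype.card_prod, Fintype.card_fin] at h
    rw [hA]
    rw [h]  -- may fail on instances
    ring
  -- step 2: each edge has exactly one canonical orientation
  have hA_split : #A = 2 * (#PU + #PR) := by
    have hsplit := Finset.card_filter_add_card_filter_not (s := A)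
      (fun p => UpP p ∨ RtP p)
    have hUnion : A.filter (fun p => UpP p ∨ RtP p) = PU ∪ PR := by
      rw [hA, Finset.filter_filter, hPU, hPR, ← Finset.filter_or]
      exact Finset.filter_congr fun p _ => by tauto
    have hDisj : Disjoint PU PR := by
      rw [Finset.disjoint_left]; intro p h1 h2
      simp only [hPU, hPR, mem_filter] at h1 h2
      have e1 := h1.2.2.1
      have e2 : ((p.2).1 : ℕ) = ((p.1).1 : ℕ) := congrArg Fin.val h2.2.2.1
      omega
    have hNeg : #(A.filter (fun p => ¬(UpP p ∨ RtP p))) = #(A.filter (fun p => UpP p ∨ RtP p)) := by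
      apply Finset.card_bij (fun p _ => p.swap)
      · intro p hp
        simp only [hA, mem_filter, mem_univ, true_and] at hp ⊢
        obtain ⟨hadj, hnot⟩ := hp
        refine ⟨hadj.symm, ?_⟩
        rcases shape hle hadj with h | h | h | h
        · exact absurd (Or.inl h) hnot
        · exact Or.inl h
        · exact absurd (Or.inr h) hnot
        · exact Or.inr h
      · intro p1 _ p2 _ h; exact Prod.swap_injective h
      · intro p hp
        simp only [hA, mem_filter, mem_univ, true_and] at hp
        refine ⟨p.swap, ?_, Prod.swap_swap p⟩
        simp only [hA, mem_filter, mem_univ, true_and, Prod.fst_swap, Prod.snd_swap,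
          Prod.swap_swap]
        exact ⟨hp.1.symm, fun hcon => excl p ⟨hp.2, by simpa [Prod.swap_swap] using hcon⟩⟩
    rw [← hsplit, hNeg, hUnion, Finset.card_union_of_disjoint hDisj]
    ring
  -- step 3: the meridian crossing number
  have hform : ∀ p ∈ W, p = (((p.1).1, (0 : Fin (k + 3))), ((p.1).1, (-1 : Fin (k + 3)))) := by
    intro p hp
    simp only [hW, mem_filter, mem_univ, true_and] at hp
    obtain ⟨hadj, h0, h2⟩ := hp
    have hc0 : (p.1).2 = (0 : Fin (k + 3)) := Fin.val_inj.mp (by simpa using h0)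
    have hc1 : (p.2).2 = (-1 : Fin (k + 3)) := Fin.val_inj.mp (by rw [Fin.coe_neg_one]; exact h2)
    have hrow : (p.2).1 = (p.1).1 := by
      rcases shape hle hadj with h | h | h | h
      · have e := congrArg Fin.val h.2; rw [h0, h2] at e; omega
      · have e := h.2; simp only [Prod.fst_swap, Prod.snd_swap] at e
        have e' := congrArg Fin.val e; rw [h0, h2] at e'; omega
      · exact h.1
      · have e := h.1; simp only [Prod.fst_swap, Prod.snd_swap] at e; exact e.symm
    exact Prod.ext (Prod.ext rfl hc0) (Prod.ext hrow hc1)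
  have hW_card : #W = crossNum (m + 1) (k + 3) H := by
    have hset : crossNum (m + 1) (k + 3) H =
        #(univ.filter fun i : Fin (m + 1) => H.Adj (i, -1) (i, 0)) := by
      rw [crossNum, Set.ncard_eq_toFinset_card']
      simp [Set.toFinset_setOf]
    rw [hset]
    apply Finset.card_bij (fun p _ => (p.1).1)
    · intro p hp
      simp only [mem_filter, mem_univ, true_and]
      have hf := hform p hp
      simp only [hW, mem_filter, mem_univ, true_and] at hp
      have hadj := hp.1.symm
      rw [hf] at hadj
      simpa using hadj
    · intro p1 h1 p2 h2 h
      rw [hform p1 h1, hform p2 h2, h]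
    · intro i hi
      simp only [mem_filter, mem_univ, true_and] at hi
      refine ⟨((i, (0 : Fin (k + 3))), (i, (-1 : Fin (k + 3)))), ?_, rfl⟩
      simp only [hW, mem_filter, mem_univ, true_and]
      exact ⟨hi.symm, by simp, by simp [Fin.coe_neg_one]⟩
  have hW_even : Even #W := hW_card ▸ hC
  -- step 4: vertical edges
  have hPU_even : Even #PU := by
    rw [Finset.card_eq_sum_card_fiberwise (f := fun p => ((p.1).1 : ℕ))
      (t := Finset.range (m + 1)) (fun p _ => Finset.mem_range.mpr (p.1).1.isLt)]
    apply Finset.sum_induction _ _ (fun a b ha hb => ha.add hb) Even.zero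
    intro i _
    have hcut := even_cut H hdeg (fun v : Fin (m + 1) × Fin (k + 3) => (v.1 : ℕ) ≤ i)
    have heq : PU.filter (fun p => ((p.1).1 : ℕ) = i) =
        univ.filter (fun p : (Fin (m + 1) × Fin (k + 3)) × (Fin (m + 1) × Fin (k + 3)) =>
          H.Adj p.1 p.2 ∧ ((p.1).1 : ℕ) ≤ i ∧ ¬ ((p.2).1 : ℕ) ≤ i) := by
      rw [hPU, Finset.filter_filter]
      apply Finset.filter_congr
      intro p _
      constructor
      · rintro ⟨⟨hadj, hup⟩, hi⟩
        have e := hup.1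
        exact ⟨hadj, by omega, by omega⟩
      · rintro ⟨hadj, h1, h2⟩
        rcases shape hle hadj with h | h | h | h
        · exact ⟨⟨hadj, h⟩, by have := h.1; omega⟩
        · exfalso; have e := h.1; simp only [Prod.fst_swap, Prod.snd_swap] at e; omega
        · exfalso; have e := congrArg Fin.val h.1; omega
        · exfalso; have e := h.1; simp only [Prod.fst_swap, Prod.snd_swap] at e
          have e' := congrArg Fin.val e; omega
    rw [heq]
    exact hcut
  -- step 5: horizontal edges
  have hPR_even : Even #PR := by
    rw [Finset.card_eq_sum_card_fiberwise (f := fun p => ((p.1).2 : ℕ))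
      (t := Finset.range (k + 3)) (fun p _ => Finset.mem_range.mpr (p.1).2.isLt)]
    apply Finset.sum_induction _ _ (fun a b ha hb => ha.add hb) Even.zero
    intro j hj
    rw [Finset.mem_range] at hj
    by_cases hjtop : j = k + 2
    · -- top fiber is in bijection with the meridian set `W`
      have hbij : #(PR.filter (fun p => ((p.1).2 : ℕ) = j)) = #W := by
        apply Finset.card_bij (fun p _ => p.swap)
        · intro p hp
          simp only [hPR, hW, mem_filter, mem_univ, true_and, Prod.fst_swap,
            Prod.snd_swap] at hp ⊢
          obtain ⟨⟨hadj, hrt⟩, hcol⟩ := hp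
          have hs := fin_step (N := k + 2) hrt.2
          have hlt := (p.2).2.isLt
          exact ⟨hadj.symm, by omega, by omega⟩
        · intro p1 _ p2 _ h; exact Prod.swap_injective h
        · intro q hq
          refine ⟨q.swap, ?_, Prod.swap_swap q⟩
          simp only [hPR, hW, mem_filter, mem_univ, true_and, Prod.fst_swap,
            Prod.snd_swap] at hq ⊢
          obtain ⟨hadj, h0, h2⟩ := hq
          have hr : RtP q.swap := by
            rcases shape hle hadj with h | h | h | h
            · exfalso; have e := congrArg Fin.val h.2; omega
            · exfalso; have e := h.2; simp only [Prod.fst_swap, Prod.snd_swap] at e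
              have e' := congrArg Fin.val e; omega
            · exfalso
              have hs := fin_step (N := k + 2) h.2
              omega
            · exact h
          exact ⟨⟨hadj.symm, hr⟩, by omega⟩
      rw [hbij]
      exact hW_even
    · -- inner fibers: compare with the column cut at `j`, which also contains `W`
      have hcut := even_cut H hdeg (fun v : Fin (m + 1) × Fin (k + 3) => (v.2 : ℕ) ≤ j)
      have hsplitW : (univ.filter (fun p : (Fin (m + 1) × Fin (k + 3)) ×
            (Fin (m + 1) × Fin (k + 3)) =>
            H.Adj p.1 p.2 ∧ ((p.1).2 : ℕ) ≤ j ∧ ¬ ((p.2).2 : ℕ) ≤ j)) =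
          PR.filter (fun p => ((p.1).2 : ℕ) = j) ∪ W := by
        ext p
        simp only [hPR, hW, mem_union, mem_filter, mem_univ, true_and, Finset.filter_filter]
        constructor
        · rintro ⟨hadj, h1, h2⟩
          rcases shape hle hadj with h | h | h | h
          · exfalso; have e := congrArg Fin.val h.2; omega
          · exfalso; have e := h.2; simp only [Prod.fst_swap, Prod.snd_swap] at e
            have e' := congrArg Fin.val e; omega
          · have hs := fin_step (N := k + 2) h.2
            exact Or.inl ⟨⟨hadj, h⟩, by omega⟩
          · have e := h.2; simp only [Prod.fst_swap, Prod.snd_swap] at e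
            have hs := fin_step (N := k + 2) e
            exact Or.inr ⟨hadj, by omega, by omega⟩
        · rintro (⟨⟨hadj, hrt⟩, hcol⟩ | ⟨hadj, h0, h2⟩)
          · have hs := fin_step (N := k + 2) hrt.2
            exact ⟨hadj, by omega, by omega⟩
          · exact ⟨hadj, by omega, by omega⟩
      have hdisjW : Disjoint (PR.filter (fun p => ((p.1).2 : ℕ) = j)) W := by
        rw [Finset.disjoint_left]
        intro p h1 h2
        simp only [hPR, hW, mem_filter, mem_univ, true_and] at h1 h2
        obtain ⟨⟨hadj, hrt⟩, hcol⟩ := h1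
        obtain ⟨-, h0, hk2⟩ := h2
        have hs := fin_step (N := k + 2) hrt.2
        omega
      rw [hsplitW, Finset.card_union_of_disjoint hdisjW] at hcut
      exact (Nat.even_add.mp hcut).mpr hW_even
  -- conclusion
  have hodd : Odd ((m + 1) * (k + 3)) := (hme.add_one).mul hno
  rw [hA_card] at hA_split
  have : (m + 1) * (k + 3) = #PU + #PR := by omega
  rw [this] at hodd
  exact (Nat.not_even_iff_odd.mpr hodd) (hPU_even.add hPR_even)
end

section
/- The number of color words of length k equals the k-th Catalan number C_k = (1/(k+1))·binom(2k,k). -/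
/-- Property P1: if a letter `s ≥ 3` occurs, then every letter `t` with `2 ≤ t < s`
occurs before the first occurrence of `s`. -/
def WordP1 {k : ℕ} (w : Fin k → ℕ) : Prop :=
  ∀ i : Fin k, ∀ t : ℕ, 2 ≤ t → t < w i → ∃ j : Fin k, j < i ∧ w j = t

/-- Property P2: no interlocking subsequence `a, b, a, b` with `a ≠ b`. -/
def WordP2 {k : ℕ} (w : Fin k → ℕ) : Prop :=
  ∀ i1 i2 i3 i4 : Fin k, i1 < i2 → i2 < i3 → i3 < i4 →
    w i1 = w i3 → w i2 = w i4 → w i1 = w i2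

/-- Property P3: no subsequence `a, 1, a` with `a ≠ 1`. -/
def WordP3 {k : ℕ} (w : Fin k → ℕ) : Prop :=
  ∀ i1 i2 i3 : Fin k, i1 < i2 → i2 < i3 → w i1 = w i3 → w i2 = 1 → w i1 = 1

namespace ColorWords

open List

def GrowAux : ℕ → List ℕ → Prop
  | _, [] => True
  | M, a :: l => 2 ≤ a ∧ a ≤ M + 1 ∧ GrowAux (max M a) l

@[simp] lemma grow_nil (M : ℕ) : GrowAux M [] := trivial

@[simp] lemma grow_cons {M a : ℕ} {l : List ℕ} :
    GrowAux M (a :: l) ↔ 2 ≤ a ∧ a ≤ M + 1 ∧ GrowAux (max M a) l := Iff.rfl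

def NoCross (l : List ℕ) : Prop := ∀ a b : ℕ, a ≠ b → ¬ ([a, b, a, b] <+ l)

def Good (l : List ℕ) : Prop := GrowAux 1 l ∧ NoCross l

lemma base_le_fold (M : ℕ) (l : List ℕ) : M ≤ l.foldl max M := by
  induction l generalizing M with
  | nil => exact le_rfl
  | cons a l ih => exact le_trans (le_max_left M a) (ih _)

lemma le_fold {a : ℕ} {l : List ℕ} (h : a ∈ l) (M : ℕ) : a ≤ l.foldl max M := by
  induction l generalizing M with
  | nil => cases h
  | cons b l ih =>
    rcases mem_cons.1 h with rfl | h
    · exact le_trans (le_max_right M a) (base_le_fold _ _)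
    · exact ih h _

lemma fold_le {c M : ℕ} {l : List ℕ} (hM : M ≤ c) (h : ∀ a ∈ l, a ≤ c) : l.foldl max M ≤ c := by
  induction l generalizing M with
  | nil => exact hM
  | cons a l ih =>
    exact ih (max_le hM (h a (mem_cons_self))) (fun x hx => h x (mem_cons_of_mem _ hx))

lemma gaux_append {x y : List ℕ} {M : ℕ} :
    GrowAux M (x ++ y) ↔ GrowAux M x ∧ GrowAux (x.foldl max M) y := by
  induction x generalizing M with
  | nil => simp
  | cons a x ih => simp [ih, and_assoc]

lemma gaux_mem {M : ℕ} {l : List ℕ} (h : GrowAux M l) {a : ℕ} (ha : a ∈ l) : 2 ≤ a := by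
  induction l generalizing M with
  | nil => cases ha
  | cons b l ih =>
    rcases mem_cons.1 ha with rfl | ha
    · exact h.1
    · exact ih h.2.2 ha

lemma gaux_interval {M : ℕ} {l : List ℕ} (h : GrowAux M l) {c : ℕ} (h1 : M < c)
    (h2 : c ≤ l.foldl max M) : c ∈ l := by
  induction l generalizing M with
  | nil => simp only [foldl_nil] at h2; omega
  | cons a l ih =>
    obtain ⟨ha2, haM, hg⟩ := h
    simp only [foldl_cons] at h2
    by_cases hc : c ≤ max M a
    · have : c = a := by omega
      exact this ▸ mem_cons_self
    · exact mem_cons_of_mem _ (ih hg (by omega) h2)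

lemma gaux_fold_le {M : ℕ} {l : List ℕ} (h : GrowAux M l) : l.foldl max M ≤ M + l.length := by
  induction l generalizing M with
  | nil => simp
  | cons a l ih =>
    obtain ⟨_, haM, hg⟩ := h
    have := ih hg
    simp only [foldl_cons, length_cons]
    omega

lemma gaux_get {M : ℕ} {l : List ℕ} : GrowAux M l ↔
    ∀ (i : ℕ) (hi : i < l.length), 2 ≤ l[i] ∧ l[i] ≤ ((l.take i).foldl max M) + 1 := by
  induction l generalizing M with
  | nil => simp
  | cons a l ih =>
    simp only [grow_cons, ih]
    constructor
    · rintro ⟨h2, hle, h⟩ i hi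
      match i with
      | 0 => simpa using ⟨h2, hle⟩
      | j+1 =>
        have := h j (by simpa using hi)
        simpa using this
    · intro h
      refine ⟨by exact (h 0 (by simp)).1, by exact (h 0 (by simp)).2,
        fun j hj => ?_⟩
      have := h (j+1) (by simpa using hj)
      simpa using this


def shiftUp (s x : ℕ) : ℕ := if x = 2 then 2 else x + s
def shiftDown (s x : ℕ) : ℕ := if x = 2 then 2 else x - s

@[simp] lemma shiftUp_two (s : ℕ) : shiftUp s 2 = 2 := if_pos rfl
lemma shiftUp_ne {x : ℕ} (s : ℕ) (h : x ≠ 2) : shiftUp s x = x + s := if_neg h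
@[simp] lemma shiftDown_two (s : ℕ) : shiftDown s 2 = 2 := if_pos rfl
lemma shiftDown_ne {x : ℕ} (s : ℕ) (h : x ≠ 2) : shiftDown s x = x - s := if_neg h

section maps
variable {M s : ℕ} {l : List ℕ}

lemma gaux_map_add (h : GrowAux M l) : GrowAux (M + s) (l.map (· + s)) := by
  induction l generalizing M with
  | nil => simp
  | cons a l ih =>
    obtain ⟨h2, hle, hg⟩ := h
    simp only [map_cons]
    refine ⟨show 2 ≤ a + s from by omega, show a + s ≤ M + s + 1 from by omega, ?_⟩
    show GrowAux (max (M + s) (a + s)) _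
    rw [show max (M + s) (a + s) = max M a + s from by omega]
    exact ih hg

lemma gaux_map_sub_one (h : GrowAux M l) (hl : ∀ a ∈ l, 3 ≤ a) (hM : 1 ≤ M) :
    GrowAux (M - 1) (l.map (· - 1)) := by
  induction l generalizing M with
  | nil => simp
  | cons a l ih =>
    obtain ⟨h2, hle, hg⟩ := h
    have ha3 : 3 ≤ a := hl a (mem_cons_self)
    simp only [map_cons]
    refine ⟨show 2 ≤ a - 1 from by omega, show a - 1 ≤ M - 1 + 1 from by omega, ?_⟩
    show GrowAux (max (M - 1) (a - 1)) _
    rw [show max (M - 1) (a - 1) = max M a - 1 from by omega]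
    exact ih hg (fun x hx => hl x (mem_cons_of_mem _ hx)) (by omega)

lemma gaux_map_shiftDown (h : GrowAux M l) (hl : ∀ a ∈ l, a = 2 ∨ s + 3 ≤ a)
    (hM : s + 2 ≤ M) : GrowAux (M - s) (l.map (shiftDown s)) := by
  induction l generalizing M with
  | nil => simp
  | cons a l ih =>
    obtain ⟨h2, hle, hg⟩ := h
    have hmemtail : ∀ x ∈ l, x = 2 ∨ s + 3 ≤ x := fun x hx => hl x (mem_cons_of_mem _ hx)
    simp only [map_cons]
    rcases hl a (mem_cons_self) with rfl | ha
    · rw [shiftDown_two]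
      refine ⟨le_rfl, by omega, ?_⟩
      rw [show max (M - s) 2 = max M 2 - s from by omega]
      exact ih hg hmemtail (by omega)
    · rw [shiftDown_ne s (by omega : a ≠ 2)]
      refine ⟨by omega, by omega, ?_⟩
      rw [show max (M - s) (a - s) = max M a - s from by omega]
      exact ih hg hmemtail (by omega)

lemma gaux_map_shiftUp (h : GrowAux M l) (hM : 2 ≤ M) :
    GrowAux (M + s) (l.map (shiftUp s)) := by
  induction l generalizing M with
  | nil => simp
  | cons a l ih =>
    obtain ⟨h2, hle, hg⟩ := h
    simp only [map_cons]
    by_cases ha : a = 2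
    · subst ha
      rw [shiftUp_two]
      refine ⟨le_rfl, by omega, ?_⟩
      rw [show max (M + s) 2 = max M 2 + s from by omega]
      exact ih hg (by omega)
    · rw [shiftUp_ne s ha]
      have ha3 : 3 ≤ a := by omega
      refine ⟨by omega, by omega, ?_⟩
      rw [show max (M + s) (a + s) = max M a + s from by omega]
      exact ih hg (by omega)

lemma fold_map_add (s M : ℕ) (l : List ℕ) :
    (l.map (· + s)).foldl max (M + s) = l.foldl max M + s := by
  induction l generalizing M with
  | nil => rfl
  | cons a l ih =>
    simp only [map_cons, foldl_cons]
    rw [show max (M + s) ((· + s) a) = max M a + s from by show max (M+s) (a+s) = _; omega, ih]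

lemma fold_map_sub_one {M : ℕ} {l : List ℕ} (hl : ∀ a ∈ l, 1 ≤ a) (hM : 1 ≤ M) :
    (l.map (· - 1)).foldl max (M - 1) = l.foldl max M - 1 := by
  induction l generalizing M with
  | nil => rfl
  | cons a l ih =>
    simp only [map_cons, foldl_cons]
    have ha : 1 ≤ a := hl a (mem_cons_self)
    rw [show max (M - 1) ((· - 1) a) = max M a - 1 from by show max (M-1) (a-1) = _; omega]
    exact ih (fun x hx => hl x (mem_cons_of_mem _ hx)) (by omega)

lemma map_map_id {f g : ℕ → ℕ} {l : List ℕ} (h : ∀ a ∈ l, g (f a) = a) :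
    (l.map f).map g = l := by
  induction l with
  | nil => rfl
  | cons a l ih =>
    simp [h a (mem_cons_self), ih fun x hx => h x (mem_cons_of_mem _ hx)]

lemma noCross_sublist {l' l : List ℕ} (h : l' <+ l) (hn : NoCross l) : NoCross l' :=
  fun a b hab hs => hn a b hab (hs.trans h)

lemma noCross_map {f : ℕ → ℕ} {l : List ℕ}
    (hf : ∀ x ∈ l, ∀ y ∈ l, f x = f y → x = y) (h : NoCross l) : NoCross (l.map f) := by
  intro a b hab hs
  rw [sublist_map_iff] at hs
  obtain ⟨u, hu, hmap⟩ := hs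
  rcases u with _ | ⟨x1, u⟩; · simp at hmap
  rcases u with _ | ⟨x2, u⟩; · simp at hmap
  rcases u with _ | ⟨x3, u⟩; · simp at hmap
  rcases u with _ | ⟨x4, u⟩; · simp at hmap
  rcases u with _ | ⟨x5, u⟩
  swap; · simp at hmap
  simp only [map_cons, map_nil, cons.injEq, and_true] at hmap
  obtain ⟨e1, e2, e3, e4⟩ := hmap
  have m1 : x1 ∈ l := hu.subset (by simp)
  have m2 : x2 ∈ l := hu.subset (by simp)
  have m3 : x3 ∈ l := hu.subset (by simp)
  have m4 : x4 ∈ l := hu.subset (by simp)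
  have e13 : x1 = x3 := hf x1 m1 x3 m3 (by rw [← e1, ← e3])
  have e24 : x2 = x4 := hf x2 m2 x4 m4 (by rw [← e2, ← e4])
  have hne : x1 ≠ x2 := fun hx => hab (by rw [e1, hx, ← e2])
  rw [← e13, ← e24] at hu
  exact h x1 x2 hne hu

end maps

lemma quad_sublist_iff {l : List ℕ} {a b : ℕ} :
    [a, b, a, b] <+ l ↔ ∃ (i1 i2 i3 i4 : ℕ) (_ : i1 < i2) (_ : i2 < i3) (_ : i3 < i4)
      (h4 : i4 < l.length), l[i1]'(by omega) = a ∧ l[i2]'(by omega) = b ∧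
        l[i3]'(by omega) = a ∧ l[i4]'h4 = b := by
  constructor
  · intro h
    rw [sublist_iff_exists_fin_orderEmbedding_get_eq] at h
    obtain ⟨f, hf⟩ := h
    have hm : ∀ (p q : Fin ([a,b,a,b] : List ℕ).length), p < q → ((f p : Fin l.length) : ℕ) < f q :=
      fun p q hpq => f.strictMono hpq
    refine ⟨(f ⟨0, by norm_num⟩ : Fin l.length), f ⟨1, by norm_num⟩, f ⟨2, by norm_num⟩,
      f ⟨3, by norm_num⟩, hm _ _ (by norm_num [Fin.lt_def]), hm _ _ (by norm_num [Fin.lt_def]),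
      hm _ _ (by norm_num [Fin.lt_def]), (f ⟨3, by norm_num⟩).isLt, ?_, ?_, ?_, ?_⟩
    · have := (hf ⟨0, by norm_num⟩).symm
      simpa [List.get_eq_getElem] using this
    · have := (hf ⟨1, by norm_num⟩).symm
      simpa [List.get_eq_getElem] using this
    · have := (hf ⟨2, by norm_num⟩).symm
      simpa [List.get_eq_getElem] using this
    · have := (hf ⟨3, by norm_num⟩).symm
      simpa [List.get_eq_getElem] using this
  · rintro ⟨i1, i2, i3, i4, h12, h23, h34, h4, e1, e2, e3, e4⟩
    have d1 : l.drop i1 = a :: l.drop (i1 + 1) := by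
      rw [List.drop_eq_getElem_cons (by omega), e1]
    have d2 : l.drop i2 = b :: l.drop (i2 + 1) := by
      rw [List.drop_eq_getElem_cons (by omega), e2]
    have d3 : l.drop i3 = a :: l.drop (i3 + 1) := by
      rw [List.drop_eq_getElem_cons (by omega), e3]
    have d4 : l.drop i4 = b :: l.drop (i4 + 1) := by
      rw [List.drop_eq_getElem_cons h4, e4]
    have dmono : ∀ m n : ℕ, m ≤ n → l.drop n <+ l.drop m := by
      intro m n hmn
      have : l.drop n = (l.drop m).drop (n - m) := by
        rw [List.drop_drop]
        congr 1
        omega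
      rw [this]
      exact List.drop_sublist _ _
    have s4 : [b] <+ l.drop i4 := by
      rw [d4]
      exact (List.nil_sublist _).cons₂ b
    have s3 : [a, b] <+ l.drop i3 := by
      rw [d3]
      exact ((s4.trans (dmono _ _ h34)).cons₂ a)
    have s2 : [b, a, b] <+ l.drop i2 := by
      rw [d2]
      exact ((s3.trans (dmono _ _ h23)).cons₂ b)
    have s1 : [a, b, a, b] <+ l.drop i1 := by
      rw [d1]
      exact ((s2.trans (dmono _ _ h12)).cons₂ a)
    exact s1.trans (List.drop_sublist _ _)

lemma getElem_ofFn' {k : ℕ} (w : Fin k → ℕ) (i : ℕ) (h : i < (List.ofFn w).length) :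
    (List.ofFn w)[i] = w ⟨i, by simpa using h⟩ := by
  simp [List.getElem_ofFn]


lemma good_ofFn_iff {k : ℕ} (w : Fin k → ℕ) :
    Good (List.ofFn w) ↔ ((∀ i, 2 ≤ w i ∧ w i ≤ k + 1) ∧ WordP1 w ∧ WordP2 w) := by
  have hlen : (List.ofFn w).length = k := List.length_ofFn
  constructor
  · rintro ⟨hg, hnc⟩
    have hget := gaux_get.1 hg
    have htake : ∀ i : ℕ, GrowAux 1 ((List.ofFn w).take i) := by
      intro i
      have h' : GrowAux 1 (((List.ofFn w).take i) ++ ((List.ofFn w).drop i)) := by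
        rw [take_append_drop]; exact hg
      exact (gaux_append.1 h').1
    have hb : ∀ i : Fin k, 2 ≤ w i ∧ w i ≤ (((List.ofFn w).take i.1).foldl max 1) + 1 := by
      intro i
      have hi : i.1 < (List.ofFn w).length := by omega
      have := hget i.1 hi
      rw [getElem_ofFn'] at this
      simpa using this
    have hfoldle : ∀ i : Fin k, (((List.ofFn w).take i.1).foldl max 1) ≤ 1 + i.1 := by
      intro i
      have := gaux_fold_le (htake i.1)
      have hlt : ((List.ofFn w).take i.1).length ≤ i.1 := by
        simp [length_take]
      omega
    refine ⟨fun i => ⟨(hb i).1, ?_⟩, ?_, ?_⟩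
    · have := (hb i).2
      have := hfoldle i
      have := i.2
      omega
    · -- WordP1
      intro i t ht2 htw
      have hfold : t ≤ ((List.ofFn w).take i.1).foldl max 1 := by
        have := (hb i).2
        omega
      have hmem : t ∈ (List.ofFn w).take i.1 :=
        gaux_interval (htake i.1) (by omega) hfold
      obtain ⟨j, hj, hje⟩ := List.mem_iff_getElem.1 hmem
      have hjik : j < i.1 ∧ j < k := by
        simp only [length_take, hlen] at hj
        omega
      refine ⟨⟨j, hjik.2⟩, ?_, ?_⟩
      · exact Fin.lt_def.2 hjik.1
      · rw [List.getElem_take] at hje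
        rw [getElem_ofFn'] at hje
        exact hje
    · -- WordP2
      intro i1 i2 i3 i4 h12 h23 h34 e13 e24
      by_contra hne
      refine hnc (w i1) (w i2) hne (quad_sublist_iff.2
        ⟨i1.1, i2.1, i3.1, i4.1, h12, h23, h34, by omega, ?_, ?_, ?_, ?_⟩)
      · rw [getElem_ofFn']
      · rw [getElem_ofFn']
      · rw [getElem_ofFn']; exact e13.symm
      · rw [getElem_ofFn']; exact e24.symm
  · rintro ⟨hbd, h1, h2⟩
    constructor
    · refine gaux_get.2 (fun i hi => ?_)
      have hik : i < k := by omega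
      rw [getElem_ofFn' w i hi]
      set fi : Fin k := ⟨i, hik⟩ with hfi
      refine ⟨(hbd fi).1, ?_⟩
      by_cases hw2 : w fi ≤ 2
      · have := base_le_fold 1 ((List.ofFn w).take i)
        omega
      · obtain ⟨j, hj, hjw⟩ := h1 fi (w fi - 1) (by omega) (by omega)
        have hjlt : j.1 < ((List.ofFn w).take i).length := by
          simp only [length_take, hlen]
          have : j.1 < i := hj
          omega
        have hmem : w fi - 1 ∈ (List.ofFn w).take i := by
          rw [← hjw]
          have : ((List.ofFn w).take i)[j.1] = w j := by
            rw [List.getElem_take, getElem_ofFn']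
          rw [← this]
          exact List.getElem_mem _
        have := le_fold hmem 1
        omega
    · intro a b hab hs
      obtain ⟨i1, i2, i3, i4, h12, h23, h34, h4, e1, e2, e3, e4⟩ := quad_sublist_iff.1 hs
      rw [getElem_ofFn'] at e1 e2 e3 e4
      have := h2 ⟨i1, by omega⟩ ⟨i2, by omega⟩ ⟨i3, by omega⟩ ⟨i4, by omega⟩
        (Fin.lt_def.2 h12) (Fin.lt_def.2 h23) (Fin.lt_def.2 h34)
        (by rw [e1, e3]) (by rw [e2, e4])
      rw [e1, e2] at this
      exact hab this

def comb (A B : List ℕ) : List ℕ :=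
  2 :: (A.map (· + 1) ++ B.map (shiftUp (A.foldl max 1 - 1)))

def split1 (l : List ℕ) : List ℕ := (l.tail.takeWhile (· != 2)).map (· - 1)

def split2 (l : List ℕ) : List ℕ :=
  (l.tail.dropWhile (· != 2)).map (shiftDown ((l.tail.takeWhile (· != 2)).foldl max 2 - 2))

lemma good_shape {l : List ℕ} (h : Good l) (hne : l ≠ []) : ∃ t, l = 2 :: t := by
  cases l with
  | nil => exact absurd rfl hne
  | cons a t =>
    obtain ⟨h2, hle, _⟩ := h.1
    have : a = 2 := by omega
    exact ⟨t, by rw [this]⟩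

lemma tw_dw {y : List ℕ} : ∀ {x : List ℕ}, (∀ a ∈ x, a ≠ 2) →
    (y = [] ∨ ∃ y', y = 2 :: y') →
    (x ++ y).takeWhile (· != 2) = x ∧ (x ++ y).dropWhile (· != 2) = y := by
  intro x
  induction x with
  | nil =>
    intro _ hy
    rcases hy with rfl | ⟨y', rfl⟩
    · simp
    · simp [takeWhile_cons, dropWhile_cons]
  | cons a x ih =>
    intro hx hy
    have ha : a ≠ 2 := hx a (mem_cons_self)
    have := ih (fun z hz => hx z (mem_cons_of_mem _ hz)) hy
    simp only [cons_append, takeWhile_cons, dropWhile_cons, bne_iff_ne, ne_eq, ha,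
      not_false_eq_true, if_true, if_pos]
    constructor
    · rw [this.1]
    · rw [this.2]

lemma forward {l : List ℕ} (hg : Good l) (hne : l ≠ []) :
    Good (split1 l) ∧ Good (split2 l) ∧ comb (split1 l) (split2 l) = l ∧
    (split1 l).length + 1 + (split2 l).length = l.length := by
  obtain ⟨t, rfl⟩ := good_shape hg hne
  have hgt : GrowAux 2 t := by
    have h := hg.1.2.2
    norm_num at h
    exact h
  set A : List ℕ := t.takeWhile (· != 2) with hA
  set B : List ℕ := t.dropWhile (· != 2) with hB
  have htAB : A ++ B = t := takeWhile_append_dropWhile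
  have hgA : GrowAux 2 A := by
    rw [← htAB] at hgt
    exact (gaux_append.1 hgt).1
  set MA : ℕ := A.foldl max 2 with hMA
  have hgB : GrowAux MA B := by
    rw [← htAB] at hgt
    exact (gaux_append.1 hgt).2
  have hMA2 : 2 ≤ MA := base_le_fold _ _
  set s : ℕ := MA - 2 with hs
  have memA : ∀ a ∈ A, 3 ≤ a := by
    intro a ha
    have h2 : 2 ≤ a := gaux_mem hgA ha
    have : a ≠ 2 := by simpa using mem_takeWhile_imp ha
    omega
  have hBcons : ∀ hBne : B ≠ [], B = 2 :: B.tail := by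
    intro hBne
    have hhead := List.head_dropWhile_not (fun x => x != 2) (l := t) (by rw [← hB]; exact hBne)
    have h2 : B.head hBne = 2 := by simpa using hhead
    rw [← h2]
    exact (List.cons_head_tail hBne).symm
  have sep : ∀ b ∈ B, b = 2 ∨ MA + 1 ≤ b := by
    intro b hb
    by_cases hb2 : b = 2
    · exact Or.inl hb2
    right
    by_contra hlt
    push_neg at hlt
    have hb2' : 2 ≤ b := gaux_mem hgB hb
    have hbA : b ∈ A := gaux_interval hgA (by omega) (by omega)
    have hBne : B ≠ [] := ne_nil_of_mem hb
    have hB2 := hBcons hBne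
    have hbB₂ : b ∈ B.tail := by
      rw [hB2] at hb
      rcases mem_cons.1 hb with h | h
      · exact absurd h hb2
      · exact h
    have hsub : [2, b, 2, b] <+ 2 :: t := by
      rw [← htAB, hB2]
      refine Sublist.cons₂ 2 ?_
      have h1 : [b] <+ A := singleton_sublist.2 hbA
      have h2 : [2, b] <+ 2 :: B.tail := Sublist.cons₂ 2 (singleton_sublist.2 hbB₂)
      simpa using h1.append h2
    exact hg.2 2 b (fun h => hb2 h.symm) hsub
  have sepB : ∀ b ∈ B, b = 2 ∨ s + 3 ≤ b := by
    intro b hb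
    rcases sep b hb with h | h
    · exact Or.inl h
    · exact Or.inr (by omega)
  have hgoodA : Good (split1 (2 :: t)) := by
    constructor
    · show GrowAux 1 (A.map (· - 1))
      have := gaux_map_sub_one hgA memA (by omega)
      norm_num at this
      exact this
    · show NoCross (A.map (· - 1))
      apply noCross_map
      · intro x hx y hy hxy
        have := memA x hx
        have := memA y hy
        omega
      · exact noCross_sublist ((takeWhile_sublist _).trans (sublist_cons_self 2 t)) hg.2
  have hgoodB : Good (split2 (2 :: t)) := by
    constructor
    · show GrowAux 1 (B.map (shiftDown s))
      rcases eq_or_ne B [] with hBe | hBne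
      · rw [hBe]; simp
      · have hB2 := hBcons hBne
        rw [hB2]
        simp only [map_cons, shiftDown_two]
        refine ⟨le_rfl, by omega, ?_⟩
        have hgB₂ : GrowAux MA B.tail := by
          rw [hB2] at hgB
          have := hgB.2.2
          rw [show max MA 2 = MA from by omega] at this
          exact this
        have hmem₂ : ∀ x ∈ B.tail, x = 2 ∨ s + 3 ≤ x := by
          intro x hx
          exact sepB x (by rw [hB2]; exact mem_cons_of_mem _ hx)
        have := gaux_map_shiftDown hgB₂ hmem₂ (by omega)
        rw [show MA - s = 2 from by omega] at this
        rw [show max 1 2 = 2 from by norm_num]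
        exact this
    · show NoCross (B.map (shiftDown s))
      apply noCross_map
      · intro x hx y hy hxy
        rcases sep x hx with rfl | hx' <;> rcases sep y hy with rfl | hy'
        · rfl
        · rw [shiftDown_two, shiftDown_ne s (by omega)] at hxy
          omega
        · rw [shiftDown_two, shiftDown_ne s (by omega)] at hxy
          omega
        · rw [shiftDown_ne s (by omega), shiftDown_ne s (by omega)] at hxy
          omega
      · exact noCross_sublist ((dropWhile_sublist _).trans (sublist_cons_self 2 t)) hg.2
  refine ⟨hgoodA, hgoodB, ?_, ?_⟩
  · show (2 : ℕ) :: ((A.map (· - 1)).map (· + 1) ++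
      (B.map (shiftDown s)).map (shiftUp ((A.map (· - 1)).foldl max 1 - 1))) = 2 :: t
    have hMA' : (A.map (· - 1)).foldl max 1 = MA - 1 := by
      have := fold_map_sub_one (l := A) (M := 2) (fun a ha => by have := memA a ha; omega)
        (by omega)
      norm_num at this
      rw [this]
    rw [hMA', show MA - 1 - 1 = s from by omega]
    rw [map_map_id (fun a ha => by have := memA a ha; omega)]
    rw [map_map_id (fun b hb => ?_), htAB]
    rcases sepB b hb with rfl | h
    · rw [shiftDown_two, shiftUp_two]
    · rw [shiftDown_ne s (by omega), shiftUp_ne s (by omega)]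
      omega
  · show (A.map (· - 1)).length + 1 + (B.map (shiftDown s)).length = (2 :: t).length
    rw [length_map, length_map, ← htAB]
    simp
    omega

lemma sublist_pair {x : List ℕ} {c : ℕ} (h : x <+ [c]) : x = [] ∨ x = [c] := by
  cases h with
  | cons _ h => left; exact sublist_nil.1 h
  | cons_cons _ h => right; rw [sublist_nil.1 h]

lemma noCross_core {xA xB : List ℕ} {K : ℕ}
    (hSA : ∀ c ∈ xA, 3 ≤ c ∧ c ≤ K + 1) (hSB : ∀ c ∈ xB, c = 2 ∨ K + 2 ≤ c)
    (hncA : NoCross xA) (hncB : NoCross xB)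
    (hB3 : ∀ b : ℕ, b ≠ 2 → ¬ ([b, 2, b] <+ xB)) : NoCross (2 :: (xA ++ xB)) := by
  intro a b hab hs
  have hs' : [a, b, a, b] <+ [2] ++ (xA ++ xB) := hs
  obtain ⟨p, w, hpw, hp, hw⟩ := sublist_append_iff.1 hs'
  obtain ⟨q, r, hqr, hq, hr⟩ := sublist_append_iff.1 hw
  subst hqr
  rcases sublist_pair hp with rfl | rfl
  · -- p = [], so q ++ r = [a,b,a,b]
    simp only [nil_append] at hpw
    rcases q with _ | ⟨q1, _ | ⟨q2, _ | ⟨q3, _ | ⟨q4, q'⟩⟩⟩⟩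
    · -- q = [], r = [a,b,a,b]
      simp only [nil_append] at hpw
      subst hpw
      exact hncB a b hab hr
    · -- q = [a]
      simp only [cons_append, nil_append, cons.injEq] at hpw
      obtain ⟨rfl, hpw⟩ := hpw
      subst hpw
      have h1 : a ∈ xA := hq.subset (by simp)
      have h2 : a ∈ xB := hr.subset (by simp)
      have := hSA _ h1
      rcases hSB _ h2 with h | h <;> omega
    · -- q = [a, b]
      simp only [cons_append, nil_append, cons.injEq] at hpw
      obtain ⟨rfl, rfl, hpw⟩ := hpw
      subst hpw
      have h1 : a ∈ xA := hq.subset (by simp)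
      have h2 : a ∈ xB := hr.subset (by simp)
      have := hSA _ h1
      rcases hSB _ h2 with h | h <;> omega
    · -- q = [a, b, a]
      simp only [cons_append, nil_append, cons.injEq] at hpw
      obtain ⟨rfl, rfl, rfl, hpw⟩ := hpw
      subst hpw
      have h1 : b ∈ xA := hq.subset (by simp)
      have h2 : b ∈ xB := hr.subset (by simp)
      have := hSA _ h1
      rcases hSB _ h2 with h | h <;> omega
    · -- q has ≥ 4 elements: q = [a,b,a,b] ++ q', and q' ++ r = []
      simp only [cons_append, cons.injEq] at hpw
      obtain ⟨rfl, rfl, rfl, rfl, hpw⟩ := hpw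
      have hq' : q' = [] := by
        cases q' with
        | nil => rfl
        | cons z zs => exact absurd (congrArg List.length hpw) (by simp)
      subst hq'
      simp only [nil_append] at hpw
      exact hncA a b hab hq
  · -- p = [2], so a = 2 and q ++ r = [b,a,b] = [b,2,b]
    simp only [cons_append, nil_append, cons.injEq] at hpw
    obtain ⟨rfl, hpw⟩ := hpw
    rcases q with _ | ⟨q1, _ | ⟨q2, _ | ⟨q3, q'⟩⟩⟩
    · -- q = [], r = [b,2,b]
      simp only [nil_append] at hpw
      subst hpw
      exact hB3 b (fun h => hab h.symm) hr
    · -- q = [b]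
      simp only [cons_append, nil_append, cons.injEq] at hpw
      obtain ⟨rfl, hpw⟩ := hpw
      subst hpw
      have h1 : b ∈ xA := hq.subset (by simp)
      have h2 : b ∈ xB := hr.subset (by simp)
      have := hSA _ h1
      rcases hSB _ h2 with h | h <;> omega
    · -- q = [b, 2] : 2 ∈ xA impossible
      simp only [cons_append, nil_append, cons.injEq] at hpw
      obtain ⟨rfl, rfl, hpw⟩ := hpw
      have h1 : (2 : ℕ) ∈ xA := hq.subset (by simp)
      have := hSA _ h1
      omega
    · -- q = [b, 2, q3, ...] : 2 ∈ xA impossible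
      simp only [cons_append, cons.injEq] at hpw
      obtain ⟨rfl, rfl, hpw⟩ := hpw
      have h1 : (2 : ℕ) ∈ xA := hq.subset (by simp)
      have := hSA _ h1
      omega

lemma backward {A B : List ℕ} (hA : Good A) (hB : Good B) :
    Good (comb A B) ∧ split1 (comb A B) = A ∧ split2 (comb A B) = B ∧
    (comb A B).length = A.length + 1 + B.length := by
  set M' : ℕ := A.foldl max 1 with hM'
  have hM'1 : 1 ≤ M' := base_le_fold _ _
  set s : ℕ := M' - 1 with hs
  have memA : ∀ a ∈ A, 2 ≤ a ∧ a ≤ M' := fun a ha => ⟨gaux_mem hA.1 ha, le_fold ha 1⟩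
  have memB : ∀ b ∈ B, 2 ≤ b := fun b hb => gaux_mem hB.1 hb
  have mapAmem : ∀ c ∈ A.map (· + 1), 3 ≤ c ∧ c ≤ M' + 1 := by
    intro c hc
    obtain ⟨a, ha, rfl⟩ := mem_map.1 hc
    have := memA a ha
    constructor <;> omega
  have mapBmem : ∀ c ∈ B.map (shiftUp s), c = 2 ∨ M' + 2 ≤ c := by
    intro c hc
    obtain ⟨b, hb, rfl⟩ := mem_map.1 hc
    have h2 := memB b hb
    by_cases hb2 : b = 2
    · subst hb2; rw [shiftUp_two]; exact Or.inl rfl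
    · rw [shiftUp_ne s hb2]; right; omega
  have hupinj : ∀ x ∈ B, ∀ y ∈ B, shiftUp s x = shiftUp s y → x = y := by
    intro x hx y hy hxy
    have h2x := memB x hx
    have h2y := memB y hy
    by_cases hx2 : x = 2 <;> by_cases hy2 : y = 2
    · rw [hx2, hy2]
    · rw [hx2, shiftUp_two, shiftUp_ne s hy2] at hxy; omega
    · rw [hy2, shiftUp_two, shiftUp_ne s hx2] at hxy; omega
    · rw [shiftUp_ne s hx2, shiftUp_ne s hy2] at hxy; omega
  have hBconsU : ∀ hBne : B ≠ [], B = 2 :: B.tail := by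
    intro hBne
    obtain ⟨t, ht⟩ := good_shape hB hBne
    rw [ht]; rfl
  have hB3 : ∀ b : ℕ, b ≠ 2 → ¬ ([b, 2, b] <+ B.map (shiftUp s)) := by
    intro b hb hsub
    rw [sublist_map_iff] at hsub
    obtain ⟨u, hu, hmap⟩ := hsub
    rcases u with _ | ⟨u1, _ | ⟨u2, _ | ⟨u3, _ | ⟨u4, u'⟩⟩⟩⟩
    · simp at hmap
    · simp at hmap
    · simp at hmap
    swap
    · simp at hmap
    simp only [map_cons, map_nil, cons.injEq, and_true] at hmap
    obtain ⟨e1, e2, e3⟩ := hmap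
    have m1 : u1 ∈ B := hu.subset (by simp)
    have m2 : u2 ∈ B := hu.subset (by simp)
    have m3 : u3 ∈ B := hu.subset (by simp)
    have hu2 : u2 = 2 := by
      by_contra h
      rw [shiftUp_ne s h] at e2
      have := memB u2 m2
      omega
    have hu13 : u1 = u3 := hupinj u1 m1 u3 m3 (by rw [← e1, ← e3])
    have hu1 : u1 ≠ 2 := by
      intro h
      rw [h, shiftUp_two] at e1
      exact hb e1
    subst hu2
    rw [← hu13] at hu
    have hBne : B ≠ [] := ne_nil_of_mem m1
    have hB2 := hBconsU hBne
    rw [hB2] at hu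
    cases hu with
    | cons _ h =>
      have : [2, u1, 2, u1] <+ 2 :: B.tail := Sublist.cons₂ 2 h
      rw [← hB2] at this
      exact hB.2 2 u1 (fun h' => hu1 h'.symm) this
    | cons_cons _ h => exact hu1 rfl
  have hgrow : GrowAux 1 (comb A B) := by
    refine ⟨le_rfl, by omega, ?_⟩
    rw [show max 1 2 = 2 from by norm_num]
    refine gaux_append.2 ⟨?_, ?_⟩
    · have := gaux_map_add (s := 1) hA.1
      norm_num at this
      convert this using 2
    · have hfold : (A.map (· + 1)).foldl max 2 = M' + 1 := by
        have := fold_map_add 1 1 A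
        norm_num at this
        rw [← this]
      rw [hfold]
      rcases eq_or_ne B [] with hBe | hBne
      · rw [hBe]; simp
      · have hB2 := hBconsU hBne
        rw [hB2]
        simp only [map_cons, shiftUp_two]
        refine ⟨le_rfl, by omega, ?_⟩
        rw [show max (M' + 1) 2 = M' + 1 from by omega]
        have hgB₂ : GrowAux 2 B.tail := by
          have := hB.1
          rw [hB2] at this
          have h' := this.2.2
          rw [show max 1 2 = 2 from by norm_num] at h'
          exact h'
        have := gaux_map_shiftUp (s := s) hgB₂ le_rfl
        rw [show (2 : ℕ) + s = M' + 1 from by omega] at this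
        exact this
  have hnc : NoCross (comb A B) := by
    have := noCross_core (K := M') mapAmem mapBmem
      (noCross_map (fun x _ y _ h => by omega) hA.2)
      (noCross_map hupinj hB.2) hB3
    exact this
  have htail : (comb A B).tail = A.map (· + 1) ++ B.map (shiftUp s) := rfl
  have hAne2 : ∀ c ∈ A.map (· + 1), c ≠ 2 := by
    intro c hc
    have := mapAmem c hc
    omega
  have hBhead : (B.map (shiftUp s)) = [] ∨ ∃ y', (B.map (shiftUp s)) = 2 :: y' := by
    rcases eq_or_ne B [] with hBe | hBne
    · left; rw [hBe]; rfl
    · right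
      refine ⟨B.tail.map (shiftUp s), ?_⟩
      conv_lhs => rw [hBconsU hBne]
      simp
  obtain ⟨htw, hdw⟩ := tw_dw hAne2 hBhead
  refine ⟨⟨hgrow, hnc⟩, ?_, ?_, ?_⟩
  · show ((comb A B).tail.takeWhile (· != 2)).map (· - 1) = A
    rw [htail, htw]
    exact map_map_id (fun a ha => by have := memA a ha; omega)
  · show ((comb A B).tail.dropWhile (· != 2)).map
      (shiftDown (((comb A B).tail.takeWhile (· != 2)).foldl max 2 - 2)) = B
    rw [htail, hdw, htw]
    have hfold : (A.map (· + 1)).foldl max 2 = M' + 1 := by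
      have := fold_map_add 1 1 A
      norm_num at this
      rw [← this]
    rw [hfold, show M' + 1 - 2 = s from by omega]
    refine map_map_id (fun b hb => ?_)
    by_cases hb2 : b = 2
    · subst hb2; rw [shiftUp_two, shiftDown_two]
    · have := memB b hb
      rw [shiftUp_ne s hb2, shiftDown_ne s (by omega)]
      omega
  · show ((2 : ℕ) :: (A.map (· + 1) ++ B.map (shiftUp s))).length = A.length + 1 + B.length
    simp
    omega

abbrev CW (k : ℕ) : Type := {w : Fin k → ℕ // (∀ i, 2 ≤ w i ∧ w i ≤ k + 1) ∧ WordP1 w ∧ WordP2 w}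

abbrev GLL (n : ℕ) : Type := {l : List ℕ // Good l ∧ l.length = n}

lemma ofFn_get_cast {l : List ℕ} {k : ℕ} (h : l.length = k) :
    (List.ofFn fun i : Fin k => l.get (Fin.cast h.symm i)) = l := by
  apply List.ext_get (by simp [h])
  intro i h1 h2
  simp [List.get_ofFn]

def fwEquiv (k : ℕ) : CW k ≃ GLL k where
  toFun x := ⟨List.ofFn x.1, (good_ofFn_iff x.1).2 x.2, List.length_ofFn⟩
  invFun y := ⟨fun i => y.1.get (Fin.cast y.2.2.symm i),
    (good_ofFn_iff _).1 (by rw [ofFn_get_cast y.2.2]; exact y.2.1)⟩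
  left_inv x := by
    apply Subtype.ext
    funext i
    simp [List.get_ofFn]
  right_inv y := Subtype.ext (ofFn_get_cast y.2.2)

lemma x_ne_nil {n : ℕ} (x : GLL (n + 1)) : x.1 ≠ [] := by
  intro h
  have := x.2.2
  rw [h] at this
  simp at this

def toF {n : ℕ} (x : GLL (n + 1)) : Σ i : Fin (n + 1), GLL i.1 × GLL (n - i.1) :=
  ⟨⟨(split1 x.1).length, by
      have h := (forward x.2.1 (x_ne_nil x)).2.2.2
      have := x.2.2
      omega⟩,
   ⟨split1 x.1, (forward x.2.1 (x_ne_nil x)).1, rfl⟩,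
   ⟨split2 x.1, (forward x.2.1 (x_ne_nil x)).2.1, by
      have h := (forward x.2.1 (x_ne_nil x)).2.2.2
      have := x.2.2
      simp only
      omega⟩⟩

def invF {n : ℕ} (y : Σ i : Fin (n + 1), GLL i.1 × GLL (n - i.1)) : GLL (n + 1) :=
  ⟨comb y.2.1.1 y.2.2.1, (backward y.2.1.2.1 y.2.2.2.1).1, by
     have h := (backward y.2.1.2.1 y.2.2.2.1).2.2.2
     rw [h, y.2.1.2.2, y.2.2.2.2]
     have := y.1.2
     omega⟩

lemma gl_sigma_ext {n : ℕ} {i j : Fin (n + 1)} {p : GLL i.1 × GLL (n - i.1)}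
    {q : GLL j.1 × GLL (n - j.1)} (hij : i = j) (h1 : p.1.1 = q.1.1) (h2 : p.2.1 = q.2.1) :
    (⟨i, p⟩ : Σ i : Fin (n + 1), GLL i.1 × GLL (n - i.1)) = ⟨j, q⟩ := by
  subst hij
  congr 1
  exact Prod.ext (Subtype.ext h1) (Subtype.ext h2)

def decompEquiv (n : ℕ) : GLL (n + 1) ≃ Σ i : Fin (n + 1), GLL i.1 × GLL (n - i.1) where
  toFun := toF
  invFun := invF
  left_inv x := by
    apply Subtype.ext
    show comb (split1 x.1) (split2 x.1) = x.1
    exact (forward x.2.1 (x_ne_nil x)).2.2.1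
  right_inv y := by
    obtain ⟨⟨i, hi⟩, ⟨A, hgA, hlA⟩, ⟨B, hgB, hlB⟩⟩ := y
    have hb := backward hgA hgB
    refine gl_sigma_ext (Fin.ext ?_) ?_ ?_
    · show (split1 (comb A B)).length = i
      rw [hb.2.1, hlA]
    · show split1 (comb A B) = A
      exact hb.2.1
    · show split2 (comb A B) = B
      exact hb.2.2.1

lemma finiteCW (m : ℕ) : Finite (CW m) := by
  apply Finite.of_injective (β := Fin m → Fin (m + 2))
    (fun x i => ⟨x.1 i, by have := (x.2.1 i).2; omega⟩)
  intro x y h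
  apply Subtype.ext
  funext i
  exact congrArg Fin.val (congrFun h i)

end ColorWords


open ColorWords in
/-- The number of color words of length `k` (words over `{2,…,k+1}` satisfying
P1 and P2) equals the `k`-th Catalan number. -/
theorem card_color_words (k : ℕ) :
    Nat.card {w : Fin k → ℕ // (∀ i, 2 ≤ w i ∧ w i ≤ k + 1) ∧ WordP1 w ∧ WordP2 w}
      = catalan k := by
  induction k using Nat.strong_induction_on with
  | _ k ih =>
  rcases k with _ | n
  · haveI : Unique (CW 0) :=
      ⟨⟨⟨fun i => i.elim0, ⟨fun i => i.elim0, fun i => i.elim0, fun i1 => i1.elim0⟩⟩⟩,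
        fun a => Subtype.ext (funext fun i => i.elim0)⟩
    show Nat.card (CW 0) = catalan 0
    rw [catalan_zero, Nat.card_unique]
  · haveI : ∀ m : ℕ, Finite (CW m) := finiteCW
    haveI hGLfin : ∀ m : ℕ, Finite (GLL m) := fun m => Finite.of_equiv _ (fwEquiv m)
    letI : ∀ m : ℕ, Fintype (GLL m) := fun m => Fintype.ofFinite _
    have hcard : ∀ m : ℕ, Fintype.card (GLL m) = Nat.card (CW m) := by
      intro m
      rw [← Nat.card_eq_fintype_card]
      exact Nat.card_congr (fwEquiv m).symm
    show Nat.card (CW (n + 1)) = catalan (n + 1)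
    have key : Nat.card (CW (n + 1)) = ∑ i : Fin (n + 1), Nat.card (CW i.1) * Nat.card (CW (n - i.1)) := by
      calc Nat.card (CW (n + 1)) = Nat.card (GLL (n + 1)) := Nat.card_congr (fwEquiv _)
        _ = Nat.card (Σ i : Fin (n + 1), GLL i.1 × GLL (n - i.1)) := Nat.card_congr (decompEquiv n)
        _ = Fintype.card (Σ i : Fin (n + 1), GLL i.1 × GLL (n - i.1)) := Nat.card_eq_fintype_card
        _ = ∑ i : Fin (n + 1), Fintype.card (GLL i.1 × GLL (n - i.1)) := Fintype.card_sigma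
        _ = ∑ i : Fin (n + 1), Nat.card (CW i.1) * Nat.card (CW (n - i.1)) := by
            refine Finset.sum_congr rfl fun i _ => ?_
            rw [Fintype.card_prod, hcard, hcard]
    rw [key, catalan_succ]
    refine Finset.sum_congr rfl fun i _ => ?_
    rw [ih i.1 (by omega), ih (n - i.1) (by omega)]
end

section
/- The number of words of length k over the alphabet {1, 2, …, k+1} satisfying properties P1, P2 and P3 equals the Catalan number C_{k+1}. -/
namespace P123Aux
open List

/-- no `a,b,a,b` pattern -/
def NP (l : List ℕ) : Prop := ∀ a b : ℕ, [a, b, a, b] <+ l → a = b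

/-- prefixes are downward closed (above 1) in letters -/
def DC (l : List ℕ) : Prop :=
  ∀ p, p <+: l → ∀ s ∈ p, ∀ t, 1 ≤ t → t < s → t ∈ p

def Good (l : List ℕ) : Prop := (∀ x ∈ l, 1 ≤ x) ∧ DC l ∧ NP l

theorem good_nil : Good [] := by
  refine ⟨by simp, fun p hp => ?_, fun a b h => by simp at h⟩
  simp [List.prefix_nil] at hp; simp [hp]

theorem Good.one_le {l : List ℕ} (h : Good l) {x : ℕ} (hx : x ∈ l) : 1 ≤ x := h.1 x hx

theorem Good.head_eq_one {l : List ℕ} (h : Good l) (hne : l ≠ []) : l.head hne = 1 := by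
  obtain ⟨x, t, rfl⟩ : ∃ x t, l = x :: t := ⟨l.head hne, l.tail, (List.cons_head_tail hne).symm⟩
  simp only [List.head_cons]
  have hx : 1 ≤ x := h.one_le (by simp)
  by_contra hne1
  have h2 : 2 ≤ x := by omega
  have := h.2.1 [x] ⟨t, rfl⟩ x (by simp) 1 le_rfl (by omega)
  simp at this; omega

theorem Good.cons_eq {l : List ℕ} (h : Good l) (hne : l ≠ []) : l = 1 :: l.tail := by
  conv_lhs => rw [← List.cons_head_tail hne, h.head_eq_one hne]

/-- P3-type consequence: no `a,1,a` with `a ≠ 1`. -/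
theorem Good.p3 {l : List ℕ} (h : Good l) {a : ℕ} (hs : [a, 1, a] <+ l) : a = 1 := by
  have hne : l ≠ [] := by rintro rfl; simp at hs
  rw [h.cons_eq hne] at hs
  rcases List.sublist_cons_iff.mp hs with h' | ⟨r, hr, h'⟩
  · have : [1, a, 1, a] <+ l := by
      rw [h.cons_eq hne]; exact h'.cons₂ 1
    exact (h.2.2 1 a this).symm
  · exact (List.cons_eq_cons.mp hr).1

/-- letters of a good word are at most its length -/
theorem Good.le_length {l : List ℕ} (h : Good l) {x : ℕ} (hx : x ∈ l) : x ≤ l.length := by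
  have hsub : Finset.Icc 1 x ⊆ l.toFinset := by
    intro t ht
    simp only [Finset.mem_Icc] at ht
    rcases eq_or_lt_of_le ht.2 with rfl | hlt
    · simpa using hx
    · simpa using h.2.1 l List.prefix_rfl x hx t ht.1 hlt
  have := Finset.card_le_card hsub
  simpa [Nat.card_Icc] using this.trans l.toFinset_card_le

/-- every value between 1 and the max occurs -/
theorem Good.mem_of_le_max {l : List ℕ} (h : Good l) {t : ℕ} (h1 : 1 ≤ t)
    (h2 : t ≤ l.foldr max 0) : t ∈ l := by
  have hmem : ∀ l' : List ℕ, l'.foldr max 0 ∈ l' ∨ l'.foldr max 0 = 0 := by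
    intro l'; induction l' with
    | nil => right; rfl
    | cons x s ih =>
      simp only [List.foldr_cons]
      rcases le_or_gt (s.foldr max 0) x with hle | hlt
      · left; simp [max_eq_left hle]
      · rw [max_eq_right hlt.le]
        rcases ih with hm | h0
        · left; exact List.mem_cons_of_mem _ hm
        · omega
  have hm : l.foldr max 0 ∈ l := by
    rcases hmem l with hm | h0
    · exact hm
    · omega
  rcases eq_or_lt_of_le h2 with rfl | hlt
  · exact hm
  · exact h.2.1 l List.prefix_rfl _ hm t h1 hlt

theorem prefix_append_cases {α : Type*} {p A C : List α} (h : p <+: A ++ C) :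
    p <+: A ∨ ∃ q, q <+: C ∧ p = A ++ q := by
  obtain ⟨r, hr⟩ := h
  rcases List.append_eq_append_iff.mp hr with ⟨a', ha1, _⟩ | ⟨c', hc1, hc2⟩
  · left; exact ⟨a', ha1.symm⟩
  · right; exact ⟨c', ⟨r, hc2.symm⟩, hc1⟩

theorem prefix_map {α β : Type*} {p : List β} {f : α → β} {l : List α} (h : p <+: l.map f) :
    ∃ q, q <+: l ∧ p = q.map f := by
  refine ⟨l.take p.length, List.take_prefix _ _, ?_⟩
  rw [List.map_take]
  exact List.prefix_iff_eq_take.mp h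


/-- shift: keep 1, add `m` to other letters -/
def sh (m x : ℕ) : ℕ := if x = 1 then 1 else x + m
/-- unshift -/
def ush (m x : ℕ) : ℕ := if x = 1 then 1 else x - m

def joinW (a c : List ℕ) : List ℕ :=
  1 :: (a.map (· + 1) ++ c.map (sh (a.foldr max 0)))

theorem sh_inj {m p q : ℕ} (hp : 1 ≤ p) (hq : 1 ≤ q) (h : sh m p = sh m q) : p = q := by
  unfold sh at h; split_ifs at h <;> omega

theorem le_foldr_max {l : List ℕ} {x : ℕ} (h : x ∈ l) : x ≤ l.foldr max 0 := by
  induction l with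
  | nil => simp at h
  | cons y t ih =>
    rcases List.mem_cons.mp h with rfl | h'
    · simp only [List.foldr_cons]; exact le_max_left _ _
    · simp only [List.foldr_cons]; exact (ih h').trans (le_max_right _ _)

theorem mem_A_range {a : List ℕ} (ha : Good a) {x : ℕ} (hx : x ∈ a.map (· + 1)) :
    2 ≤ x ∧ x ≤ a.foldr max 0 + 1 := by
  obtain ⟨y, hy, rfl⟩ := List.mem_map.mp hx
  exact ⟨by have := ha.one_le hy; omega, by have := le_foldr_max hy; omega⟩

theorem mem_C_range {c : List ℕ} (hc : Good c) {m x : ℕ} (hx : x ∈ c.map (sh m)) :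
    x = 1 ∨ m + 2 ≤ x := by
  obtain ⟨y, hy, rfl⟩ := List.mem_map.mp hx
  have := hc.one_le hy
  unfold sh; split_ifs <;> omega

theorem NP.map_pullback {l : List ℕ} {f : ℕ → ℕ} (h : NP l)
    (hinj : ∀ x ∈ l, ∀ y ∈ l, f x = f y → x = y) : NP (l.map f) := by
  intro p q hs
  obtain ⟨l', hl', hmap⟩ := List.sublist_map_iff.mp hs
  rcases l' with _ | ⟨y1, _ | ⟨y2, _ | ⟨y3, _ | ⟨y4, rest⟩⟩⟩⟩ <;> simp at hmap
  obtain ⟨h1, h2, h3, h4, hrest⟩ := hmap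
  subst hrest
  have m1 : y1 ∈ l := hl'.subset (by simp)
  have m2 : y2 ∈ l := hl'.subset (by simp)
  have m3 : y3 ∈ l := hl'.subset (by simp)
  have m4 : y4 ∈ l := hl'.subset (by simp)
  have e13 : y1 = y3 := hinj _ m1 _ m3 (by rw [← h1, ← h3])
  have e24 : y2 = y4 := hinj _ m2 _ m4 (by rw [← h2, ← h4])
  rw [← e13, ← e24] at hl'
  have := h y1 y2 hl'
  rw [h1, h2, this]

theorem join_good {a c : List ℕ} (ha : Good a) (hc : Good c) : Good (joinW a c) := by
  unfold joinW
  set m := a.foldr max 0 with hm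
  set A := a.map (· + 1) with hA
  set C := c.map (sh m) with hC
  have hAmem : ∀ x ∈ A, 2 ≤ x ∧ x ≤ m + 1 := fun x hx => mem_A_range ha hx
  have hCmem : ∀ x ∈ C, x = 1 ∨ m + 2 ≤ x := fun x hx => mem_C_range hc hx
  have hdisj : ∀ x, x ∈ A → x ∈ C → False := by
    intro x h1 h2
    have := hAmem x h1; have := hCmem x h2; omega
  have hNPA : NP A := ha.2.2.map_pullback (by intro x _ y _ h; omega)
  have hNPC : NP C := hc.2.2.map_pullback
    (fun x hx y hy h => sh_inj (hc.one_le hx) (hc.one_le hy) h)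
  refine ⟨?_, ?_, ?_⟩
  · -- letters ≥ 1
    intro x hx
    rcases List.mem_cons.mp hx with rfl | hx
    · exact le_rfl
    rcases List.mem_append.mp hx with hx | hx
    · exact le_of_lt (hAmem x hx).1
    · rcases hCmem x hx with rfl | h <;> omega
  · -- DC
    intro p hp s hs t ht1 hts
    rcases List.prefix_cons_iff.mp hp with rfl | ⟨q, rfl, hq⟩
    · simp at hs
    have hs2 : 2 ≤ s := by omega
    have hsq : s ∈ q := by
      rcases List.mem_cons.mp hs with rfl | h
      · omega
      · exact h
    rcases Nat.eq_or_lt_of_le ht1 with rfl | ht2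
    · simp
    have ht2 : 2 ≤ t := ht2
    rcases prefix_append_cases hq with hqA | ⟨q', hq', rfl⟩
    · -- q is a prefix of A
      obtain ⟨qa, hqa, rfl⟩ := prefix_map hqA
      obtain ⟨y, hy, rfl⟩ := List.mem_map.mp hsq
      have : t - 1 ∈ qa := ha.2.1 qa hqa y hy (t - 1) (by omega) (by omega)
      have : t ∈ qa.map (· + 1) := List.mem_map.mpr ⟨t - 1, this, by omega⟩
      exact List.mem_cons_of_mem _ this
    · -- q = A ++ q', q' prefix of C
      obtain ⟨qc, hqc, rfl⟩ := prefix_map hq'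
      rcases List.mem_append.mp hsq with hsA | hsC
      · -- s in A
        obtain ⟨y, hy, rfl⟩ := List.mem_map.mp hsA
        have hya : y ∈ a := hy
        have : t - 1 ∈ a := ha.2.1 a List.prefix_rfl y hya (t - 1) (by omega) (by omega)
        have : t ∈ A := List.mem_map.mpr ⟨t - 1, this, by omega⟩
        exact List.mem_cons_of_mem _ (List.mem_append_left _ this)
      · -- s in shifted part
        obtain ⟨y, hy, rfl⟩ := List.mem_map.mp hsC
        have hy1 : 1 ≤ y := hc.one_le (hqc.subset hy)
        by_cases hy1' : y = 1
        · subst hy1'; simp [sh] at hts; omega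
        have hsh : sh m y = y + m := by simp [sh, hy1']
        rcases le_or_gt t (m + 1) with htm | htm
        · -- t - 1 is in a
          have : t - 1 ∈ a := ha.mem_of_le_max (by omega) (by omega)
          have : t ∈ A := List.mem_map.mpr ⟨t - 1, this, by omega⟩
          exact List.mem_cons_of_mem _ (List.mem_append_left _ this)
        · -- t - m is in qc
          have h2y : 2 ≤ y := by omega
          have : t - m ∈ qc := hc.2.1 qc hqc y hy (t - m) (by omega) (by omega)
          have : t ∈ qc.map (sh m) := List.mem_map.mpr
            ⟨t - m, this, by simp only [sh, if_neg (by omega : ¬ t - m = 1)]; omega⟩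
          exact List.mem_cons_of_mem _ (List.mem_append_right _ this)
  · -- NP
    intro p q hs
    rcases List.sublist_cons_iff.mp hs with h | ⟨r, hr, h⟩
    · -- pattern inside A ++ C
      obtain ⟨l₁, l₂, heq, h1, h2⟩ := List.sublist_append_iff.mp h
      have hmem1 : ∀ x ∈ l₁, x ∈ A := fun x hx => h1.subset hx
      have hmem2 : ∀ x ∈ l₂, x ∈ C := fun x hx => h2.subset hx
      rcases l₁ with _ | ⟨x1, _ | ⟨x2, _ | ⟨x3, _ | ⟨x4, rest⟩⟩⟩⟩
      · simp at heq; subst heq; exact hNPC p q h2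
      · simp at heq
        obtain ⟨rfl, rfl⟩ := heq
        exact absurd (hdisj p (hmem1 p (by simp)) (hmem2 p (by simp))) id
      · simp at heq
        obtain ⟨rfl, rfl, rfl⟩ := heq
        exact absurd (hdisj p (hmem1 p (by simp)) (hmem2 p (by simp))) id
      · simp at heq
        obtain ⟨rfl, rfl, rfl, rfl⟩ := heq
        exact absurd (hdisj q (hmem1 q (by simp)) (hmem2 q (by simp))) id
      · have hlen := congrArg List.length heq
        simp at hlen
        obtain ⟨rfl, rfl⟩ := hlen
        simp at heq
        obtain ⟨rfl, rfl, rfl, rfl⟩ := heq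
        exact hNPA p q (by simpa using h1)
    · -- pattern starts with the leading 1
      obtain ⟨rfl, hrr⟩ := List.cons_eq_cons.mp hr
      subst hrr
      obtain ⟨l₁, l₂, heq, h1, h2⟩ := List.sublist_append_iff.mp h
      have hmem1 : ∀ x ∈ l₁, x ∈ A := fun x hx => h1.subset hx
      have hmem2 : ∀ x ∈ l₂, x ∈ C := fun x hx => h2.subset hx
      have hA1 : (1 : ℕ) ∈ A → False := fun hx => by have := hAmem 1 hx; omega
      rcases l₁ with _ | ⟨x1, _ | ⟨x2, _ | ⟨x3, rest⟩⟩⟩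
      · -- [q,1,q] <+ C
        simp at heq; subst heq
        obtain ⟨l', hl', hmap⟩ := List.sublist_map_iff.mp h2
        rcases l' with _ | ⟨y1, _ | ⟨y2, _ | ⟨y3, rest⟩⟩⟩ <;> simp at hmap
        obtain ⟨e1, e2, e3, hrest⟩ := hmap
        subst hrest
        have hy2 : y2 = 1 := by
          have : 1 ≤ y2 := hc.one_le (hl'.subset (by simp))
          by_contra hne
          simp only [sh, if_neg hne] at e2; omega
        subst hy2
        have e13 : y1 = y3 := sh_inj (hc.one_le (hl'.subset (by simp)))
          (hc.one_le (hl'.subset (by simp))) (by rw [← e1, ← e3])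
        rw [← e13] at hl'
        have := hc.p3 hl'
        subst this
        simp [sh] at e1; omega
      · simp at heq
        obtain ⟨rfl, rfl⟩ := heq
        exact absurd (hdisj q (hmem1 q (by simp)) (hmem2 q (by simp))) id
      · simp at heq
        obtain ⟨rfl, rfl, rfl⟩ := heq
        exact absurd (hA1 (hmem1 1 (by simp))) id
      · have hlen := congrArg List.length heq
        simp at hlen
        obtain ⟨rfl, rfl⟩ := hlen
        simp at heq
        obtain ⟨rfl, rfl, rfl⟩ := heq
        exact absurd (hA1 (hmem1 1 (by simp))) id


def splitA (l : List ℕ) : List ℕ := (l.tail.takeWhile (· != 1)).map (· - 1)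
def splitC (l : List ℕ) : List ℕ :=
  (l.tail.dropWhile (· != 1)).map (ush ((splitA l).foldr max 0))

theorem prefix_append_left {α : Type*} {p r : List α} (s : List α) (h : p <+: r) :
    s ++ p <+: s ++ r := by
  obtain ⟨t, ht⟩ := h
  exact ⟨t, by rw [List.append_assoc, ht]⟩

theorem mem_takeWhile_ne_one {u : List ℕ} {x : ℕ} (hx : x ∈ u.takeWhile (· != 1)) : x ≠ 1 := by
  have h1 := mem_takeWhile_imp (p := fun z => z != 1) (l := u) hx
  simpa using h1

theorem takeWhile_mem_l {l : List ℕ} {x : ℕ} (hx : x ∈ l.tail.takeWhile (· != 1)) : x ∈ l :=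
  ((takeWhile_sublist _).trans (tail_sublist l)).subset hx

theorem takeWhile_two_le {l : List ℕ} (h : Good l) {x : ℕ}
    (hx : x ∈ l.tail.takeWhile (· != 1)) : 2 ≤ x := by
  have h1 := mem_takeWhile_ne_one hx
  have h2 := h.one_le (takeWhile_mem_l hx)
  omega

theorem good_splitA {l : List ℕ} (h : Good l) : Good (splitA l) := by
  refine ⟨?_, ?_, ?_⟩
  · intro x hx
    obtain ⟨y, hy, rfl⟩ := List.mem_map.mp hx
    have := takeWhile_two_le h hy; omega
  · intro p hp s hs t ht1 hts
    obtain ⟨qa, hqa, rfl⟩ := prefix_map hp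
    obtain ⟨y, hy, rfl⟩ := List.mem_map.mp hs
    have hy2 : 2 ≤ y := takeWhile_two_le h (hqa.subset hy)
    have hne : l ≠ [] := by
      rintro rfl; simp [List.prefix_nil] at hqa; rw [hqa] at hy; simp at hy
    have hpre : 1 :: qa <+: l := by
      rw [h.cons_eq hne]
      exact List.cons_prefix_cons.mpr ⟨rfl, hqa.trans (takeWhile_prefix _)⟩
    have hmem := h.2.1 _ hpre y (List.mem_cons_of_mem _ hy) (t + 1) (by omega) (by omega)
    rcases List.mem_cons.mp hmem with h1 | h1
    · omega
    · exact List.mem_map.mpr ⟨t + 1, h1, by omega⟩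
  · intro p q hs
    have hps := hs.map (· + 1)
    rw [splitA, List.map_map] at hps
    have he : (l.tail.takeWhile (· != 1)).map ((· + 1) ∘ (· - 1))
        = (l.tail.takeWhile (· != 1)) := by
      have := List.map_congr_left (l := l.tail.takeWhile (· != 1))
        (f := (· + 1) ∘ (· - 1)) (g := id)
        (fun x hx => by have := takeWhile_two_le h hx; simp; omega)
      simpa using this
    rw [he] at hps
    have hsl : [p + 1, q + 1, p + 1, q + 1] <+ l := by
      have := hps.trans ((takeWhile_sublist _).trans (tail_sublist l))
      simpa using this
    have := h.2.2 _ _ hsl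
    omega

theorem splitA_add_one {l : List ℕ} (h : Good l) :
    (splitA l).map (· + 1) = l.tail.takeWhile (· != 1) := by
  rw [splitA, List.map_map]
  have := List.map_congr_left (l := l.tail.takeWhile (· != 1))
    (f := (· + 1) ∘ (· - 1)) (g := id)
    (fun x hx => by have := takeWhile_two_le h hx; simp; omega)
  simpa using this

theorem dropWhile_head_one {u : List ℕ} (hne : u.dropWhile (· != 1) ≠ []) :
    u.dropWhile (· != 1) = 1 :: (u.dropWhile (· != 1)).tail := by
  have hh := head_dropWhile_not (· != 1) (l := u) hne
  conv_lhs => rw [← List.cons_head_tail hne]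
  simp at hh; rw [hh]

/-- non-1 letters after the split point are `≥ m + 2` -/
theorem splitR_large {l : List ℕ} (h : Good l) {x : ℕ}
    (hx : x ∈ l.tail.dropWhile (· != 1)) (hx1 : x ≠ 1) :
    (splitA l).foldr max 0 + 2 ≤ x := by
  have hxl : x ∈ l := ((dropWhile_sublist _).trans (tail_sublist l)).subset hx
  have hx2 : 2 ≤ x := by have := h.one_le hxl; omega
  by_contra hcon
  have hxa : x - 1 ∈ splitA l := (good_splitA h).mem_of_le_max (by omega) (by omega)
  have hxA : x ∈ l.tail.takeWhile (· != 1) := by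
    have h1 : x - 1 + 1 ∈ (splitA l).map (· + 1) := List.mem_map.mpr ⟨x - 1, hxa, rfl⟩
    rw [splitA_add_one h] at h1
    have hxx : x - 1 + 1 = x := by omega
    rwa [hxx] at h1
  have hRne : l.tail.dropWhile (· != 1) ≠ [] := by
    rintro h0; rw [h0] at hx; simp at hx
  have hxt : x ∈ (l.tail.dropWhile (· != 1)).tail := by
    rcases List.mem_cons.mp ((dropWhile_head_one hRne) ▸ hx) with rfl | h1
    · omega
    · exact h1
  have hsub : [x, 1, x] <+ l := by
    have h1 : [x] <+ l.tail.takeWhile (· != 1) := List.singleton_sublist.mpr hxA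
    have h2 : [1, x] <+ l.tail.dropWhile (· != 1) := by
      rw [dropWhile_head_one hRne]
      exact (List.singleton_sublist.mpr hxt).cons₂ 1
    have h3 := List.Sublist.append h1 h2
    rw [takeWhile_append_dropWhile] at h3
    exact h3.trans (tail_sublist l)
  have := h.p3 hsub
  omega

theorem splitC_sh {l : List ℕ} (h : Good l) :
    (splitC l).map (sh ((splitA l).foldr max 0)) = l.tail.dropWhile (· != 1) := by
  rw [splitC, List.map_map]
  have := List.map_congr_left (l := l.tail.dropWhile (· != 1))
    (f := sh ((splitA l).foldr max 0) ∘ ush ((splitA l).foldr max 0)) (g := id)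
    (fun x hx => by
      rcases eq_or_ne x 1 with rfl | hx1
      · simp [sh, ush]
      · have h2 := splitR_large h hx hx1
        simp only [Function.comp_apply, ush, if_neg hx1, id_eq]
        simp only [sh, if_neg (by omega : ¬ x - (splitA l).foldr max 0 = 1)]
        omega)
  simpa using this

theorem good_splitC {l : List ℕ} (h : Good l) : Good (splitC l) := by
  have hone : ∀ x ∈ splitC l, 1 ≤ x := by
    intro x hx
    obtain ⟨y, hy, rfl⟩ := List.mem_map.mp hx
    rcases eq_or_ne y 1 with rfl | hy1
    · simp [ush]
    · have := splitR_large h hy hy1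
      simp only [ush, if_neg hy1]; omega
  refine ⟨hone, ?_, ?_⟩
  · intro p hp s hs t ht1 hts
    obtain ⟨qr, hqr, rfl⟩ := prefix_map hp
    obtain ⟨y, hy, rfl⟩ := List.mem_map.mp hs
    have hyR : y ∈ l.tail.dropWhile (· != 1) := hqr.subset hy
    rcases eq_or_ne y 1 with rfl | hy1
    · simp [ush] at hts; omega
    have hy2 := splitR_large h hyR hy1
    rw [ush, if_neg hy1] at hts
    rcases Nat.eq_or_lt_of_le ht1 with rfl | ht2
    · -- t = 1
      have hqrne : qr ≠ [] := by rintro rfl; simp at hy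
      have hRne : l.tail.dropWhile (· != 1) ≠ [] := by
        rintro h0; rw [h0] at hqr
        simp [List.prefix_nil] at hqr; exact hqrne hqr
      rw [dropWhile_head_one hRne] at hqr
      rcases List.prefix_cons_iff.mp hqr with h0 | ⟨q', rfl, _⟩
      · exact absurd h0 hqrne
      · exact List.mem_map.mpr ⟨1, by simp, by simp [ush]⟩
    · -- t ≥ 2
      have hne : l ≠ [] := by
        rintro rfl; simp at hyR
      have hpre : 1 :: (l.tail.takeWhile (· != 1) ++ qr) <+: l := by
        rw [h.cons_eq hne]
        refine List.cons_prefix_cons.mpr ⟨rfl, ?_⟩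
        have h1 := prefix_append_left (l.tail.takeWhile (· != 1)) hqr
        rwa [takeWhile_append_dropWhile] at h1
      have hyP : y ∈ 1 :: (l.tail.takeWhile (· != 1) ++ qr) :=
        List.mem_cons_of_mem _ (List.mem_append_right _ hy)
      have hmem := h.2.1 _ hpre y hyP (t + (splitA l).foldr max 0) (by omega) (by omega)
      rcases List.mem_cons.mp hmem with h1 | h1
      · omega
      rcases List.mem_append.mp h1 with h1 | h1
      · -- t + m would be a letter of A, but those are ≤ m + 1
        exfalso
        have : t + (splitA l).foldr max 0 - 1 ∈ splitA l :=
          List.mem_map.mpr ⟨_, h1, rfl⟩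
        have := le_foldr_max this
        have h2 := takeWhile_two_le h h1
        omega
      · exact List.mem_map.mpr ⟨t + (splitA l).foldr max 0, h1,
          by simp only [ush, if_neg (by omega : ¬ t + (splitA l).foldr max 0 = 1)]; omega⟩
  · intro p q hs
    have hppush := hs.map (sh ((splitA l).foldr max 0))
    rw [splitC_sh h] at hppush
    have hsl : [sh ((splitA l).foldr max 0) p, sh ((splitA l).foldr max 0) q,
        sh ((splitA l).foldr max 0) p, sh ((splitA l).foldr max 0) q] <+ l := by
      have := hppush.trans ((dropWhile_sublist _).trans (tail_sublist l))
      simpa using this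
    have heq := h.2.2 _ _ hsl
    exact sh_inj (hone p (hs.subset (by simp))) (hone q (hs.subset (by simp))) heq

theorem join_split {l : List ℕ} (h : Good l) (hne : l ≠ []) :
    joinW (splitA l) (splitC l) = l := by
  rw [joinW, splitA_add_one h, splitC_sh h, takeWhile_append_dropWhile]
  exact (h.cons_eq hne).symm

theorem splitA_join {a c : List ℕ} (ha : Good a) (hc : Good c) :
    splitA (joinW a c) = a ∧ splitC (joinW a c) = c := by
  have htail : (joinW a c).tail = a.map (· + 1) ++ c.map (sh (a.foldr max 0)) := rfl
  have hApos : ∀ x ∈ a.map (· + 1), (x != 1) = true := by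
    intro x hx
    obtain ⟨y, hy, rfl⟩ := List.mem_map.mp hx
    have := ha.one_le hy; simp; omega
  have hCtw : (c.map (sh (a.foldr max 0))).takeWhile (· != 1) = []
      ∧ (c.map (sh (a.foldr max 0))).dropWhile (· != 1) = c.map (sh (a.foldr max 0)) := by
    rcases eq_or_ne c [] with rfl | hcne
    · simp
    · rw [hc.cons_eq hcne]
      constructor
      · rw [List.map_cons]
        apply List.takeWhile_cons_of_neg
        simp [sh]
      · rw [List.map_cons]
        apply List.dropWhile_cons_of_neg
        simp [sh]
  have hTW : (joinW a c).tail.takeWhile (· != 1) = a.map (· + 1) := by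
    rw [htail, List.takeWhile_append_of_pos hApos, hCtw.1, List.append_nil]
  have hDW : (joinW a c).tail.dropWhile (· != 1) = c.map (sh (a.foldr max 0)) := by
    rw [htail, List.dropWhile_append_of_pos hApos, hCtw.2]
  have hsA : splitA (joinW a c) = a := by
    rw [splitA, hTW, List.map_map]
    have := List.map_congr_left (l := a) (f := (· - 1) ∘ (· + 1)) (g := id)
      (fun x _ => by simp)
    simpa using this
  refine ⟨hsA, ?_⟩
  rw [splitC, hDW, hsA, List.map_map]
  have := List.map_congr_left (l := c)
    (f := ush (a.foldr max 0) ∘ sh (a.foldr max 0)) (g := id)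
    (fun x hx => by
      have h1 := hc.one_le hx
      rcases eq_or_ne x 1 with rfl | hx1
      · simp [sh, ush]
      · simp only [Function.comp_apply, sh, if_neg hx1, id_eq]
        simp only [ush, if_neg (by omega : ¬ x + a.foldr max 0 = 1)]
        omega)
  simpa using this

theorem joinW_length (a c : List ℕ) :
    (joinW a c).length = a.length + c.length + 1 := by
  simp [joinW]

theorem splitA_splitC_length {l : List ℕ} (h : Good l) (hne : l ≠ []) :
    (splitA l).length + (splitC l).length + 1 = l.length := by
  have := congrArg List.length (join_split h hne)
  rwa [joinW_length] at this


def GoodL (n : ℕ) : Type := {l : List ℕ // Good l ∧ l.length = n}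

instance goodL_finite (n : ℕ) : Finite (GoodL n) := by
  have key : ∀ (l : GoodL n) (i : Fin n), (i : ℕ) < l.val.length := by
    intro l i; rw [l.2.2]; exact i.2
  have bound : ∀ (l : GoodL n) (i : Fin n), l.val[(i : ℕ)]'(key l i) < n + 1 := by
    intro l i
    have h1 : l.val[(i : ℕ)]'(key l i) ∈ l.val := List.getElem_mem _
    have h2 := l.2.1.le_length h1
    rw [l.2.2] at h2; omega
  refine Finite.of_injective
    (fun l : GoodL n => fun i : Fin n => (⟨_, bound l i⟩ : Fin (n + 1))) ?_
  intro l₁ l₂ h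
  apply Subtype.ext
  apply List.ext_getElem (by rw [l₁.2.2, l₂.2.2])
  intro i h1 h2
  have h3 := congrArg Fin.val (congrFun h ⟨i, by rw [← l₁.2.2]; exact h1⟩)
  simpa using h3

instance goodL_zero_unique : Unique (GoodL 0) where
  default := ⟨[], good_nil, rfl⟩
  uniq := fun l => Subtype.ext (List.length_eq_zero_iff.mp l.2.2)

theorem sigma_ext {n : ℕ} {i j : Fin (n + 1)} {x1 : GoodL i} {x2 : GoodL (n - i)}
    {y1 : GoodL j} {y2 : GoodL (n - j)} (h1 : x1.val = y1.val) (h2 : x2.val = y2.val) :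
    (⟨i, x1, x2⟩ : Σ i : Fin (n + 1), GoodL i × GoodL (n - i)) = ⟨j, y1, y2⟩ := by
  have hij : i = j := by
    apply Fin.ext
    have e1 := x1.2.2
    have e2 := y1.2.2
    rw [h1] at e1
    omega
  subst hij
  obtain rfl : x1 = y1 := Subtype.ext h1
  obtain rfl : x2 = y2 := Subtype.ext h2
  rfl

def equivStep (n : ℕ) : GoodL (n + 1) ≃ Σ i : Fin (n + 1), GoodL i × GoodL (n - i) where
  toFun l :=
    have hne : l.val ≠ [] := by
      intro h0; have := l.2.2; rw [h0] at this; simp at this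
    have hlen := splitA_splitC_length l.2.1 hne
    have h22 : l.val.length = n + 1 := l.2.2
    ⟨⟨(splitA l.val).length, by omega⟩,
      ⟨⟨splitA l.val, good_splitA l.2.1, rfl⟩,
       ⟨splitC l.val, good_splitC l.2.1, by simp only; omega⟩⟩⟩
  invFun x :=
    ⟨joinW x.2.1.val x.2.2.val, join_good x.2.1.2.1 x.2.2.2.1, by
      rw [joinW_length, x.2.1.2.2, x.2.2.2.2]
      have := x.1.2; omega⟩
  left_inv l := by
    apply Subtype.ext
    apply join_split l.2.1
    intro h0; have := l.2.2; rw [h0] at this; simp at this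
  right_inv := by
    rintro ⟨i, x, y⟩
    obtain ⟨hA, hC⟩ := splitA_join x.2.1 y.2.1
    exact sigma_ext hA hC

theorem card_GoodL : ∀ n, Nat.card (GoodL n) = catalan n := by
  intro n
  induction n using Nat.strong_induction_on with
  | _ n ih =>
    match n with
    | 0 => simp [Nat.card_unique, catalan_zero]
    | n + 1 =>
      letI : ∀ m, Fintype (GoodL m) := fun m => Fintype.ofFinite _
      rw [Nat.card_congr (equivStep n), catalan_succ]
      rw [Nat.card_eq_fintype_card, Fintype.card_sigma]
      congr 1
      funext i
      rw [Fintype.card_prod, ← Nat.card_eq_fintype_card, ← Nat.card_eq_fintype_card,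
        ih i (by omega), ih (n - (i : ℕ)) (by omega)]


theorem quad_sublist {α : Type*} (l : List α) (a b c d : Fin l.length)
    (hab : a < b) (hbc : b < c) (hcd : c < d) :
    [l.get a, l.get b, l.get c, l.get d] <+ l := by
  rw [List.sublist_iff_exists_fin_orderEmbedding_get_eq]
  have hmono : StrictMono (fun j : Fin 4 => if j = 0 then a else if j = 1 then b
      else if j = 2 then c else d) := by
    intro x y hxy
    fin_cases x <;> fin_cases y <;> simp_all <;> omega
  refine ⟨OrderEmbedding.ofStrictMono _ hmono, ?_⟩
  intro ix
  fin_cases ix <;> rfl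


theorem get_eq_w {k : ℕ} {w : Fin k → ℕ} (m : Fin (1 :: List.ofFn w).length)
    (hm : 0 < (m : ℕ)) :
    (1 :: List.ofFn w).get m
      = w ⟨(m : ℕ) - 1, by have := m.2; simp at this; omega⟩ := by
  match m, hm with
  | ⟨0, hmv⟩, hm => simp at hm
  | ⟨i + 1, hmv⟩, hm =>
    simp only [List.get_eq_getElem, List.getElem_cons_succ]
    rw [List.getElem_ofFn]
    exact congrArg w (Fin.ext (by simp))

theorem getE_eq_w {k : ℕ} {w : Fin k → ℕ} (i : ℕ) (h : i < k) :
    (1 :: List.ofFn w)[i + 1]'(by simp; omega) = w ⟨i, h⟩ := by simp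

theorem good_of_word {k : ℕ} (w : Fin k → ℕ)
    (hb : ∀ i, 1 ≤ w i ∧ w i ≤ k + 1) (h1 : WordP1 w) (h2 : WordP2 w) (h3 : WordP3 w) :
    Good (1 :: List.ofFn w) := by
  have hlen : (1 :: List.ofFn w).length = k + 1 := by simp
  refine ⟨?_, ?_, ?_⟩
  · intro x hx
    rcases List.mem_cons.mp hx with rfl | hx
    · exact le_rfl
    obtain ⟨i, rfl⟩ := List.mem_ofFn.mp hx
    exact (hb i).1
  · intro p hp s hs t ht1 hts
    have hpne : p ≠ [] := List.ne_nil_of_mem hs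
    have hhead : 1 ∈ p := by
      rcases List.prefix_cons_iff.mp hp with rfl | ⟨q, rfl, _⟩
      · exact absurd rfl hpne
      · simp
    rcases Nat.eq_or_lt_of_le ht1 with rfl | ht2
    · exact hhead
    have hple : p.length ≤ k + 1 := by have := hp.length_le; omega
    obtain ⟨idx, hidx, hval⟩ := List.mem_iff_getElem.mp hs
    have hidx' : idx < (1 :: List.ofFn w).length := lt_of_lt_of_le hidx hp.length_le
    have hlv : (1 :: List.ofFn w)[idx]'hidx' = s := by
      rw [← hp.getElem hidx]; exact hval
    cases idx with
    | zero => simp at hlv; omega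
    | succ i =>
      have hik : i < k := by simp at hidx'; omega
      have hwi : w ⟨i, hik⟩ = s := by rw [← hlv]; simp
      obtain ⟨j, hj, hwj⟩ := h1 ⟨i, hik⟩ t (by omega) (by rw [hwi]; omega)
      have hji : (j : ℕ) < i := hj
      have hjlt : (j : ℕ) + 1 < p.length := by omega
      refine List.mem_iff_getElem.mpr ⟨(j : ℕ) + 1, hjlt, ?_⟩
      rw [hp.getElem hjlt]
      have := getE_eq_w (w := w) (j : ℕ) j.2
      rw [this]
      simpa using hwj
  · intro a b hs
    obtain ⟨f, hf⟩ := List.sublist_iff_exists_fin_orderEmbedding_get_eq.mp hs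
    have hmono := f.strictMono
    set n0 := f ⟨0, by norm_num⟩ with hn0
    set n1 := f ⟨1, by norm_num⟩ with hn1
    set n2 := f ⟨2, by norm_num⟩ with hn2
    set n3 := f ⟨3, by norm_num⟩ with hn3
    have h01 : n0 < n1 := hmono (Fin.mk_lt_mk.mpr (by omega))
    have h12 : n1 < n2 := hmono (Fin.mk_lt_mk.mpr (by omega))
    have h23 : n2 < n3 := hmono (Fin.mk_lt_mk.mpr (by omega))
    have hv0 : (1 :: List.ofFn w).get n0 = a := (hf ⟨0, by norm_num⟩).symm
    have hv1 : (1 :: List.ofFn w).get n1 = b := (hf ⟨1, by norm_num⟩).symm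
    have hv2 : (1 :: List.ofFn w).get n2 = a := (hf ⟨2, by norm_num⟩).symm
    have hv3 : (1 :: List.ofFn w).get n3 = b := (hf ⟨3, by norm_num⟩).symm
    have hbnd : ∀ m : Fin (1 :: List.ofFn w).length, (m : ℕ) < k + 1 := by
      intro m; have := m.2; simpa using this
    rcases Nat.eq_zero_or_pos (n0 : ℕ) with hz | hpos
    · -- a = 1, use P3
      have ha1 : a = 1 := by
        rw [← hv0]
        have : n0 = ⟨0, by simp⟩ := Fin.ext (by simp only [Fin.val_mk]; omega)
        rw [this]; rfl
      have hp1 : 0 < (n1 : ℕ) := by have : (n0 : ℕ) < n1 := h01; omega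
      have hp2 : 0 < (n2 : ℕ) := by have : (n1 : ℕ) < n2 := h12; omega
      have hp3 : 0 < (n3 : ℕ) := by have : (n2 : ℕ) < n3 := h23; omega
      set j1 : Fin k := ⟨(n1 : ℕ) - 1, by have := hbnd n1; omega⟩
      set j2 : Fin k := ⟨(n2 : ℕ) - 1, by have := hbnd n2; omega⟩
      set j3 : Fin k := ⟨(n3 : ℕ) - 1, by have := hbnd n3; omega⟩
      have e1 : w j1 = b := by rw [← hv1, get_eq_w n1 hp1]
      have e2 : w j2 = a := by rw [← hv2, get_eq_w n2 hp2]
      have e3 : w j3 = b := by rw [← hv3, get_eq_w n3 hp3]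
      have hj12 : j1 < j2 := by
        show ((n1 : ℕ) - 1) < ((n2 : ℕ) - 1)
        have : (n1 : ℕ) < n2 := h12; omega
      have hj23 : j2 < j3 := by
        show ((n2 : ℕ) - 1) < ((n3 : ℕ) - 1)
        have : (n2 : ℕ) < n3 := h23; omega
      have := h3 j1 j2 j3 hj12 hj23 (by rw [e1, e3]) (by rw [e2, ha1])
      rw [e1] at this
      rw [ha1, this]
    · -- all in w, use P2
      have hp1 : 0 < (n1 : ℕ) := by have : (n0 : ℕ) < n1 := h01; omega
      have hp2 : 0 < (n2 : ℕ) := by have : (n1 : ℕ) < n2 := h12; omega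
      have hp3 : 0 < (n3 : ℕ) := by have : (n2 : ℕ) < n3 := h23; omega
      set j0 : Fin k := ⟨(n0 : ℕ) - 1, by have := hbnd n0; omega⟩
      set j1 : Fin k := ⟨(n1 : ℕ) - 1, by have := hbnd n1; omega⟩
      set j2 : Fin k := ⟨(n2 : ℕ) - 1, by have := hbnd n2; omega⟩
      set j3 : Fin k := ⟨(n3 : ℕ) - 1, by have := hbnd n3; omega⟩
      have e0 : w j0 = a := by rw [← hv0, get_eq_w n0 hpos]
      have e1 : w j1 = b := by rw [← hv1, get_eq_w n1 hp1]
      have e2 : w j2 = a := by rw [← hv2, get_eq_w n2 hp2]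
      have e3 : w j3 = b := by rw [← hv3, get_eq_w n3 hp3]
      have hj01 : j0 < j1 := by
        show ((n0 : ℕ) - 1) < ((n1 : ℕ) - 1)
        have : (n0 : ℕ) < n1 := h01; omega
      have hj12 : j1 < j2 := by
        show ((n1 : ℕ) - 1) < ((n2 : ℕ) - 1)
        have : (n1 : ℕ) < n2 := h12; omega
      have hj23 : j2 < j3 := by
        show ((n2 : ℕ) - 1) < ((n3 : ℕ) - 1)
        have : (n2 : ℕ) < n3 := h23; omega
      have := h2 j0 j1 j2 j3 hj01 hj12 hj23 (by rw [e0, e2]) (by rw [e1, e3])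
      rw [e0, e1] at this; exact this

theorem word_of_good {k : ℕ} (w : Fin k → ℕ) (hg : Good (1 :: List.ofFn w)) :
    (∀ i, 1 ≤ w i ∧ w i ≤ k + 1) ∧ WordP1 w ∧ WordP2 w ∧ WordP3 w := by
  have hlen : (1 :: List.ofFn w).length = k + 1 := by simp
  have hmem : ∀ i : Fin k, w i ∈ (1 :: List.ofFn w) :=
    fun i => List.mem_cons_of_mem _ (List.mem_ofFn.mpr ⟨i, rfl⟩)
  have hidx : ∀ i : Fin k, ((i : ℕ) + 1) < (1 :: List.ofFn w).length := by
    intro i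
    have := i.2
    simp only [List.length_cons, List.length_ofFn]
    omega
  have hgetw : ∀ i : Fin k, (1 :: List.ofFn w).get ⟨(i : ℕ) + 1, hidx i⟩ = w i := by
    intro i
    rw [get_eq_w _ (by simp)]
    exact congrArg w (Fin.ext (by simp))
  refine ⟨?_, ?_, ?_, ?_⟩
  · intro i
    refine ⟨hg.one_le (hmem i), ?_⟩
    have := hg.le_length (hmem i)
    omega
  · -- WordP1
    intro i t ht2 hti
    have hik : (i : ℕ) < k := i.2
    have hp : (1 :: List.ofFn w).take ((i : ℕ) + 2) <+: (1 :: List.ofFn w) :=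
      List.take_prefix _ _
    have hslb : (i : ℕ) + 1 < ((1 :: List.ofFn w).take ((i : ℕ) + 2)).length := by
      simp only [List.length_take, hlen]; omega
    have hsl : w i ∈ (1 :: List.ofFn w).take ((i : ℕ) + 2) := by
      refine List.mem_iff_getElem.mpr ⟨(i : ℕ) + 1, hslb, ?_⟩
      rw [hp.getElem hslb]
      simp
    have hmemt := hg.2.1 _ hp (w i) hsl t (by omega) hti
    obtain ⟨idx, hidxlt, hidxv⟩ := List.mem_iff_getElem.mp hmemt
    have hidxlt2 : idx < (i : ℕ) + 2 := by
      simp only [List.length_take] at hidxlt; omega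
    have hidxln : idx < (1 :: List.ofFn w).length := by
      simp only [List.length_take] at hidxlt; omega
    have hlv : (1 :: List.ofFn w)[idx]'hidxln = t := by
      rw [← hp.getElem hidxlt]; exact hidxv
    cases idx with
    | zero => simp at hlv; omega
    | succ jj =>
      have hjk : jj < k := by omega
      have hwj : w ⟨jj, hjk⟩ = t := by
        rw [← hlv]
        exact (getE_eq_w _ hjk).symm
      have hjji : jj ≠ (i : ℕ) := by
        intro hh
        have heqi : (⟨jj, hjk⟩ : Fin k) = i := Fin.ext hh
        rw [heqi] at hwj
        omega
      exact ⟨⟨jj, hjk⟩, by show jj < (i : ℕ); omega, hwj⟩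
  · -- WordP2
    intro i1 i2 i3 i4 h12 h23 h34 e13 e24
    have hsub := quad_sublist (1 :: List.ofFn w)
      ⟨(i1 : ℕ) + 1, hidx i1⟩ ⟨(i2 : ℕ) + 1, hidx i2⟩ ⟨(i3 : ℕ) + 1, hidx i3⟩
      ⟨(i4 : ℕ) + 1, hidx i4⟩
      (by show (i1 : ℕ) + 1 < (i2 : ℕ) + 1; have : (i1 : ℕ) < i2 := h12; omega)
      (by show (i2 : ℕ) + 1 < (i3 : ℕ) + 1; have : (i2 : ℕ) < i3 := h23; omega)
      (by show (i3 : ℕ) + 1 < (i4 : ℕ) + 1; have : (i3 : ℕ) < i4 := h34; omega)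
    rw [hgetw i1, hgetw i2, hgetw i3, hgetw i4, ← e13, ← e24] at hsub
    exact hg.2.2 _ _ hsub
  · -- WordP3
    intro i1 i2 i3 h12 h23 e13 e2
    have hsub := quad_sublist (1 :: List.ofFn w)
      ⟨0, by simp⟩ ⟨(i1 : ℕ) + 1, hidx i1⟩ ⟨(i2 : ℕ) + 1, hidx i2⟩ ⟨(i3 : ℕ) + 1, hidx i3⟩
      (by show (0 : ℕ) < (i1 : ℕ) + 1; omega)
      (by show (i1 : ℕ) + 1 < (i2 : ℕ) + 1; have : (i1 : ℕ) < i2 := h12; omega)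
      (by show (i2 : ℕ) + 1 < (i3 : ℕ) + 1; have : (i2 : ℕ) < i3 := h23; omega)
    rw [hgetw i1, hgetw i2, hgetw i3, ← e13, e2] at hsub
    have hsub' : [1, w i1, 1, w i1] <+ (1 :: List.ofFn w) := by
      simpa using hsub
    exact (hg.2.2 _ _ hsub').symm

theorem cons_ofFn_tail {k : ℕ} (g : GoodL (k + 1))
    (hlt : ∀ i : Fin k, (i : ℕ) < g.val.tail.length) :
    (1 :: List.ofFn fun i : Fin k => g.val.tail[(i : ℕ)]'(hlt i)) = g.val := by
  have hne : g.val ≠ [] := by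
    intro h0; have := g.2.2; rw [h0] at this; simp at this
  apply List.ext_getElem (by simp [g.2.2])
  intro i hi1 hi2
  cases i with
  | zero =>
    simp only [List.getElem_cons_zero]
    rw [List.getElem_zero hi2, g.2.1.head_eq_one]
  | succ i =>
    simp only [List.getElem_cons_succ]
    rw [List.getElem_ofFn]
    simp [List.getElem_tail]

theorem tail_lt {k : ℕ} (g : GoodL (k + 1)) : ∀ i : Fin k, (i : ℕ) < g.val.tail.length := by
  intro i
  rw [List.length_tail, g.2.2]
  have := i.2; omega

def wordEquiv (k : ℕ) :
    {w : Fin k → ℕ //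
        (∀ i, 1 ≤ w i ∧ w i ≤ k + 1) ∧ WordP1 w ∧ WordP2 w ∧ WordP3 w} ≃ GoodL (k + 1) where
  toFun x := ⟨1 :: List.ofFn x.val,
    good_of_word x.val x.2.1 x.2.2.1 x.2.2.2.1 x.2.2.2.2, by simp⟩
  invFun g :=
    ⟨fun i : Fin k => g.val.tail[(i : ℕ)]'(tail_lt g i),
      word_of_good _ (by rw [cons_ofFn_tail g (tail_lt g)]; exact g.2.1)⟩
  left_inv x := by
    apply Subtype.ext
    funext i
    simp
  right_inv g := by
    apply Subtype.ext
    exact cons_ofFn_tail g (tail_lt g)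

end P123Aux

/-- The number of words of length `k` over `{1,…,k+1}` satisfying P1, P2 and P3
equals the Catalan number `C_{k+1}`. -/
theorem card_words_P123 (k : ℕ) :
    Nat.card {w : Fin k → ℕ //
        (∀ i, 1 ≤ w i ∧ w i ≤ k + 1) ∧ WordP1 w ∧ WordP2 w ∧ WordP3 w}
      = catalan (k + 1) := by
  rw [Nat.card_congr (P123Aux.wordEquiv k), P123Aux.card_GoodL]
end
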